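/- arXiv:1606.08642 — 6 statements merged into one kernel-verified Lean document; each statement's English description precedes it below -/
import Mathlib

section
/- Let n ≥ 1 and let U be an n×n unitary complex matrix all of whose row sums and column sums equal 1. Then there exist complex coefficients c_σ, indexed by the permutations σ of {0,…,n−1}, such that U = Σ_σ c_σ P_σ, Σ_σ c_σ = 1, and Σ_σ |c_σ|² = 1. -/
open Finset Equiv

/-- The permutation matrix of `σ`: `(P σ) j k = 1` if `j = σ k` and `0` otherwise. -/
def permMat (n : ℕ) (σ : Equiv.Perm (Fin n)) : Matrix (Fin n) (Fin n) ℂ :=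
  Matrix.of fun j k => if j = σ k then 1 else 0

lemma sum_perm_one {N : ℕ} (k : Fin (N+1)) (g : Fin (N+1) → ℂ) :
    ∑ σ : Perm (Fin (N+1)), g (σ k) = ((Nat.factorial N : ℕ) : ℂ) * ∑ a, g a := by
  have h1 : ∑ σ : Perm (Fin (N+1)), g (σ k) = ∑ σ : Perm (Fin (N+1)), g (σ 0) := by
    rw [← Equiv.sum_comp (Equiv.mulRight (Equiv.swap 0 k)) (fun σ => g (σ 0))]
    simp [Equiv.Perm.mul_apply]
  rw [h1, ← Equiv.sum_comp (Equiv.Perm.decomposeFin.symm) (fun σ => g (σ 0))]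
  rw [Fintype.sum_prod_type]
  simp only [Equiv.Perm.decomposeFin_symm_apply_zero]
  rw [Finset.mul_sum]
  exact Finset.sum_congr rfl fun a _ => by
    simp [Finset.sum_const, Fintype.card_perm, mul_comm]

lemma sum_perm_two {N : ℕ} (k m : Fin (N+1)) (hkm : k ≠ m)
    (g : Fin (N+1) → Fin (N+1) → ℂ) :
    ∑ σ : Perm (Fin (N+1)), g (σ k) (σ m)
      = ((Nat.factorial (N-1) : ℕ) : ℂ) * ∑ a, ∑ b ∈ Finset.univ.erase a, g a b := by
  cases N with
  | zero => exact absurd (Fin.ext (by omega)) hkm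
  | succ N =>
    -- move (k, m) to (0, 1)
    set m' : Fin (N+2) := Equiv.swap 0 k m with hm'
    have hm'0 : m' ≠ 0 := by
      intro h
      apply hkm
      have := congrArg (Equiv.swap (0 : Fin (N+2)) k) h
      rw [hm', Equiv.swap_apply_self, Equiv.swap_apply_left] at this
      exact this.symm
    set π : Perm (Fin (N+2)) := Equiv.swap 0 k * Equiv.swap 1 m' with hπ
    have hπ0 : π 0 = k := by
      simp only [hπ, Equiv.Perm.mul_apply]
      rw [Equiv.swap_apply_of_ne_of_ne (by norm_num) (Ne.symm hm'0), Equiv.swap_apply_left]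
    have hπ1 : π 1 = m := by
      simp only [hπ, Equiv.Perm.mul_apply, Equiv.swap_apply_left, hm', Equiv.swap_apply_self]
    have h1 : ∑ σ : Perm (Fin (N+2)), g (σ k) (σ m)
        = ∑ σ : Perm (Fin (N+2)), g (σ 0) (σ 1) := by
      rw [← Equiv.sum_comp (Equiv.mulRight π) (fun σ => g (σ 0) (σ 1))]
      simp [Equiv.Perm.mul_apply, hπ0, hπ1]
    rw [h1, ← Equiv.sum_comp (Equiv.Perm.decomposeFin.symm) (fun σ => g (σ 0) (σ 1)),
      Fintype.sum_prod_type]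
    have h2 : ∀ (p : Fin (N+2)) (τ : Perm (Fin (N+1))),
        g ((Equiv.Perm.decomposeFin.symm (p, τ)) 0) ((Equiv.Perm.decomposeFin.symm (p, τ)) 1)
        = g p (Equiv.swap 0 p (τ 0).succ) := by
      intro p τ
      rw [Equiv.Perm.decomposeFin_symm_apply_zero, show (1 : Fin (N+2)) = Fin.succ 0 from rfl,
        Equiv.Perm.decomposeFin_symm_apply_succ]
    simp only [h2]
    have h3 : ∀ p : Fin (N+2), ∑ τ : Perm (Fin (N+1)), g p (Equiv.swap 0 p (τ 0).succ)
        = ((Nat.factorial N : ℕ) : ℂ) * ∑ i : Fin (N+1), g p (Equiv.swap 0 p i.succ) :=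
      fun p => sum_perm_one (0 : Fin (N+1)) (fun a => g p (Equiv.swap 0 p a.succ))
    simp only [h3]
    rw [← Finset.mul_sum]
    congr 1
    refine Finset.sum_congr rfl fun p _ => ?_
    have himg : Finset.image (fun i : Fin (N+1) => Equiv.swap 0 p i.succ) Finset.univ
        = Finset.univ.erase p := by
      ext b
      simp only [Finset.mem_image, Finset.mem_erase, Finset.mem_univ, and_true]
      constructor
      · rintro ⟨i, -, rfl⟩
        intro hb
        apply Fin.succ_ne_zero i
        have := congrArg (Equiv.swap (0 : Fin (N+2)) p) hb
        rwa [Equiv.swap_apply_self, Equiv.swap_apply_right] at this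
      · intro hb
        have hx : Equiv.swap 0 p b ≠ 0 := by
          intro h
          apply hb
          have := congrArg (Equiv.swap (0 : Fin (N+2)) p) h
          rwa [Equiv.swap_apply_self, Equiv.swap_apply_left] at this
        obtain ⟨i, hi⟩ := Fin.exists_succ_eq.mpr hx
        exact ⟨i, trivial, by rw [hi, Equiv.swap_apply_self]⟩
    rw [← himg, Finset.sum_image]
    intro i _ j _ h
    exact Fin.succ_injective _ (Equiv.injective _ h)

lemma sum_sign_fiber {n : ℕ} (h3 : 3 ≤ n) (j k : Fin n) :
    ∑ σ : Perm (Fin n), ((Equiv.Perm.sign σ : ℤ) : ℂ) * (if j = σ k then 1 else 0) = 0 := by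
  have hj : j ∈ Finset.univ := Finset.mem_univ j
  have hcard : 1 < (Finset.univ.erase j).card := by
    rw [Finset.card_erase_of_mem hj, Finset.card_univ, Fintype.card_fin]
    omega
  obtain ⟨x, hx, y, hy, hxy⟩ := Finset.one_lt_card.mp hcard
  have hxj : x ≠ j := (Finset.mem_erase.mp hx).1
  have hyj : y ≠ j := (Finset.mem_erase.mp hy).1
  set f : Perm (Fin n) → ℂ :=
    fun σ => ((Equiv.Perm.sign σ : ℤ) : ℂ) * (if j = σ k then 1 else 0) with hf
  have key : ∀ σ, f (Equiv.swap x y * σ) = - f σ := by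
    intro σ
    have hsign : Equiv.Perm.sign (Equiv.swap x y * σ) = - Equiv.Perm.sign σ := by
      rw [Equiv.Perm.sign_mul, Equiv.Perm.sign_swap hxy, neg_one_mul]
    have hcond : (j = (Equiv.swap x y * σ) k) ↔ (j = σ k) := by
      rw [Equiv.Perm.mul_apply]
      constructor
      · intro h
        have := congrArg (Equiv.swap x y) h
        rwa [Equiv.swap_apply_self, Equiv.swap_apply_of_ne_of_ne (Ne.symm hxj) (Ne.symm hyj)]
          at this
      · intro h
        rw [← h, Equiv.swap_apply_of_ne_of_ne (Ne.symm hxj) (Ne.symm hyj)]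
    simp only [hf, hsign]
    rw [if_congr hcond rfl rfl]
    push_cast
    ring
  have hS : ∑ σ : Perm (Fin n), f σ = - ∑ σ : Perm (Fin n), f σ := by
    conv_lhs => rw [← Equiv.sum_comp (Equiv.mulLeft (Equiv.swap x y)) f]
    simp only [Equiv.coe_mulLeft, key, Finset.sum_neg_distrib]
  exact add_self_eq_zero.mp
    (by nth_rewrite 1 [hS]; exact neg_add_cancel _ :
      (∑ σ : Perm (Fin n), f σ) + ∑ σ : Perm (Fin n), f σ = 0)

section main
variable {M : ℕ} (U : Matrix (Fin (M+2)) (Fin (M+2)) ℂ)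

-- sum of entries over an erased row index
lemma col_erase (hcol : ∀ k, ∑ j, U j k = 1) (j k : Fin (M+2)) :
    ∑ b ∈ Finset.univ.erase j, U b k = 1 - U j k := by
  rw [Finset.sum_erase_eq_sub (Finset.mem_univ j), hcol]

lemma row_erase (hrow : ∀ j, ∑ k, U j k = 1) (j k : Fin (M+2)) :
    ∑ m ∈ Finset.univ.erase k, U j m = 1 - U j k := by
  rw [Finset.sum_erase_eq_sub (Finset.mem_univ k), hrow]

lemma sum_ite_perm (j k : Fin (M+2)) :
    ∑ σ : Perm (Fin (M+2)), (if j = σ k then (1:ℂ) else 0)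
      = ((Nat.factorial (M+1) : ℕ) : ℂ) := by
  rw [sum_perm_one k (fun a => if j = a then (1:ℂ) else 0)]
  simp

lemma sum_t (hcol : ∀ k, ∑ j, U j k = 1) :
    ∑ σ : Perm (Fin (M+2)), (∑ x, U (σ x) x)
      = ((M:ℂ)+2) * ((Nat.factorial (M+1) : ℕ) : ℂ) := by
  rw [Finset.sum_comm]
  have : ∀ x : Fin (M+2), ∑ σ : Perm (Fin (M+2)), U (σ x) x
      = ((Nat.factorial (M+1) : ℕ) : ℂ) := by
    intro x
    rw [sum_perm_one x (fun a => U a x), hcol x, mul_one]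
  simp only [this, Finset.sum_const, Finset.card_univ, Fintype.card_fin, nsmul_eq_mul]
  push_cast
  ring

lemma sum_ite_t (hrow : ∀ j, ∑ k, U j k = 1) (hcol : ∀ k, ∑ j, U j k = 1) (j k : Fin (M+2)) :
    ∑ σ : Perm (Fin (M+2)), (if j = σ k then (∑ x, U (σ x) x) else 0)
      = ((Nat.factorial (M+1) : ℕ) : ℂ) * U j k
        + ((Nat.factorial M : ℕ) : ℂ) * ((M:ℂ) + U j k) := by
  have step1 : ∀ σ : Perm (Fin (M+2)), (if j = σ k then (∑ x, U (σ x) x) else 0)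
      = ∑ m, (if j = σ k then U (σ m) m else 0) := by
    intro σ; split_ifs <;> simp
  simp only [step1]
  rw [Finset.sum_comm]
  rw [← Finset.add_sum_erase _ _ (Finset.mem_univ k)]
  have hk : ∑ σ : Perm (Fin (M+2)), (if j = σ k then U (σ k) k else 0)
      = ((Nat.factorial (M+1) : ℕ) : ℂ) * U j k := by
    have : ∀ σ : Perm (Fin (M+2)), (if j = σ k then U (σ k) k else 0)
        = (if j = σ k then U j k else 0) := by
      intro σ; split_ifs with h
      · rw [← h]
      · rfl
    simp only [this]
    rw [sum_perm_one k (fun a => if j = a then U j k else 0)]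
    simp
  have hm : ∀ m ∈ Finset.univ.erase k,
      ∑ σ : Perm (Fin (M+2)), (if j = σ k then U (σ m) m else 0)
      = ((Nat.factorial M : ℕ) : ℂ) * (1 - U j m) := by
    intro m hmem
    have hkm : k ≠ m := (Finset.mem_erase.mp hmem).1.symm
    rw [sum_perm_two k m hkm (fun a b => if j = a then U b m else 0)]
    have inner : ∀ a : Fin (M+2),
        ∑ b ∈ Finset.univ.erase a, (if j = a then U b m else 0)
        = if j = a then ∑ b ∈ Finset.univ.erase a, U b m else 0 := by
      intro a; split_ifs <;> simp
    simp only [inner, Finset.sum_ite_eq, Finset.mem_univ, if_true]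
    rw [col_erase U hcol j m]
    norm_num
  rw [hk, Finset.sum_congr rfl hm, ← Finset.mul_sum]
  have : ∑ m ∈ Finset.univ.erase k, (1 - U j m) = ((M:ℂ) + U j k) := by
    rw [Finset.sum_sub_distrib, Finset.sum_const, row_erase U hrow j k,
      Finset.card_erase_of_mem (Finset.mem_univ k), Finset.card_univ, Fintype.card_fin]
    push_cast
    ring
  rw [this]

end main

section main
variable {M : ℕ} (U : Matrix (Fin (M+2)) (Fin (M+2)) ℂ)

lemma conj_col (hcol : ∀ k, ∑ j, U j k = 1) (k : Fin (M+2)) :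
    ∑ b, (starRingEnd ℂ) (U b k) = 1 := by
  rw [← map_sum, hcol]
  simp

lemma conj_col_erase (hcol : ∀ k, ∑ j, U j k = 1) (j k : Fin (M+2)) :
    ∑ b ∈ Finset.univ.erase j, (starRingEnd ℂ) (U b k) = 1 - (starRingEnd ℂ) (U j k) := by
  rw [Finset.sum_erase_eq_sub (Finset.mem_univ j), conj_col U hcol]

lemma sum_tt (hU : U ∈ Matrix.unitaryGroup (Fin (M+2)) ℂ)
    (hrow : ∀ j, ∑ k, U j k = 1) (hcol : ∀ k, ∑ j, U j k = 1) :
    ∑ σ : Perm (Fin (M+2)), (∑ x, U (σ x) x) * (starRingEnd ℂ) (∑ y, U (σ y) y)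
      = 2 * ((Nat.factorial (M+2) : ℕ) : ℂ) := by
  have hUU : ∀ x y : Fin (M+2), (∑ a, (starRingEnd ℂ) (U a x) * U a y)
      = if x = y then 1 else 0 := by
    intro x y
    have h1 : star U * U = 1 := Matrix.mem_unitaryGroup_iff'.mp hU
    have h2 : (star U * U) x y = (1 : Matrix (Fin (M+2)) (Fin (M+2)) ℂ) x y := by rw [h1]
    rw [Matrix.mul_apply, Matrix.one_apply] at h2
    simpa [Matrix.star_apply, Complex.star_def] using h2
  have expand : ∀ σ : Perm (Fin (M+2)),
      (∑ x, U (σ x) x) * (starRingEnd ℂ) (∑ y, U (σ y) y)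
      = ∑ x, ∑ y, U (σ x) x * (starRingEnd ℂ) (U (σ y) y) := by
    intro σ
    rw [map_sum, Finset.sum_mul_sum]
  simp only [expand]
  rw [Finset.sum_comm]
  have inner : ∀ x : Fin (M+2),
      ∑ σ : Perm (Fin (M+2)), ∑ y, U (σ x) x * (starRingEnd ℂ) (U (σ y) y)
      = ((Nat.factorial (M+1) : ℕ) : ℂ) + ((M:ℂ)+1) * ((Nat.factorial M : ℕ) : ℂ) := by
    intro x
    rw [Finset.sum_comm, ← Finset.add_sum_erase _ _ (Finset.mem_univ x)]
    have hdiag : ∑ σ : Perm (Fin (M+2)), U (σ x) x * (starRingEnd ℂ) (U (σ x) x)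
        = ((Nat.factorial (M+1) : ℕ) : ℂ) := by
      rw [sum_perm_one x (fun a => U a x * (starRingEnd ℂ) (U a x))]
      have : ∑ a, U a x * (starRingEnd ℂ) (U a x) = 1 := by
        have h := hUU x x
        rw [if_pos rfl] at h
        rw [← h]
        exact Finset.sum_congr rfl fun a _ => by ring
      rw [this, mul_one]
    have hoff : ∀ y ∈ Finset.univ.erase x,
        ∑ σ : Perm (Fin (M+2)), U (σ x) x * (starRingEnd ℂ) (U (σ y) y)
        = ((Nat.factorial M : ℕ) : ℂ) := by
      intro y hy
      have hxy : x ≠ y := (Finset.mem_erase.mp hy).1.symm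
      rw [sum_perm_two x y hxy (fun a b => U a x * (starRingEnd ℂ) (U b y))]
      have inner2 : ∀ a : Fin (M+2),
          ∑ b ∈ Finset.univ.erase a, U a x * (starRingEnd ℂ) (U b y)
          = U a x * (1 - (starRingEnd ℂ) (U a y)) := by
        intro a
        rw [← Finset.mul_sum, conj_col_erase U hcol a y]
      simp only [inner2]
      have : ∑ a, U a x * (1 - (starRingEnd ℂ) (U a y)) = 1 := by
        have e1 : ∑ a, U a x * (1 - (starRingEnd ℂ) (U a y))
            = (∑ a, U a x) - ∑ a, (starRingEnd ℂ) (U a y) * U a x := by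
          rw [← Finset.sum_sub_distrib]
          exact Finset.sum_congr rfl fun a _ => by ring
        rw [e1, hcol x, hUU y x, if_neg (Ne.symm hxy)]
        ring
      rw [this]
      norm_num
    rw [hdiag, Finset.sum_congr rfl hoff, Finset.sum_const,
      Finset.card_erase_of_mem (Finset.mem_univ x), Finset.card_univ, Fintype.card_fin]
    push_cast
    ring
  simp only [inner, Finset.sum_const, Finset.card_univ, Fintype.card_fin, nsmul_eq_mul]
  have e1 : (Nat.factorial (M+2) : ℂ) = ((M:ℂ)+2) * (Nat.factorial (M+1) : ℂ) := by
    rw [Nat.factorial_succ]; push_cast; ring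
  have e2 : (Nat.factorial (M+1) : ℂ) = ((M:ℂ)+1) * (Nat.factorial M : ℂ) := by
    rw [Nat.factorial_succ]; push_cast; ring
  rw [e1, e2]
  push_cast
  ring

end main

noncomputable def c0 {M : ℕ} (U : Matrix (Fin (M+2)) (Fin (M+2)) ℂ)
    (σ : Perm (Fin (M+2))) : ℂ :=
  (((M:ℂ)+1) * (∑ x, U (σ x) x) - (M:ℂ)) / ((Nat.factorial (M+2) : ℕ) : ℂ)

section main
variable {M : ℕ} (U : Matrix (Fin (M+2)) (Fin (M+2)) ℂ)

lemma fac2_ne : ((Nat.factorial (M+2) : ℕ) : ℂ) ≠ 0 :=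
  Nat.cast_ne_zero.mpr (Nat.factorial_ne_zero _)

lemma fac_e1 : ((Nat.factorial (M+2) : ℕ) : ℂ) = ((M:ℂ)+2) * ((Nat.factorial (M+1) : ℕ) : ℂ) := by
  rw [Nat.factorial_succ]; push_cast; ring

lemma fac_e2 : ((Nat.factorial (M+1) : ℕ) : ℂ) = ((M:ℂ)+1) * ((Nat.factorial M : ℕ) : ℂ) := by
  rw [Nat.factorial_succ]; push_cast; ring

lemma perm_card : ∑ _σ : Perm (Fin (M+2)), (1:ℂ) = ((Nat.factorial (M+2) : ℕ) : ℂ) := by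
  simp [Finset.card_univ, Fintype.card_perm]

lemma c0_fiber (hrow : ∀ j, ∑ k, U j k = 1) (hcol : ∀ k, ∑ j, U j k = 1) (j k : Fin (M+2)) :
    ∑ σ : Perm (Fin (M+2)), (if j = σ k then c0 U σ else 0) = U j k := by
  have expand : ∀ σ : Perm (Fin (M+2)), (if j = σ k then c0 U σ else 0)
      = (((M:ℂ)+1) * (if j = σ k then (∑ x, U (σ x) x) else 0)
          - (M:ℂ) * (if j = σ k then (1:ℂ) else 0)) / ((Nat.factorial (M+2) : ℕ) : ℂ) := by
    intro σ; unfold c0; split_ifs <;> simp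
  simp only [expand]
  rw [← Finset.sum_div, Finset.sum_sub_distrib, ← Finset.mul_sum, ← Finset.mul_sum,
    sum_ite_t U hrow hcol j k, sum_ite_perm j k, div_eq_iff (fac2_ne (M := M))]
  rw [fac_e1, fac_e2]
  ring

lemma c0_sum (hcol : ∀ k, ∑ j, U j k = 1) :
    ∑ σ : Perm (Fin (M+2)), c0 U σ = 1 := by
  unfold c0
  rw [← Finset.sum_div, Finset.sum_sub_distrib, ← Finset.mul_sum, sum_t U hcol,
    Finset.sum_const, Finset.card_univ, Fintype.card_perm, Fintype.card_fin,
    nsmul_eq_mul, div_eq_iff (fac2_ne (M := M)), fac_e1]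
  ring

lemma conj_c0 (σ : Perm (Fin (M+2))) :
    (starRingEnd ℂ) (c0 U σ)
      = (((M:ℂ)+1) * (starRingEnd ℂ) (∑ x, U (σ x) x) - (M:ℂ))
          / ((Nat.factorial (M+2) : ℕ) : ℂ) := by
  unfold c0
  rw [map_div₀, map_sub, map_mul]
  push_cast
  simp

lemma sum_conj_t (hcol : ∀ k, ∑ j, U j k = 1) :
    ∑ σ : Perm (Fin (M+2)), (starRingEnd ℂ) (∑ x, U (σ x) x)
      = ((M:ℂ)+2) * ((Nat.factorial (M+1) : ℕ) : ℂ) := by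
  rw [← map_sum, sum_t U hcol]
  have h : ((M:ℂ)+2) * ((Nat.factorial (M+1) : ℕ) : ℂ)
      = ((((M+2) * Nat.factorial (M+1) : ℕ)) : ℂ) := by push_cast; ring
  rw [h, Complex.conj_natCast]

lemma c0_qsum (hU : U ∈ Matrix.unitaryGroup (Fin (M+2)) ℂ)
    (hrow : ∀ j, ∑ k, U j k = 1) (hcol : ∀ k, ∑ j, U j k = 1) :
    ∑ σ : Perm (Fin (M+2)), c0 U σ * (starRingEnd ℂ) (c0 U σ)
      = (((M:ℂ)+1)^2 + 1) / ((Nat.factorial (M+2) : ℕ) : ℂ) := by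
  have expand : ∀ σ : Perm (Fin (M+2)), c0 U σ * (starRingEnd ℂ) (c0 U σ)
      = (((M:ℂ)+1)^2 * ((∑ x, U (σ x) x) * (starRingEnd ℂ) (∑ x, U (σ x) x))
          - ((M:ℂ)*((M:ℂ)+1)) * (∑ x, U (σ x) x)
          - ((M:ℂ)*((M:ℂ)+1)) * (starRingEnd ℂ) (∑ x, U (σ x) x)
          + (M:ℂ)^2)
        / (((Nat.factorial (M+2) : ℕ) : ℂ) * ((Nat.factorial (M+2) : ℕ) : ℂ)) := by
    intro σ
    rw [conj_c0]
    unfold c0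
    rw [div_mul_div_comm]
    congr 1
    ring
  simp only [expand]
  rw [← Finset.sum_div, Finset.sum_add_distrib, Finset.sum_sub_distrib,
    Finset.sum_sub_distrib, ← Finset.mul_sum, ← Finset.mul_sum, ← Finset.mul_sum,
    sum_tt U hU hrow hcol, sum_t U hcol, sum_conj_t U hcol, Finset.sum_const,
    Finset.card_univ, Fintype.card_perm, Fintype.card_fin, nsmul_eq_mul]
  simp only [← fac_e1]
  rw [div_eq_div_iff (mul_ne_zero (fac2_ne (M := M)) (fac2_ne (M := M))) (fac2_ne (M := M))]
  ring

end main

lemma sum_sign {n : ℕ} (h3 : 3 ≤ n) :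
    ∑ σ : Perm (Fin n), ((Equiv.Perm.sign σ : ℤ) : ℂ) = 0 := by
  have hn0 : 0 < n := by omega
  have key : ∀ σ : Perm (Fin n), ((Equiv.Perm.sign σ : ℤ) : ℂ)
      = ∑ j, ((Equiv.Perm.sign σ : ℤ) : ℂ) * (if j = σ ⟨0, hn0⟩ then 1 else 0) := by
    intro σ
    rw [← Finset.mul_sum]
    simp
  calc ∑ σ : Perm (Fin n), ((Equiv.Perm.sign σ : ℤ) : ℂ)
      = ∑ σ : Perm (Fin n), ∑ j,
          ((Equiv.Perm.sign σ : ℤ) : ℂ) * (if j = σ ⟨0, hn0⟩ then 1 else 0) :=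
        Finset.sum_congr rfl fun σ _ => key σ
    _ = ∑ j, ∑ σ : Perm (Fin n),
          ((Equiv.Perm.sign σ : ℤ) : ℂ) * (if j = σ ⟨0, hn0⟩ then 1 else 0) := Finset.sum_comm
    _ = 0 := by
        rw [Finset.sum_congr rfl fun j _ => sum_sign_fiber h3 j ⟨0, hn0⟩]
        simp

lemma exists_s (M : ℕ) (R : ℝ) :
    ∃ s : ℝ, (s = 0 ∨ 1 ≤ M) ∧
      (((M:ℝ)+1)^2 + 1)/((Nat.factorial (M+2) : ℕ) : ℝ) + s * R
        + s^2 * ((Nat.factorial (M+2) : ℕ) : ℝ) = 1 := by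
  rcases Nat.eq_zero_or_pos M with hM | hM
  · subst hM
    exact ⟨0, Or.inl rfl, by norm_num [Nat.factorial]⟩
  · set F : ℝ := ((Nat.factorial (M+2) : ℕ) : ℝ) with hF
    have hFpos : 0 < F := by
      rw [hF]; exact_mod_cast Nat.factorial_pos (M+2)
    have hq1 : ((M:ℝ)+1)^2 + 1 ≤ F := by
      have hf : Nat.factorial (M+2) = (M+2)*((M+1)*Nat.factorial M) := by
        rw [Nat.factorial_succ, Nat.factorial_succ]
      have h1f : 1 ≤ Nat.factorial M := Nat.one_le_iff_ne_zero.mpr (Nat.factorial_ne_zero M)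
      have h1 : (M+1)^2 + 1 ≤ Nat.factorial (M+2) := by
        rw [hf]; nlinarith [hM, h1f]
      rw [hF]
      push_cast
      exact_mod_cast h1
    set q : ℝ := (((M:ℝ)+1)^2 + 1)/F with hq
    have hqle : q ≤ 1 := by
      rw [hq]
      exact (div_le_one hFpos).mpr hq1
    set D : ℝ := R^2 + 4*F*(1-q) with hD
    have hDpos : 0 ≤ D := by
      have h2 : 0 ≤ 4*F*(1-q) := by nlinarith
      nlinarith [sq_nonneg R]
    refine ⟨(-R + Real.sqrt D)/(2*F), Or.inr hM, ?_⟩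
    have hsq : Real.sqrt D ^ 2 = D := Real.sq_sqrt hDpos
    have hFne : F ≠ 0 := ne_of_gt hFpos
    have hqF : q * F = ((M:ℝ)+1)^2 + 1 := by
      rw [hq]; field_simp
    field_simp
    nlinarith [hsq, hqF, sq_nonneg (Real.sqrt D)]

/-- The unitary Birkhoff theorem: every `n × n` unitary matrix whose row sums and
column sums all equal `1` is a weighted sum of permutation matrices, with complex
weights summing to `1` and with the sum of the moduli squared equal to `1`. -/
theorem unitary_birkhoff (n : ℕ) (hn : 1 ≤ n) (U : Matrix (Fin n) (Fin n) ℂ)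
    (hU : U ∈ Matrix.unitaryGroup (Fin n) ℂ)
    (hrow : ∀ j, ∑ k, U j k = 1) (hcol : ∀ k, ∑ j, U j k = 1) :
    ∃ c : Equiv.Perm (Fin n) → ℂ,
      U = ∑ σ : Equiv.Perm (Fin n), c σ • permMat n σ ∧
      ∑ σ : Equiv.Perm (Fin n), c σ = 1 ∧
      ∑ σ : Equiv.Perm (Fin n), ‖c σ‖ ^ 2 = 1 := by
  obtain _ | n := n
  · omega
  obtain _ | M := n
  · -- n = 1
    refine ⟨fun _ => 1, ?_, ?_, ?_⟩
    · have h00 : ∀ j k : Fin 1, U j k = 1 := by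
        intro j k
        have hj : ∀ a : Fin 1, a = 0 := fun a => Fin.ext (by omega)
        rw [hj j, hj k]
        simpa using hrow 0
      ext j k
      have hterm : ∀ σ : Perm (Fin 1), ((1:ℂ) • permMat 1 σ) j k = 1 := by
        intro σ
        have : j = σ k := Fin.ext (by omega)
        simp [permMat, this]
      rw [Matrix.sum_apply, Finset.sum_congr rfl fun σ _ => hterm σ, Finset.sum_const,
        Finset.card_univ, Fintype.card_perm, Fintype.card_fin]
      simp [h00 j k]
    · simp [Finset.card_univ, Fintype.card_perm]
    · simp [Finset.card_univ, Fintype.card_perm]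
  · -- n = M + 2
    set g : Perm (Fin (M+2)) → ℂ := fun σ => ((Equiv.Perm.sign σ : ℤ) : ℂ) with hg
    set R : ℝ := ∑ σ : Perm (Fin (M+2)), ((Equiv.Perm.sign σ : ℤ) : ℝ) * (2 * (c0 U σ).re)
      with hR
    obtain ⟨s, hs0, hs⟩ := exists_s M R
    have hkill1 : ∀ j k : Fin (M+2),
        (s:ℂ) * ∑ σ : Perm (Fin (M+2)), g σ * (if j = σ k then 1 else 0) = 0 := by
      intro j k
      rcases hs0 with h | h
      · rw [h]; simp
      · rw [hg]; rw [sum_sign_fiber (by omega) j k, mul_zero]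
    have hkill0 : (s:ℂ) * ∑ σ : Perm (Fin (M+2)), g σ = 0 := by
      rcases hs0 with h | h
      · rw [h]; simp
      · rw [hg]; rw [sum_sign (by omega), mul_zero]
    refine ⟨fun σ => c0 U σ + (s:ℂ) * g σ, ?_, ?_, ?_⟩
    · ext j k
      have hterm : ∀ σ : Perm (Fin (M+2)),
          ((c0 U σ + (s:ℂ) * g σ) • permMat (M+2) σ) j k
          = (if j = σ k then c0 U σ else 0)
            + (s:ℂ) * (g σ * (if j = σ k then 1 else 0)) := by
        intro σ
        rw [Matrix.smul_apply, smul_eq_mul]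
        show (c0 U σ + (s:ℂ) * g σ) * (if j = σ k then 1 else 0) = _
        split_ifs <;> ring
      rw [Matrix.sum_apply, Finset.sum_congr rfl fun σ _ => hterm σ, Finset.sum_add_distrib,
        ← Finset.mul_sum, c0_fiber U hrow hcol j k, hkill1 j k, add_zero]
    · rw [Finset.sum_add_distrib, c0_sum U hcol, ← Finset.mul_sum, hkill0, add_zero]
    · have hgg : ∀ σ : Perm (Fin (M+2)), g σ * g σ = 1 := by
        intro σ
        have h1 : (Equiv.Perm.sign σ : ℤ) * (Equiv.Perm.sign σ : ℤ) = 1 := by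
          rw [← Units.val_mul, Int.units_mul_self, Units.val_one]
        show ((Equiv.Perm.sign σ : ℤ) : ℂ) * ((Equiv.Perm.sign σ : ℤ) : ℂ) = 1
        exact_mod_cast h1
      have hconj : ∀ σ : Perm (Fin (M+2)), (starRingEnd ℂ) (c0 U σ + (s:ℂ) * g σ)
          = (starRingEnd ℂ) (c0 U σ) + (s:ℂ) * g σ := by
        intro σ
        rw [map_add, map_mul, Complex.conj_ofReal, hg]
        norm_num
      have hexp : ∀ σ : Perm (Fin (M+2)),
          (c0 U σ + (s:ℂ) * g σ) * (starRingEnd ℂ) (c0 U σ + (s:ℂ) * g σ)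
          = c0 U σ * (starRingEnd ℂ) (c0 U σ)
            + (s:ℂ) * (g σ * (c0 U σ + (starRingEnd ℂ) (c0 U σ))) + (s:ℂ)^2 := by
        intro σ
        rw [hconj σ]
        linear_combination ((s:ℂ))^2 * hgg σ
      have hmid : ∑ σ : Perm (Fin (M+2)), g σ * (c0 U σ + (starRingEnd ℂ) (c0 U σ))
          = ((R:ℝ):ℂ) := by
        rw [hR]
        push_cast
        refine Finset.sum_congr rfl fun σ _ => ?_
        rw [Complex.add_conj, hg]
        push_cast
        ring
      have hC : ∑ σ : Perm (Fin (M+2)),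
          (c0 U σ + (s:ℂ) * g σ) * (starRingEnd ℂ) (c0 U σ + (s:ℂ) * g σ) = 1 := by
        rw [Finset.sum_congr rfl fun σ _ => hexp σ, Finset.sum_add_distrib,
          Finset.sum_add_distrib, ← Finset.mul_sum, hmid, c0_qsum U hU hrow hcol,
          Finset.sum_const, Finset.card_univ, Fintype.card_perm, Fintype.card_fin,
          nsmul_eq_mul]
        have h1 : (1 : ℂ) = (((((M:ℝ)+1)^2 + 1)/((Nat.factorial (M+2) : ℕ) : ℝ) + s * R
            + s^2 * ((Nat.factorial (M+2) : ℕ) : ℝ) : ℝ) : ℂ) := by rw [hs]; norm_num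
        have hfne : ((Nat.factorial (M+2) : ℕ) : ℂ) ≠ 0 :=
          Nat.cast_ne_zero.mpr (Nat.factorial_ne_zero _)
        refine Eq.trans ?_ h1.symm
        push_cast
        field_simp
      have habs : ((∑ σ : Perm (Fin (M+2)),
            ‖c0 U σ + (s:ℂ) * g σ‖ ^ 2 : ℝ) : ℂ)
          = ∑ σ : Perm (Fin (M+2)),
            (c0 U σ + (s:ℂ) * g σ) * (starRingEnd ℂ) (c0 U σ + (s:ℂ) * g σ) := by
        rw [Complex.ofReal_sum]
        refine Finset.sum_congr rfl fun σ _ => ?_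
        rw [Complex.sq_norm]
        exact (Complex.mul_conj _).symm
      have := habs.trans hC
      exact_mod_cast this
end

section
/- Let n ≥ 1 and let U be an n×n unitary complex matrix all of whose row sums and column sums equal 1. Then there exist complex coefficients c_σ, indexed by the permutations σ of {0,…,n−1}, such that U = Σ_σ c_σ P_σ and Σ_σ c_σ = 1. -/
lemma key1 (m : ℕ) (a b : Fin m) (j k : Fin (m+1)) :
    permMat (m+1) (Equiv.swap a.castSucc b.castSucc) j k
      - permMat (m+1) (Equiv.swap a.castSucc b.castSucc * Equiv.swap b.castSucc (Fin.last m)) j k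
    = ((if j = a.castSucc then 1 else 0) - (if j = Fin.last m then 1 else 0))
      * ((if k = b.castSucc then 1 else 0) - (if k = Fin.last m then 1 else 0)) := by
  have ha : a.castSucc ≠ Fin.last m := (Fin.castSucc_lt_last a).ne
  have hb : b.castSucc ≠ Fin.last m := (Fin.castSucc_lt_last b).ne
  have hL : Equiv.swap a.castSucc b.castSucc (Fin.last m) = Fin.last m :=
    Equiv.swap_apply_of_ne_of_ne ha.symm hb.symm
  have h1 : Equiv.swap a.castSucc b.castSucc b.castSucc = a.castSucc :=
    Equiv.swap_apply_right _ _
  simp only [permMat, Matrix.of_apply, Equiv.Perm.mul_apply]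
  rcases eq_or_ne k b.castSucc with rfl | hk1
  · simp only [h1, Equiv.swap_apply_left, hL, if_pos rfl, if_neg hb, if_true]
    ring
  · rcases eq_or_ne k (Fin.last m) with rfl | hk2
    · simp only [Equiv.swap_apply_right, h1, hL, if_pos rfl, if_neg (Ne.symm hb), if_true]
      ring
    · simp only [Equiv.swap_apply_of_ne_of_ne hk1 hk2, if_neg hk1, if_neg hk2]
      ring

lemma keysum {m : ℕ} (d : Fin m → Fin m → ℂ) (A B : Fin m → ℂ) :
    ∑ a, ∑ b, d a b * (A a * B b) = ∑ a, A a * ∑ b, d a b * B b := by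
  refine Finset.sum_congr rfl fun a _ => ?_
  rw [Finset.mul_sum]
  exact Finset.sum_congr rfl fun b _ => by ring

lemma key2 (m : ℕ) (U : Matrix (Fin (m+1)) (Fin (m+1)) ℂ)
    (hrow : ∀ j, ∑ k, U j k = 1) (hcol : ∀ k, ∑ j, U j k = 1) (j k : Fin (m+1)) :
    U j k = (if j = k then 1 else 0)
      + ∑ a : Fin m, ∑ b : Fin m,
          (U a.castSucc b.castSucc - if a = b then 1 else 0) *
          (((if j = a.castSucc then 1 else 0) - (if j = Fin.last m then 1 else 0))
            * ((if k = b.castSucc then 1 else 0) - (if k = Fin.last m then 1 else 0))) := by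
  have hne : ∀ x : Fin m, x.castSucc ≠ Fin.last m := fun x => (Fin.castSucc_lt_last x).ne
  have hrowd : ∀ a : Fin m,
      ∑ b : Fin m, (U a.castSucc b.castSucc - if a = b then 1 else 0)
        = - U a.castSucc (Fin.last m) := by
    intro a
    have h := hrow a.castSucc
    rw [Fin.sum_univ_castSucc] at h
    rw [Finset.sum_sub_distrib]
    simp only [Finset.sum_ite_eq, Finset.mem_univ, if_true]
    linear_combination h
  have hUlast : ∑ a : Fin m, U a.castSucc (Fin.last m) = 1 - U (Fin.last m) (Fin.last m) := by
    have h := hcol (Fin.last m)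
    rw [Fin.sum_univ_castSucc] at h
    linear_combination h
  have hUcol : ∀ b : Fin m, ∑ a : Fin m, U a.castSucc b.castSucc
      = 1 - U (Fin.last m) b.castSucc := by
    intro b
    have h := hcol b.castSucc
    rw [Fin.sum_univ_castSucc] at h
    linear_combination h
  rw [keysum]
  induction k using Fin.lastCases with
  | last =>
    have hinner : ∀ a : Fin m,
        ∑ b : Fin m, (U a.castSucc b.castSucc - if a = b then 1 else 0) *
          ((if (Fin.last m : Fin (m+1)) = b.castSucc then 1 else 0)
            - (if (Fin.last m : Fin (m+1)) = Fin.last m then 1 else 0))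
        = U a.castSucc (Fin.last m) := by
      intro a
      have e : ∀ b : Fin m, (U a.castSucc b.castSucc - if a = b then 1 else 0) *
          ((if (Fin.last m : Fin (m+1)) = b.castSucc then (1:ℂ) else 0)
            - (if (Fin.last m : Fin (m+1)) = Fin.last m then 1 else 0))
          = -(U a.castSucc b.castSucc - if a = b then 1 else 0) := by
        intro b; rw [if_neg (Ne.symm (hne b)), if_pos rfl]; ring
      rw [Finset.sum_congr rfl fun b _ => e b, Finset.sum_neg_distrib, hrowd]
      ring
    rw [Finset.sum_congr rfl fun a (_ : a ∈ Finset.univ) => by rw [hinner a]]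
    induction j using Fin.lastCases with
    | last =>
      have e : ∀ a : Fin m,
          ((if (Fin.last m : Fin (m+1)) = a.castSucc then (1:ℂ) else 0)
            - (if (Fin.last m : Fin (m+1)) = Fin.last m then 1 else 0))
            * U a.castSucc (Fin.last m) = -(U a.castSucc (Fin.last m)) := by
        intro a; rw [if_neg (Ne.symm (hne a)), if_pos rfl]; ring
      rw [Finset.sum_congr rfl fun a _ => e a, Finset.sum_neg_distrib, hUlast, if_pos rfl]
      ring
    | cast i =>
      rw [if_neg (hne i)]
      have e : ∀ a : Fin m,
          ((if i.castSucc = a.castSucc then (1:ℂ) else 0) - 0)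
            * U a.castSucc (Fin.last m)
          = if i = a then U a.castSucc (Fin.last m) else 0 := by
        intro a
        simp only [Fin.castSucc_inj, sub_zero, ite_mul, one_mul, zero_mul]
      rw [Finset.sum_congr rfl fun a _ => e a, Finset.sum_ite_eq]
      simp
  | cast l =>
    have hinner : ∀ a : Fin m,
        ∑ b : Fin m, (U a.castSucc b.castSucc - if a = b then 1 else 0) *
          ((if l.castSucc = b.castSucc then 1 else 0)
            - (if (l.castSucc : Fin (m+1)) = Fin.last m then 1 else 0))
        = U a.castSucc l.castSucc - (if a = l then 1 else 0) := by
      intro a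
      have e : ∀ b : Fin m, (U a.castSucc b.castSucc - if a = b then 1 else 0) *
          ((if l.castSucc = b.castSucc then (1:ℂ) else 0)
            - (if (l.castSucc : Fin (m+1)) = Fin.last m then 1 else 0))
          = if l = b then U a.castSucc b.castSucc - (if a = b then 1 else 0) else 0 := by
        intro b
        rw [if_neg (hne l)]
        simp only [Fin.castSucc_inj, sub_zero, mul_ite, mul_one, mul_zero]
      rw [Finset.sum_congr rfl fun b _ => e b, Finset.sum_ite_eq]
      simp
    rw [Finset.sum_congr rfl fun a (_ : a ∈ Finset.univ) => by rw [hinner a]]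
    induction j using Fin.lastCases with
    | last =>
      have e : ∀ a : Fin m,
          ((if (Fin.last m : Fin (m+1)) = a.castSucc then (1:ℂ) else 0)
            - (if (Fin.last m : Fin (m+1)) = Fin.last m then 1 else 0))
            * (U a.castSucc l.castSucc - (if a = l then 1 else 0))
          = -(U a.castSucc l.castSucc - (if a = l then 1 else 0)) := by
        intro a; rw [if_neg (Ne.symm (hne a)), if_pos rfl]; ring
      rw [Finset.sum_congr rfl fun a _ => e a, Finset.sum_neg_distrib,
        Finset.sum_sub_distrib, hUcol l, if_neg (Ne.symm (hne l))]
      simp only [Finset.sum_ite_eq', Finset.mem_univ, if_true]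
      ring
    | cast i =>
      have e : ∀ a : Fin m,
          ((if i.castSucc = a.castSucc then (1:ℂ) else 0)
            - (if (i.castSucc : Fin (m+1)) = Fin.last m then 1 else 0))
            * (U a.castSucc l.castSucc - (if a = l then 1 else 0))
          = if i = a then U a.castSucc l.castSucc - (if a = l then 1 else 0) else 0 := by
        intro a
        rw [if_neg (hne i)]
        simp only [Fin.castSucc_inj, sub_zero, ite_mul, one_mul, zero_mul]
      rw [Finset.sum_congr rfl fun a _ => e a, Finset.sum_ite_eq]
      simp [Fin.castSucc_inj]

lemma sumPick {α : Type*} [Fintype α] [DecidableEq α] (x : α) (f : α → ℂ) :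
    ∑ y, (if y = x then (1:ℂ) else 0) * f y = f x := by
  simp [ite_mul]

lemma sumPick2 {α : Type*} [Fintype α] [DecidableEq α] (x y : α) (cst : ℂ) (f : α → ℂ) :
    ∑ z, (cst * ((if z = x then (1:ℂ) else 0) - (if z = y then 1 else 0))) * f z
      = cst * (f x - f y) := by
  have e : ∀ z, (cst * ((if z = x then (1:ℂ) else 0) - (if z = y then 1 else 0))) * f z
      = cst * ((if z = x then 1 else 0) * f z) - cst * ((if z = y then 1 else 0) * f z) := by
    intro z; ring
  rw [Finset.sum_congr rfl fun z _ => e z, Finset.sum_sub_distrib, ← Finset.mul_sum,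
    ← Finset.mul_sum, sumPick, sumPick]
  ring

lemma bigsum {α β γ : Type*} [Fintype α] [DecidableEq α] [Fintype β] [Fintype γ]
    (d : β → γ → ℂ) (x1 : α) (x2 x3 : β → γ → α) (f : α → ℂ) :
    ∑ σ, ((if σ = x1 then (1:ℂ) else 0)
        + ∑ a, ∑ b, d a b * ((if σ = x2 a b then 1 else 0) - (if σ = x3 a b then 1 else 0)))
        * f σ
      = f x1 + ∑ a, ∑ b, d a b * (f (x2 a b) - f (x3 a b)) := by
  have e : ∀ σ, ((if σ = x1 then (1:ℂ) else 0)
        + ∑ a, ∑ b, d a b * ((if σ = x2 a b then 1 else 0) - (if σ = x3 a b then 1 else 0)))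
        * f σ
      = (if σ = x1 then (1:ℂ) else 0) * f σ
        + ∑ a, ∑ b, (d a b * ((if σ = x2 a b then 1 else 0) - (if σ = x3 a b then 1 else 0)))
            * f σ := by
    intro σ
    rw [add_mul, Finset.sum_mul]
    congr 1
    exact Finset.sum_congr rfl fun a _ => (Finset.sum_mul _ _ _)
  rw [Finset.sum_congr rfl fun σ _ => e σ, Finset.sum_add_distrib, sumPick]
  congr 1
  rw [Finset.sum_comm]
  refine Finset.sum_congr rfl fun a _ => ?_
  rw [Finset.sum_comm]
  exact Finset.sum_congr rfl fun b _ => sumPick2 _ _ _ _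

/-- Every `n × n` unitary matrix whose row sums and column sums all equal `1`
can be written as a weighted sum of permutation matrices with the sum of the
(complex) weights equal to `1`. -/
theorem unitary_sum_of_permMatrices (n : ℕ) (hn : 1 ≤ n) (U : Matrix (Fin n) (Fin n) ℂ)
    (hU : U ∈ Matrix.unitaryGroup (Fin n) ℂ)
    (hrow : ∀ j, ∑ k, U j k = 1) (hcol : ∀ k, ∑ j, U j k = 1) :
    ∃ c : Equiv.Perm (Fin n) → ℂ,
      U = ∑ σ : Equiv.Perm (Fin n), c σ • permMat n σ ∧
      ∑ σ : Equiv.Perm (Fin n), c σ = 1 := by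
  obtain ⟨m, rfl⟩ : ∃ m, n = m + 1 := ⟨n - 1, by omega⟩
  refine ⟨fun σ => (if σ = 1 then (1:ℂ) else 0)
      + ∑ a : Fin m, ∑ b : Fin m,
          (U a.castSucc b.castSucc - if a = b then 1 else 0) *
          ((if σ = Equiv.swap a.castSucc b.castSucc then 1 else 0)
            - (if σ = Equiv.swap a.castSucc b.castSucc * Equiv.swap b.castSucc (Fin.last m)
                then 1 else 0)), ?_, ?_⟩
  · ext j k
    rw [Matrix.sum_apply]
    have hsm : ∀ σ : Equiv.Perm (Fin (m+1)), ∀ cc : ℂ,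
        (cc • permMat (m+1) σ) j k = cc * permMat (m+1) σ j k := by
      intro σ cc; simp [Matrix.smul_apply]
    rw [Finset.sum_congr rfl fun σ _ => hsm σ _]
    rw [bigsum (fun (a b : Fin m) => U a.castSucc b.castSucc - if a = b then 1 else 0) 1
      (fun (a b : Fin m) => Equiv.swap a.castSucc b.castSucc)
      (fun (a b : Fin m) => Equiv.swap a.castSucc b.castSucc * Equiv.swap b.castSucc (Fin.last m))
      (fun σ => permMat (m+1) σ j k)]
    have h1 : permMat (m+1) 1 j k = if j = k then 1 else 0 := by
      simp [permMat, Equiv.Perm.one_apply]; exact if_congr Iff.rfl rfl rfl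
    rw [h1]
    rw [Finset.sum_congr rfl fun a (_ : a ∈ Finset.univ) =>
      Finset.sum_congr rfl fun b (_ : b ∈ Finset.univ) => by rw [key1 m a b j k]]
    exact key2 m U hrow hcol j k
  · have h := bigsum (fun (a b : Fin m) => U a.castSucc b.castSucc - if a = b then 1 else 0) 1
      (fun (a b : Fin m) => Equiv.swap a.castSucc b.castSucc)
      (fun (a b : Fin m) => Equiv.swap a.castSucc b.castSucc * Equiv.swap b.castSucc (Fin.last m))
      (fun _ => (1:ℂ))
    simp only [mul_one, sub_self, mul_zero, Finset.sum_const_zero, add_zero] at h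
    exact h
end

section
/- Let n ≥ 2 and let X be an n×n unitary complex matrix all of whose row sums and column sums equal 1. Then the (n−1)×(n−1) lower-right block of F_n† X F_n (the submatrix with row and column indices in {1,…,n−1}) is a unitary matrix. -/
open scoped Matrix

/-- The `n × n` Fourier matrix, with entries `(F_n)_{jk} = ω^{jk} / √n`
where `ω = exp(2πi/n)`. -/
noncomputable def fourierMat (n : ℕ) : Matrix (Fin n) (Fin n) ℂ :=
  Matrix.of fun j k =>
    Complex.exp (2 * Real.pi * Complex.I * (j : ℕ) * (k : ℕ) / n) / Real.sqrt n

lemma expsum (n : ℕ) (hn : 0 < n) (d : ℤ) :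
    ∑ k : Fin n, Complex.exp (2 * Real.pi * Complex.I * d * k / n) =
      if (n : ℤ) ∣ d then (n : ℂ) else 0 := by
  have hne : (n : ℂ) ≠ 0 := Nat.cast_ne_zero.mpr hn.ne'
  set w : ℂ := Complex.exp (2 * Real.pi * Complex.I * d / n) with hw
  have hterm : ∀ k : Fin n,
      Complex.exp (2 * Real.pi * Complex.I * d * k / n) = w ^ (k : ℕ) := by
    intro k
    rw [hw, ← Complex.exp_nat_mul]
    congr 1
    field_simp
  rw [Finset.sum_congr rfl fun k _ => hterm k,
    Fin.sum_univ_eq_sum_range (fun i => w ^ i)]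
  by_cases hdvd : (n : ℤ) ∣ d
  · obtain ⟨e, rfl⟩ := hdvd
    have hw1 : w = 1 := by
      rw [hw]
      have : ((((n : ℤ) * e : ℤ) : ℂ)) * (2 * Real.pi * Complex.I) / n =
          e * (2 * Real.pi * Complex.I) := by push_cast; field_simp
      rw [show (2 * Real.pi * Complex.I * (((n : ℤ) * e : ℤ) : ℂ) / n) =
        ((((n : ℤ) * e : ℤ) : ℂ)) * (2 * Real.pi * Complex.I) / n by ring]
      rw [this, Complex.exp_int_mul_two_pi_mul_I]
    simp [hw1]
  · have hwn : w ^ n = 1 := by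
      rw [hw, ← Complex.exp_nat_mul]
      have : (n : ℂ) * (2 * Real.pi * Complex.I * d / n) =
          d * (2 * Real.pi * Complex.I) := by field_simp
      rw [this, Complex.exp_int_mul_two_pi_mul_I]
    have h2pi : (2 * Real.pi * Complex.I : ℂ) ≠ 0 := by
      simp [Real.pi_ne_zero, Complex.I_ne_zero, Complex.ofReal_ne_zero]
    have hw1 : w ≠ 1 := by
      intro h
      rw [hw, Complex.exp_eq_one_iff] at h
      obtain ⟨m, hm⟩ := h
      apply hdvd
      refine ⟨m, ?_⟩
      have hd : (d : ℂ) = n * m := by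
        have := hm
        field_simp at this
        have h2 : (2 * Real.pi * Complex.I) * (d : ℂ) =
            (2 * Real.pi * Complex.I) * ((n : ℂ) * m) := by linear_combination (2 * Real.pi * Complex.I) * this
        exact mul_left_cancel₀ h2pi h2
      exact_mod_cast hd
    rw [geom_sum_eq hw1, hwn]
    simp [hdvd]


lemma sqrtn_mul_self (n : ℕ) :
    ((Real.sqrt n : ℝ) : ℂ) * ((Real.sqrt n : ℝ) : ℂ) = (n : ℂ) := by
  rw [← Complex.ofReal_mul, Real.mul_self_sqrt (Nat.cast_nonneg n)]
  norm_cast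

lemma fourier_symm (n : ℕ) (j k : Fin n) : fourierMat n j k = fourierMat n k j := by
  simp only [fourierMat, Matrix.of_apply]
  ring_nf

lemma fourier_conj (n : ℕ) (j k : Fin n) :
    (starRingEnd ℂ) (fourierMat n j k) =
      Complex.exp (-(2 * Real.pi * Complex.I * (j : ℕ) * (k : ℕ)) / n) / Real.sqrt n := by
  simp only [fourierMat, Matrix.of_apply, map_div₀, ← Complex.exp_conj,
    Complex.conj_ofReal, Complex.conj_natCast]
  congr 2
  simp only [map_div₀, map_mul, map_ofNat, Complex.conj_ofReal, Complex.conj_I,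
    Complex.conj_natCast]
  ring

lemma fourier_conj_mul (n : ℕ) (a b k : Fin n) :
    (starRingEnd ℂ) (fourierMat n k a) * fourierMat n k b =
      Complex.exp (2 * Real.pi * Complex.I * (((((b : ℕ) : ℤ) - ((a : ℕ) : ℤ)) : ℤ) : ℂ) * k / n) / n := by
  rw [fourier_conj]
  simp only [fourierMat, Matrix.of_apply]
  rw [div_mul_div_comm, ← Complex.exp_add, sqrtn_mul_self]
  congr 1
  push_cast
  ring

lemma fourier_mul_conj (n : ℕ) (a b k : Fin n) :
    fourierMat n a k * (starRingEnd ℂ) (fourierMat n b k) =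
      Complex.exp (2 * Real.pi * Complex.I * (((((a : ℕ) : ℤ) - ((b : ℕ) : ℤ)) : ℤ) : ℂ) * k / n) / n := by
  rw [mul_comm, fourier_symm n b k, fourier_symm n a k]
  exact fourier_conj_mul n b a k

lemma dvd_iff_fin (n : ℕ) (a b : Fin n) :
    (n : ℤ) ∣ (((b : ℕ) : ℤ) - ((a : ℕ) : ℤ)) ↔ a = b := by
  constructor
  · rintro ⟨c, hc⟩
    have hn : 0 < n := a.pos
    have ha : ((a : ℕ) : ℤ) < n := by exact_mod_cast a.isLt
    have hb : ((b : ℕ) : ℤ) < n := by exact_mod_cast b.isLt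
    have ha0 : (0 : ℤ) ≤ ((a : ℕ) : ℤ) := Int.natCast_nonneg _
    have hb0 : (0 : ℤ) ≤ ((b : ℕ) : ℤ) := Int.natCast_nonneg _
    have hn' : (0 : ℤ) < n := by exact_mod_cast hn
    have hc0 : c = 0 := by
      rcases lt_trichotomy c 0 with h | h | h
      · nlinarith
      · exact h
      · nlinarith
    rw [hc0, mul_zero] at hc
    have : (b : ℕ) = (a : ℕ) := by omega
    exact (Fin.ext this).symm
  · rintro rfl; simp

lemma fourier_unitary (n : ℕ) (hn : 0 < n) :
    fourierMat n ∈ Matrix.unitaryGroup (Fin n) ℂ := by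
  rw [Matrix.mem_unitaryGroup_iff]
  ext a b
  rw [Matrix.mul_apply]
  simp only [Matrix.star_eq_conjTranspose, Matrix.conjTranspose_apply, Complex.star_def]
  calc ∑ k, fourierMat n a k * (starRingEnd ℂ) (fourierMat n b k)
      = ∑ k : Fin n, Complex.exp (2 * Real.pi * Complex.I *
          (((((a : ℕ) : ℤ) - ((b : ℕ) : ℤ)) : ℤ) : ℂ) * k / n) / n := by
        exact Finset.sum_congr rfl fun k _ => fourier_mul_conj n a b k
    _ = (if (n : ℤ) ∣ (((a : ℕ) : ℤ) - ((b : ℕ) : ℤ)) then (n : ℂ) else 0) / n := by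
        rw [← Finset.sum_div, expsum n hn]
    _ = (1 : Matrix (Fin n) (Fin n) ℂ) a b := by
        have hne : (n : ℂ) ≠ 0 := Nat.cast_ne_zero.mpr hn.ne'
        simp only [dvd_iff_fin n b a]
        by_cases h : a = b
        · subst h; simp [Matrix.one_apply, hne]
        · simp only [Matrix.one_apply, if_neg h]
          rw [if_neg (fun hh : b = a => h hh.symm), zero_div]

lemma Y_col0 (n : ℕ) (hn : 0 < n) (X : Matrix (Fin n) (Fin n) ℂ)
    (hrow : ∀ j, ∑ k, X j k = 1) (j : Fin n) :
    ((fourierMat n)ᴴ * X * fourierMat n) j ⟨0, hn⟩ = if j = ⟨0, hn⟩ then 1 else 0 := by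
  have hne : (n : ℂ) ≠ 0 := Nat.cast_ne_zero.mpr hn.ne'
  have hs : ((Real.sqrt n : ℝ) : ℂ) ≠ 0 := by
    simp [Real.sqrt_eq_zero', Nat.cast_nonneg, hn.ne']
  have hF0 : ∀ l : Fin n, fourierMat n l ⟨0, hn⟩ = 1 / ((Real.sqrt n : ℝ) : ℂ) := by
    intro l; simp [fourierMat]
  rw [Matrix.mul_apply]
  simp only [hF0, Matrix.mul_apply, Matrix.conjTranspose_apply, Complex.star_def]
  rw [Finset.sum_congr rfl fun l _ => Finset.sum_mul _ _ _, Finset.sum_comm]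
  have step : ∀ k : Fin n, (∑ l : Fin n, (starRingEnd ℂ) (fourierMat n k j) * X k l *
      (1 / ((Real.sqrt n : ℝ) : ℂ))) = (starRingEnd ℂ) (fourierMat n k j) *
      (1 / ((Real.sqrt n : ℝ) : ℂ)) := by
    intro k
    rw [← Finset.sum_mul, ← Finset.mul_sum, hrow k, mul_one]
  rw [Finset.sum_congr rfl fun k _ => step k]
  have term : ∀ k : Fin n, (starRingEnd ℂ) (fourierMat n k j) *
      (1 / ((Real.sqrt n : ℝ) : ℂ)) =
      Complex.exp (2 * Real.pi * Complex.I * (((-(j : ℕ) : ℤ)) : ℂ) * k / n) / n := by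
    intro k
    rw [fourier_conj]
    rw [div_mul_div_comm, mul_one, sqrtn_mul_self]
    congr 1
    push_cast
    ring
  rw [Finset.sum_congr rfl fun k _ => term k, ← Finset.sum_div, expsum n hn]
  have : ((n : ℤ) ∣ (-(j : ℕ) : ℤ)) ↔ j = ⟨0, hn⟩ := by
    rw [Int.dvd_neg, Int.natCast_dvd_natCast]
    constructor
    · intro h
      exact Fin.ext (Nat.eq_zero_of_dvd_of_lt h j.isLt)
    · rintro rfl; simp
  simp only [this]
  by_cases h : j = ⟨0, hn⟩ <;> simp [h, hne]

lemma Y_row0 (n : ℕ) (hn : 0 < n) (X : Matrix (Fin n) (Fin n) ℂ)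
    (hcol : ∀ k, ∑ j, X j k = 1) (j : Fin n) :
    ((fourierMat n)ᴴ * X * fourierMat n) ⟨0, hn⟩ j = if j = ⟨0, hn⟩ then 1 else 0 := by
  have hne : (n : ℂ) ≠ 0 := Nat.cast_ne_zero.mpr hn.ne'
  have hF0 : ∀ l : Fin n, (starRingEnd ℂ) (fourierMat n l ⟨0, hn⟩) =
      1 / ((Real.sqrt n : ℝ) : ℂ) := by
    intro l
    rw [fourier_conj]
    simp
  rw [Matrix.mul_apply]
  simp only [Matrix.mul_apply, Matrix.conjTranspose_apply, Complex.star_def, hF0]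
  have step : ∀ l : Fin n, (∑ k : Fin n, 1 / ((Real.sqrt n : ℝ) : ℂ) * X k l) *
      fourierMat n l j = fourierMat n l j * (1 / ((Real.sqrt n : ℝ) : ℂ)) := by
    intro l
    rw [← Finset.mul_sum, hcol l, mul_one, mul_comm]
  rw [Finset.sum_congr rfl fun l _ => step l]
  have term : ∀ l : Fin n, fourierMat n l j * (1 / ((Real.sqrt n : ℝ) : ℂ)) =
      Complex.exp (2 * Real.pi * Complex.I * ((((j : ℕ) : ℤ)) : ℂ) * l / n) / n := by
    intro l
    simp only [fourierMat, Matrix.of_apply]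
    rw [div_mul_div_comm, mul_one, sqrtn_mul_self]
    congr 1
    push_cast
    ring
  rw [Finset.sum_congr rfl fun l _ => term l, ← Finset.sum_div, expsum n hn]
  have : ((n : ℤ) ∣ ((j : ℕ) : ℤ)) ↔ j = ⟨0, hn⟩ := by
    rw [Int.natCast_dvd_natCast]
    constructor
    · intro h
      exact Fin.ext (Nat.eq_zero_of_dvd_of_lt h j.isLt)
    · rintro rfl; simp
  simp only [this]
  by_cases h : j = ⟨0, hn⟩ <;> simp [h, hne]

/-- The lower-right `(n-1) × (n-1)` block of an `n × n` matrix (rows and columns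
with indices in `{1, …, n-1}`). -/
def lowerRightBlock {n : ℕ} (M : Matrix (Fin n) (Fin n) ℂ) :
    Matrix (Fin (n - 1)) (Fin (n - 1)) ℂ :=
  Matrix.of fun i j =>
    M ⟨i.1 + 1, by have := i.isLt; omega⟩ ⟨j.1 + 1, by have := j.isLt; omega⟩

/-- If `X` is unitary with all line sums equal to `1`, then the lower-right
`(n-1) × (n-1)` block of `F_n† X F_n` is unitary. -/
theorem lowerRightBlock_unitary (n : ℕ) (hn : 2 ≤ n) (X : Matrix (Fin n) (Fin n) ℂ)
    (hX : X ∈ Matrix.unitaryGroup (Fin n) ℂ)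
    (hrow : ∀ j, ∑ k, X j k = 1) (hcol : ∀ k, ∑ j, X j k = 1) :
    lowerRightBlock ((fourierMat n)ᴴ * X * fourierMat n) ∈
      Matrix.unitaryGroup (Fin (n - 1)) ℂ := by
  have hn0 : 0 < n := by omega
  obtain ⟨m, rfl⟩ : ∃ m, n = m + 1 := ⟨n - 1, by omega⟩
  have hF : fourierMat (m + 1) ∈ Matrix.unitaryGroup (Fin (m + 1)) ℂ :=
    fourier_unitary _ hn0
  set Y := (fourierMat (m + 1))ᴴ * X * fourierMat (m + 1) with hYdef
  have hY : Y ∈ Matrix.unitaryGroup (Fin (m + 1)) ℂ := by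
    rw [hYdef, ← Matrix.star_eq_conjTranspose]
    exact mul_mem (mul_mem (Unitary.star_mem hF) hX) hF
  have hYY : Y * star Y = 1 := Matrix.mem_unitaryGroup_iff.mp hY
  have hcol0 : ∀ j, Y j ⟨0, hn0⟩ = if j = ⟨0, hn0⟩ then 1 else 0 :=
    Y_col0 _ hn0 X hrow
  rw [Matrix.mem_unitaryGroup_iff]
  ext i j
  rw [Matrix.mul_apply]
  simp only [Matrix.star_apply, lowerRightBlock, Matrix.of_apply]
  have hi : i.1 + 1 < m + 1 := by have := i.isLt; omega
  have hj : j.1 + 1 < m + 1 := by have := j.isLt; omega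
  have key := congrFun (congrFun hYY ⟨i.1 + 1, hi⟩) ⟨j.1 + 1, hj⟩
  rw [Matrix.mul_apply, Fin.sum_univ_succ] at key
  have hY0i : Y ⟨i.1 + 1, hi⟩ (0 : Fin (m + 1)) = 0 := by
    rw [show (0 : Fin (m + 1)) = ⟨0, hn0⟩ from rfl, hcol0]
    simp [Fin.ext_iff]
  rw [hY0i, zero_mul, zero_add] at key
  have sums : ∑ k : Fin (m + 1 - 1),
      Y ⟨i.1 + 1, hi⟩ ⟨k.1 + 1, by have := k.isLt; omega⟩ *
        star (Y ⟨j.1 + 1, hj⟩ ⟨k.1 + 1, by have := k.isLt; omega⟩) =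
      ∑ k : Fin m, Y ⟨i.1 + 1, hi⟩ k.succ * (star Y) k.succ ⟨j.1 + 1, hj⟩ := by
    apply Finset.sum_congr rfl
    intro k _
    rw [Matrix.star_apply]
    rfl
  rw [sums, key]
  simp only [Matrix.one_apply, Fin.ext_iff]
  by_cases h : (i : ℕ) = (j : ℕ) <;> simp [h]
end

section
/- Let n ≥ 2. The map sending an (n−1)×(n−1) unitary complex matrix V to F_n · (1 ⊕ V) · F_n†, where 1 ⊕ V denotes the n×n block-diagonal matrix with upper-left entry 1 and lower-right block V, is a bijection from the group U(n−1) of (n−1)×(n−1) unitary matrices onto the set XU(n) of n×n unitary matrices all of whose row sums and column sums equal 1, and it satisfies F_n(1 ⊕ (VW))F_n† = (F_n(1 ⊕ V)F_n†)·(F_n(1 ⊕ W)F_n†) for all unitary V, W; in particular XU(n) is a group isomorphic to U(n−1). -/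
open scoped Matrix

/-- The `n × n` block-diagonal matrix `1 ⊕ V` with upper-left entry `1` and
lower-right `(n-1) × (n-1)` block `V`. -/
def oneOplus {n : ℕ} (V : Matrix (Fin (n - 1)) (Fin (n - 1)) ℂ) :
    Matrix (Fin n) (Fin n) ℂ :=
  Matrix.of fun j k =>
    if j.1 = 0 then (if k.1 = 0 then 1 else 0)
    else if hk : k.1 = 0 then 0
    else V ⟨j.1 - 1, by have := j.isLt; omega⟩ ⟨k.1 - 1, by have := k.isLt; omega⟩

namespace XUAux

lemma conj_zeta (n : ℕ) :
    (starRingEnd ℂ) (Complex.exp (2 * Real.pi * Complex.I / n)) =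
      (Complex.exp (2 * Real.pi * Complex.I / n))⁻¹ := by
  rw [← Complex.exp_conj, ← Complex.exp_neg]
  congr 1
  simp [map_div₀, Complex.conj_I, map_ofNat]
  ring

lemma exp_entry (n : ℕ) (j k : ℕ) :
    Complex.exp (2 * Real.pi * Complex.I * j * k / n) =
      Complex.exp (2 * Real.pi * Complex.I / n) ^ ((j : ℤ) * k) := by
  rw [← Complex.exp_int_mul]
  congr 1
  push_cast
  ring

lemma conj_exp_entry (n : ℕ) (j k : ℕ) :
    (starRingEnd ℂ) (Complex.exp (2 * Real.pi * Complex.I * j * k / n)) =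
      Complex.exp (2 * Real.pi * Complex.I / n) ^ (-((j : ℤ) * k)) := by
  rw [exp_entry n, map_zpow₀, conj_zeta, inv_zpow']

lemma sum_fin_split {M : Type*} [AddCommMonoid M] (n : ℕ) (hn : 0 < n) (f : Fin n → M) :
    ∑ a, f a = f ⟨0, hn⟩ + ∑ b : Fin (n - 1), f ⟨b.1 + 1, by have := b.isLt; omega⟩ := by
  have h : n - 1 + 1 = n := by omega
  rw [← Fintype.sum_equiv (finCongr h) (fun i : Fin (n-1+1) => f (Fin.cast h i)) f
    (fun i => rfl), Fin.sum_univ_succ]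
  rfl

lemma geom_exp_sum (n : ℕ) (hn : 0 < n) (d : ℤ) :
    ∑ j : Fin n, Complex.exp (2 * Real.pi * Complex.I / n) ^ (d * j) =
      if (n : ℤ) ∣ d then (n : ℂ) else 0 := by
  set ζ : ℂ := Complex.exp (2 * Real.pi * Complex.I / n) with hζ
  have P : IsPrimitiveRoot ζ n := Complex.isPrimitiveRoot_exp n hn.ne'
  by_cases hd : (n : ℤ) ∣ d
  · have h1 : ζ ^ d = 1 := (P.zpow_eq_one_iff_dvd d).2 hd
    simp only [zpow_mul, h1, one_zpow, if_pos hd]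
    simp
  · have hne : ζ ^ d ≠ 1 := fun h => hd ((P.zpow_eq_one_iff_dvd d).1 h)
    have hsum : ∑ j : Fin n, ζ ^ (d * (j : ℕ)) = ∑ j ∈ Finset.range n, (ζ ^ d) ^ j := by
      rw [Fin.sum_univ_eq_sum_range (fun j => ζ ^ (d * (j : ℕ)))]
      refine Finset.sum_congr rfl fun j _ => ?_
      rw [zpow_mul, zpow_natCast]
    rw [if_neg hd, hsum, geom_sum_eq hne]
    have : (ζ ^ d) ^ n = 1 := by
      rw [← zpow_natCast, ← zpow_mul, mul_comm, zpow_mul, zpow_natCast, P.pow_eq_one, one_zpow]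
    rw [this, sub_self, zero_div]

/-- orthogonality, summing over the second factor of the exponent -/
lemma fourier_orth (n : ℕ) (hn : 0 < n) (a b : Fin n) :
    ∑ j : Fin n, Complex.exp (2*Real.pi*Complex.I*(a:ℕ)*(j:ℕ)/n) *
      (starRingEnd ℂ) (Complex.exp (2*Real.pi*Complex.I*(b:ℕ)*(j:ℕ)/n)) =
    if a = b then (n : ℂ) else 0 := by
  have key : ∀ j : Fin n, Complex.exp (2*Real.pi*Complex.I*(a:ℕ)*(j:ℕ)/n) *
      (starRingEnd ℂ) (Complex.exp (2*Real.pi*Complex.I*(b:ℕ)*(j:ℕ)/n)) =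
      Complex.exp (2*Real.pi*Complex.I/n) ^ ((((a:ℕ):ℤ) - ((b:ℕ):ℤ)) * (j:ℕ)) := by
    intro j
    rw [exp_entry n, conj_exp_entry n, ← zpow_add₀ (Complex.exp_ne_zero _)]
    congr 1
    ring
  rw [Finset.sum_congr rfl fun j _ => key j, geom_exp_sum n hn]
  have hiff : (n:ℤ) ∣ ((a:ℕ):ℤ) - ((b:ℕ):ℤ) ↔ a = b := by
    constructor
    · intro h
      have h1 : (((a:ℕ):ℤ) - ((b:ℕ):ℤ)) = 0 := Int.eq_zero_of_abs_lt_dvd h (by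
        have := a.isLt; have := b.isLt
        rw [abs_sub_lt_iff]; constructor <;> omega)
      ext; omega
    · rintro rfl; simp
  simp [hiff]

/-- orthogonality, summing over the first factor of the exponent -/
lemma fourier_orth' (n : ℕ) (hn : 0 < n) (a b : Fin n) :
    ∑ j : Fin n, Complex.exp (2*Real.pi*Complex.I*(j:ℕ)*(a:ℕ)/n) *
      (starRingEnd ℂ) (Complex.exp (2*Real.pi*Complex.I*(j:ℕ)*(b:ℕ)/n)) =
    if a = b then (n : ℂ) else 0 := by
  rw [← fourier_orth n hn a b]
  refine Finset.sum_congr rfl fun j _ => ?_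
  have e1 : 2*(Real.pi:ℂ)*Complex.I*((j:ℕ):ℂ)*((a:ℕ):ℂ)/n
      = 2*(Real.pi:ℂ)*Complex.I*((a:ℕ):ℂ)*((j:ℕ):ℂ)/n := by ring
  have e2 : 2*(Real.pi:ℂ)*Complex.I*((j:ℕ):ℂ)*((b:ℕ):ℂ)/n
      = 2*(Real.pi:ℂ)*Complex.I*((b:ℕ):ℂ)*((j:ℕ):ℂ)/n := by ring
  rw [e1, e2]

end XUAux

namespace XUAux

lemma sqrt_ne (n : ℕ) (hn : 0 < n) : ((Real.sqrt n : ℝ) : ℂ) ≠ 0 := by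
  simp only [ne_eq, Complex.ofReal_eq_zero]
  positivity

lemma hsq (n : ℕ) : ((Real.sqrt n : ℝ) : ℂ) * ((Real.sqrt n : ℝ) : ℂ) = (n : ℂ) := by
  rw [← Complex.ofReal_mul, Real.mul_self_sqrt (Nat.cast_nonneg n)]
  simp

lemma F_mul_FH (n : ℕ) (hn : 0 < n) : fourierMat n * (fourierMat n)ᴴ = 1 := by
  ext a b
  rw [Matrix.mul_apply, Matrix.one_apply]
  have step : ∀ j, fourierMat n a j * (fourierMat n)ᴴ j b =
      Complex.exp (2*Real.pi*Complex.I*(a:ℕ)*(j:ℕ)/n) *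
      (starRingEnd ℂ) (Complex.exp (2*Real.pi*Complex.I*(b:ℕ)*(j:ℕ)/n)) / n := by
    intro j
    simp only [fourierMat, Matrix.conjTranspose_apply, Matrix.of_apply, Complex.star_def,
      map_div₀, Complex.conj_ofReal]
    rw [div_mul_div_comm, hsq n]
  rw [Finset.sum_congr rfl fun j _ => step j, ← Finset.sum_div, fourier_orth n hn]
  have hn0 : (n : ℂ) ≠ 0 := Nat.cast_ne_zero.2 hn.ne'
  split_ifs <;> simp [hn0]

lemma FH_mul_F (n : ℕ) (hn : 0 < n) : (fourierMat n)ᴴ * fourierMat n = 1 :=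
  mul_eq_one_comm.1 (F_mul_FH n hn)

/-- the indicator vector of 0 -/
def e0 (n : ℕ) : Fin n → ℂ := fun j => if j.1 = 0 then 1 else 0

lemma mulVec_e0 {n : ℕ} (hn : 0 < n) (M : Matrix (Fin n) (Fin n) ℂ) :
    M *ᵥ e0 n = fun j => M j ⟨0, hn⟩ := by
  funext j
  simp only [Matrix.mulVec, dotProduct, e0]
  rw [sum_fin_split n hn (fun a => M j a * if a.1 = 0 then 1 else 0)]
  simp

lemma e0_vecMul {n : ℕ} (hn : 0 < n) (M : Matrix (Fin n) (Fin n) ℂ) :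
    e0 n ᵥ* M = M ⟨0, hn⟩ := by
  funext k
  simp only [Matrix.vecMul, dotProduct, e0]
  rw [sum_fin_split n hn (fun a => (if a.1 = 0 then (1:ℂ) else 0) * M a k)]
  simp

lemma F_mulVec_e0 (n : ℕ) (hn : 0 < n) :
    fourierMat n *ᵥ e0 n = (((Real.sqrt n : ℝ):ℂ))⁻¹ • (fun _ => (1:ℂ)) := by
  rw [mulVec_e0 hn]
  funext j
  simp only [fourierMat, Matrix.of_apply, Fin.val_mk, Nat.cast_zero, mul_zero, zero_div,
    Complex.exp_zero, Pi.smul_apply, smul_eq_mul, mul_one, one_div]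

lemma e0_vecMul_FH (n : ℕ) (hn : 0 < n) :
    e0 n ᵥ* (fourierMat n)ᴴ = (((Real.sqrt n : ℝ):ℂ))⁻¹ • (fun _ => (1:ℂ)) := by
  rw [e0_vecMul hn]
  funext k
  simp only [fourierMat, Matrix.conjTranspose_apply, Matrix.of_apply, Fin.val_mk, Nat.cast_zero,
    mul_zero, zero_mul, zero_div, Complex.exp_zero, Complex.star_def, map_div₀, map_one,
    Complex.conj_ofReal, Pi.smul_apply, smul_eq_mul, mul_one, one_div]
  rw [← Complex.ofReal_inv, Complex.conj_ofReal]

lemma FH_mulVec_one (n : ℕ) (hn : 0 < n) :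
    (fourierMat n)ᴴ *ᵥ (fun _ => (1:ℂ)) = ((n:ℂ) / ((Real.sqrt n : ℝ):ℂ)) • e0 n := by
  funext j
  have h := fourier_orth' n hn ⟨0, hn⟩ j
  simp only [Fin.val_mk, Nat.cast_zero, mul_zero, zero_mul, zero_div, mul_zero,
    Complex.exp_zero, one_mul] at h
  -- h : ∑ k, conj (exp (2πI k j / n)) = if ⟨0,hn⟩ = j then n else 0
  simp only [Matrix.mulVec, dotProduct, Matrix.conjTranspose_apply, fourierMat,
    Matrix.of_apply, mul_one, Complex.star_def, map_div₀, Complex.conj_ofReal]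
  rw [← Finset.sum_div, h]
  by_cases hj : j.1 = 0
  · have : (⟨0, hn⟩ : Fin n) = j := Fin.ext (by simpa using hj.symm)
    simp [this, e0, hj]
  · have : (⟨0, hn⟩ : Fin n) ≠ j := fun h => hj (by rw [← h])
    simp [this, e0, hj]

end XUAux

namespace XUAux

lemma one_vecMul_F (n : ℕ) (hn : 0 < n) :
    (fun _ => (1:ℂ)) ᵥ* fourierMat n = ((n:ℂ) / ((Real.sqrt n : ℝ):ℂ)) • e0 n := by
  funext k
  have h := fourier_orth' n hn k ⟨0, hn⟩
  simp only [Fin.val_mk, Nat.cast_zero, mul_zero, zero_div, Complex.exp_zero, map_one,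
    mul_one] at h
  simp only [Matrix.vecMul, dotProduct, fourierMat, Matrix.of_apply, one_mul]
  rw [← Finset.sum_div, h]
  by_cases hk : k.1 = 0
  · have : k = (⟨0, hn⟩ : Fin n) := Fin.ext (by simpa using hk)
    simp [this, e0]
  · have : k ≠ (⟨0, hn⟩ : Fin n) := fun h => hk (by rw [h])
    simp [this, e0, hk]

lemma oneOplus_mulVec_e0 {n : ℕ} (hn : 0 < n) (V : Matrix (Fin (n-1)) (Fin (n-1)) ℂ) :
    oneOplus V *ᵥ e0 n = e0 n := by
  rw [mulVec_e0 hn]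
  funext j
  by_cases hj : j.1 = 0 <;> simp [oneOplus, e0, hj]

lemma e0_vecMul_oneOplus {n : ℕ} (hn : 0 < n) (V : Matrix (Fin (n-1)) (Fin (n-1)) ℂ) :
    e0 n ᵥ* oneOplus V = e0 n := by
  rw [e0_vecMul hn]
  funext k
  by_cases hk : k.1 = 0 <;> simp [oneOplus, e0, hk]

lemma oneOplus_mul {n : ℕ} (hn : 0 < n) (V W : Matrix (Fin (n-1)) (Fin (n-1)) ℂ) :
    oneOplus V * oneOplus W = oneOplus (V * W) := by
  ext j k
  rw [Matrix.mul_apply,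
    sum_fin_split n hn (fun a => oneOplus V j a * oneOplus W a k)]
  by_cases hj : j.1 = 0 <;> by_cases hk : k.1 = 0 <;>
    simp [oneOplus, hj, hk, Matrix.mul_apply, Nat.add_sub_cancel]

lemma oneOplus_conjT {n : ℕ} (V : Matrix (Fin (n-1)) (Fin (n-1)) ℂ) :
    (oneOplus V)ᴴ = oneOplus Vᴴ := by
  ext j k
  simp only [Matrix.conjTranspose_apply, oneOplus, Matrix.of_apply]
  by_cases hj : j.1 = 0 <;> by_cases hk : k.1 = 0 <;>
    simp [hj, hk, Matrix.conjTranspose_apply]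

lemma oneOplus_one {n : ℕ} (hn : 0 < n) :
    oneOplus (1 : Matrix (Fin (n-1)) (Fin (n-1)) ℂ) = (1 : Matrix (Fin n) (Fin n) ℂ) := by
  ext j k
  simp only [oneOplus, Matrix.of_apply, Matrix.one_apply, Fin.ext_iff]
  by_cases hj : j.1 = 0 <;> by_cases hk : k.1 = 0 <;>
    simp [hj, hk, Fin.ext_iff]
  · omega
  · rw [if_congr (by omega : (j.1 - 1 = k.1 - 1) ↔ (j.1 = k.1)) rfl rfl]

lemma oneOplus_inj {n : ℕ} {V W : Matrix (Fin (n-1)) (Fin (n-1)) ℂ}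
    (h : oneOplus (n := n) V = oneOplus W) : V = W := by
  ext b c
  have hb : b.1 + 1 < n := by have := b.isLt; omega
  have hc : c.1 + 1 < n := by have := c.isLt; omega
  have := congrFun (congrFun h ⟨b.1 + 1, hb⟩) ⟨c.1 + 1, hc⟩
  simpa [oneOplus, Nat.add_sub_cancel] using this

lemma oneOplus_mem_iff {n : ℕ} (hn : 0 < n) (V : Matrix (Fin (n-1)) (Fin (n-1)) ℂ) :
    oneOplus V ∈ Matrix.unitaryGroup (Fin n) ℂ ↔
      V ∈ Matrix.unitaryGroup (Fin (n-1)) ℂ := by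
  rw [Matrix.mem_unitaryGroup_iff, Matrix.mem_unitaryGroup_iff,
    Matrix.star_eq_conjTranspose, Matrix.star_eq_conjTranspose, oneOplus_conjT,
    oneOplus_mul hn, ← oneOplus_one (n := n) hn]
  constructor
  · exact fun h => oneOplus_inj h
  · exact fun h => by rw [h]

end XUAux

namespace XUAux

lemma Y_apply_eq {n : ℕ} (Y : Matrix (Fin n) (Fin n) ℂ) (a b j k : Fin n)
    (ha : a.1 = j.1) (hb : b.1 = k.1) : Y a b = Y j k := by
  rw [Fin.eq_of_val_eq ha, Fin.eq_of_val_eq hb]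

lemma oneOplus_eq_of (n : ℕ) (hn : 0 < n) (Y : Matrix (Fin n) (Fin n) ℂ)
    (hrow : ∀ k, Y ⟨0, hn⟩ k = e0 n k) (hcol : ∀ j, Y j ⟨0, hn⟩ = e0 n j) :
    oneOplus (Matrix.of fun (b : Fin (n-1)) (c : Fin (n-1)) =>
      Y ⟨b.1 + 1, by have := b.isLt; omega⟩ ⟨c.1 + 1, by have := c.isLt; omega⟩) = Y := by
  ext j k
  by_cases hj : j.1 = 0
  · have hj' : j = ⟨0, hn⟩ := Fin.ext (by simpa using hj)
    rw [hj', hrow k]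
    simp [oneOplus, e0]
  · by_cases hk : k.1 = 0
    · have hk' : k = ⟨0, hn⟩ := Fin.ext (by simpa using hk)
      rw [hk', hcol j]
      simp [oneOplus, e0, hj]
    · simp only [oneOplus, Matrix.of_apply, hj, hk, if_false, dif_neg]
      exact Y_apply_eq Y _ _ j k (show j.1 - 1 + 1 = j.1 by omega) (show k.1 - 1 + 1 = k.1 by omega)

end XUAux



/-- The map `V ↦ F_n (1 ⊕ V) F_n†` is a bijection from `U(n-1)` onto `XU(n)`,
the set of `n × n` unitary matrices with all line sums equal to `1`, and it is
multiplicative; hence `XU(n)` is a group isomorphic to `U(n-1)`. -/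
theorem xu_group_iso_unitary (n : ℕ) (hn : 2 ≤ n) :
    (∀ V ∈ Matrix.unitaryGroup (Fin (n - 1)) ℂ,
      fourierMat n * oneOplus V * (fourierMat n)ᴴ ∈ Matrix.unitaryGroup (Fin n) ℂ ∧
      (∀ j, ∑ k, (fourierMat n * oneOplus V * (fourierMat n)ᴴ) j k = 1) ∧
      (∀ k, ∑ j, (fourierMat n * oneOplus V * (fourierMat n)ᴴ) j k = 1)) ∧
    (∀ V ∈ Matrix.unitaryGroup (Fin (n - 1)) ℂ,
      ∀ W ∈ Matrix.unitaryGroup (Fin (n - 1)) ℂ,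
        fourierMat n * oneOplus V * (fourierMat n)ᴴ =
          fourierMat n * oneOplus W * (fourierMat n)ᴴ → V = W) ∧
    (∀ X : Matrix (Fin n) (Fin n) ℂ,
      X ∈ Matrix.unitaryGroup (Fin n) ℂ →
      (∀ j, ∑ k, X j k = 1) → (∀ k, ∑ j, X j k = 1) →
      ∃ V ∈ Matrix.unitaryGroup (Fin (n - 1)) ℂ,
        X = fourierMat n * oneOplus V * (fourierMat n)ᴴ) ∧
    (∀ V ∈ Matrix.unitaryGroup (Fin (n - 1)) ℂ,
      ∀ W ∈ Matrix.unitaryGroup (Fin (n - 1)) ℂ,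
        fourierMat n * oneOplus (V * W) * (fourierMat n)ᴴ =
          (fourierMat n * oneOplus V * (fourierMat n)ᴴ) *
            (fourierMat n * oneOplus W * (fourierMat n)ᴴ)) := by
  have hn0 : 0 < n := by omega
  have hFFH : fourierMat n * (fourierMat n)ᴴ = 1 := XUAux.F_mul_FH n hn0
  have hFHF : (fourierMat n)ᴴ * fourierMat n = 1 := XUAux.FH_mul_F n hn0
  have hFmem : fourierMat n ∈ Matrix.unitaryGroup (Fin n) ℂ :=
    Matrix.mem_unitaryGroup_iff.2 (by rw [Matrix.star_eq_conjTranspose]; exact hFFH)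
  have hFHmem : (fourierMat n)ᴴ ∈ Matrix.unitaryGroup (Fin n) ℂ := by
    rw [← Matrix.star_eq_conjTranspose]; exact Unitary.star_mem hFmem
  have hsqrt := XUAux.sqrt_ne n hn0
  have hsq := XUAux.hsq n
  have hscal : (((Real.sqrt n : ℝ):ℂ))⁻¹ * ((n:ℂ) / ((Real.sqrt n : ℝ):ℂ)) = 1 := by
    field_simp
    linear_combination (-1 : ℂ) * hsq
  have hscal' : ((n:ℂ) / ((Real.sqrt n : ℝ):ℂ)) * (((Real.sqrt n : ℝ):ℂ))⁻¹ = 1 := by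
    rw [mul_comm]; exact hscal
  refine ⟨?_, ?_, ?_, ?_⟩
  · -- forward: membership and line sums
    intro V hV
    refine ⟨mul_mem (mul_mem hFmem ((XUAux.oneOplus_mem_iff hn0 V).2 hV)) hFHmem, ?_, ?_⟩
    · intro j
      have hv : (fourierMat n * oneOplus V * (fourierMat n)ᴴ) *ᵥ (fun _ => (1:ℂ)) =
          fun _ => 1 := by
        rw [← Matrix.mulVec_mulVec, ← Matrix.mulVec_mulVec, XUAux.FH_mulVec_one n hn0,
          Matrix.mulVec_smul, XUAux.oneOplus_mulVec_e0 hn0, Matrix.mulVec_smul,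
          XUAux.F_mulVec_e0 n hn0, smul_smul, hscal', one_smul]
      have := congrFun hv j
      simpa [Matrix.mulVec, dotProduct] using this
    · intro k
      have hv : (fun _ => (1:ℂ)) ᵥ* (fourierMat n * oneOplus V * (fourierMat n)ᴴ) =
          fun _ => 1 := by
        rw [← Matrix.vecMul_vecMul, ← Matrix.vecMul_vecMul, XUAux.one_vecMul_F n hn0,
          Matrix.smul_vecMul, XUAux.e0_vecMul_oneOplus hn0, Matrix.smul_vecMul,
          XUAux.e0_vecMul_FH n hn0, smul_smul, hscal', one_smul]
      have := congrFun hv k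
      simpa [Matrix.vecMul, dotProduct] using this
  · -- injectivity
    intro V hV W hW h
    have red : ∀ A : Matrix (Fin n) (Fin n) ℂ,
        (fourierMat n)ᴴ * (fourierMat n * A * (fourierMat n)ᴴ) * fourierMat n = A := by
      intro A
      calc (fourierMat n)ᴴ * (fourierMat n * A * (fourierMat n)ᴴ) * fourierMat n
          = ((fourierMat n)ᴴ * fourierMat n) * A * ((fourierMat n)ᴴ * fourierMat n) := by
            simp only [Matrix.mul_assoc]
        _ = A := by rw [hFHF, Matrix.one_mul, Matrix.mul_one]
    have h2 : oneOplus V = oneOplus (n := n) W := by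
      rw [← red (oneOplus V), ← red (oneOplus W), h]
    exact XUAux.oneOplus_inj h2
  · -- surjectivity
    intro X hX hrow hcol
    have hXones : X *ᵥ (fun _ => (1:ℂ)) = fun _ => 1 := by
      funext j; simpa [Matrix.mulVec, dotProduct] using hrow j
    have honesX : (fun _ => (1:ℂ)) ᵥ* X = fun _ => 1 := by
      funext k; simpa [Matrix.vecMul, dotProduct] using hcol k
    have hYmem : (fourierMat n)ᴴ * X * fourierMat n ∈ Matrix.unitaryGroup (Fin n) ℂ :=
      mul_mem (mul_mem hFHmem hX) hFmem
    have hYe0 : ((fourierMat n)ᴴ * X * fourierMat n) *ᵥ XUAux.e0 n = XUAux.e0 n := by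
      rw [← Matrix.mulVec_mulVec, ← Matrix.mulVec_mulVec, XUAux.F_mulVec_e0 n hn0,
        Matrix.mulVec_smul, hXones, Matrix.mulVec_smul, XUAux.FH_mulVec_one n hn0,
        smul_smul, hscal, one_smul]
    have he0Y : XUAux.e0 n ᵥ* ((fourierMat n)ᴴ * X * fourierMat n) = XUAux.e0 n := by
      rw [← Matrix.vecMul_vecMul, ← Matrix.vecMul_vecMul, XUAux.e0_vecMul_FH n hn0,
        Matrix.smul_vecMul, honesX, Matrix.smul_vecMul, XUAux.one_vecMul_F n hn0,
        smul_smul, hscal, one_smul]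
    rw [XUAux.mulVec_e0 hn0] at hYe0
    rw [XUAux.e0_vecMul hn0] at he0Y
    set Y := (fourierMat n)ᴴ * X * fourierMat n with hYdef
    have hOV := XUAux.oneOplus_eq_of n hn0 Y (fun k => congrFun he0Y k)
      (fun j => congrFun hYe0 j)
    refine ⟨_, (XUAux.oneOplus_mem_iff hn0 _).1 (by rw [hOV]; exact hYmem), ?_⟩
    rw [hOV, hYdef]
    calc X = (fourierMat n * (fourierMat n)ᴴ) * X * (fourierMat n * (fourierMat n)ᴴ) := by
          rw [hFFH, Matrix.one_mul, Matrix.mul_one]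
      _ = fourierMat n * ((fourierMat n)ᴴ * X * fourierMat n) * (fourierMat n)ᴴ := by
          simp only [Matrix.mul_assoc]
  · -- multiplicativity
    intro V hV W hW
    rw [← XUAux.oneOplus_mul hn0]
    calc fourierMat n * (oneOplus V * oneOplus W) * (fourierMat n)ᴴ
        = fourierMat n * (oneOplus V * (((fourierMat n)ᴴ * fourierMat n) *
            (oneOplus W * (fourierMat n)ᴴ))) := by
          rw [hFHF, Matrix.one_mul]; simp only [Matrix.mul_assoc]
      _ = (fourierMat n * oneOplus V * (fourierMat n)ᴴ) *
            (fourierMat n * oneOplus W * (fourierMat n)ᴴ) := by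
          simp only [Matrix.mul_assoc]
end

section
/- Let n ≥ 2, let X be an n×n unitary complex matrix all of whose row sums and column sums equal 1, and let τ be any permutation of {0,…,n−1}. Let U^(s) be the (n−1)×(n−1) lower-right block of F_n† X F_n. Define, for each permutation σ of {0,…,n−1}, the coefficient c_σ = δ_{στ} − ((n−1)/n!)·(Tr(P_{σ⁻¹τ}) − 1) + ((n−1)/n!)·Tr(D^(s)(σ⁻¹) U^(s)). Then X = Σ_σ c_σ P_σ, Σ_σ c_σ = 1, and Σ_σ |c_σ|² = 1. -/
open scoped Matrix

/-- The standard representation of `S_n`: the lower-right `(n-1) × (n-1)` block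
of `F_n† P_σ F_n`. -/
noncomputable def stdRep (n : ℕ) (σ : Equiv.Perm (Fin n)) :
    Matrix (Fin (n - 1)) (Fin (n - 1)) ℂ :=
  lowerRightBlock ((fourierMat n)ᴴ * permMat n σ * fourierMat n)


section Helpers
open Finset Complex

lemma sum_perm_zero {m : ℕ} (f : Fin (m + 1) → ℂ) :
    ∑ σ : Equiv.Perm (Fin (m + 1)), f (σ 0) = (m.factorial : ℂ) * ∑ i, f i := by
  rw [Fintype.sum_equiv Equiv.Perm.decomposeFin (fun σ => f (σ 0))
      (fun p => f ((Equiv.Perm.decomposeFin.symm p) 0))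
      (fun σ => by simp)]
  rw [Fintype.sum_prod_type]
  simp only [Equiv.Perm.decomposeFin_symm_apply_zero]
  simp [Finset.sum_const, Fintype.card_perm, Finset.mul_sum, mul_comm]

lemma sum_perm_apply {m : ℕ} (b : Fin (m + 1)) (f : Fin (m + 1) → ℂ) :
    ∑ σ : Equiv.Perm (Fin (m + 1)), f (σ b) = (m.factorial : ℂ) * ∑ i, f i := by
  rw [← sum_perm_zero f]
  exact Fintype.sum_equiv (Equiv.mulRight (Equiv.swap b 0))
    (fun σ => f (σ b)) (fun σ => f (σ 0))
    (fun σ => by simp [Equiv.Perm.mul_apply, Equiv.swap_apply_right])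

lemma sum_perm_pair01 {m : ℕ} (g : Fin (m + 2) → Fin (m + 2) → ℂ) :
    ∑ σ : Equiv.Perm (Fin (m + 2)), g (σ 0) (σ 1)
      = (m.factorial : ℂ) * ∑ p, ∑ l ∈ Finset.univ.erase p, g p l := by
  rw [Fintype.sum_equiv Equiv.Perm.decomposeFin (fun σ => g (σ 0) (σ 1))
      (fun q => g ((Equiv.Perm.decomposeFin.symm q) 0) ((Equiv.Perm.decomposeFin.symm q) 1))
      (fun σ => by simp)]
  rw [Fintype.sum_prod_type]
  simp only [Equiv.Perm.decomposeFin_symm_apply_zero, Equiv.Perm.decomposeFin_symm_apply_one]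
  rw [Finset.mul_sum]
  refine Finset.sum_congr rfl fun p _ => ?_
  rw [sum_perm_zero (fun x => g p ((Equiv.swap 0 p) x.succ))]
  congr 1
  have h1 : ∑ y : Fin (m + 2), g p ((Equiv.swap 0 p) y) = ∑ y : Fin (m + 2), g p y :=
    Equiv.sum_comp (Equiv.swap 0 p) (fun y => g p y)
  rw [Fin.sum_univ_succ] at h1
  rw [Equiv.swap_apply_left] at h1
  have h2 : g p p + ∑ l ∈ Finset.univ.erase p, g p l = ∑ y : Fin (m + 2), g p y :=
    Finset.add_sum_erase _ _ (Finset.mem_univ p)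
  exact add_left_cancel (h1.trans h2.symm)

lemma sum_perm_pair {m : ℕ} (b k : Fin (m + 2)) (hbk : b ≠ k) (g : Fin (m + 2) → Fin (m + 2) → ℂ) :
    ∑ σ : Equiv.Perm (Fin (m + 2)), g (σ b) (σ k)
      = (m.factorial : ℂ) * ∑ p, ∑ l ∈ Finset.univ.erase p, g p l := by
  rw [← sum_perm_pair01 g]
  have hb : Equiv.swap (0 : Fin (m+2)) b b = 0 := Equiv.swap_apply_right 0 b
  set k' : Fin (m + 2) := Equiv.swap (0 : Fin (m+2)) b k with hk'
  have hk'0 : k' ≠ 0 := by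
    intro h
    apply hbk
    have : Equiv.swap (0 : Fin (m+2)) b k = Equiv.swap (0 : Fin (m+2)) b b := by rw [← hk', h, hb]
    exact ((Equiv.swap (0 : Fin (m+2)) b).injective this).symm ▸ rfl
  have h01 : (0 : Fin (m + 2)) ≠ 1 := by simp [Fin.ext_iff]
  have h20 : Equiv.swap (1 : Fin (m+2)) k' 0 = 0 :=
    Equiv.swap_apply_of_ne_of_ne h01 (Ne.symm hk'0)
  have h21 : Equiv.swap (1 : Fin (m+2)) k' k' = 1 := Equiv.swap_apply_right 1 k'
  exact (Fintype.sum_equiv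
    (Equiv.mulRight (Equiv.swap (1 : Fin (m+2)) k' * Equiv.swap (0 : Fin (m+2)) b))
    (fun σ => g (σ 0) (σ 1)) (fun σ => g (σ b) (σ k))
    (fun σ => by
      simp only [Equiv.coe_mulRight, Equiv.Perm.mul_apply]
      rw [hb, ← hk', h20, h21])).symm

variable {m : ℕ} (M N : Matrix (Fin (m+2)) (Fin (m+2)) ℂ)

lemma comb_II (hc : ∀ j, ∑ i, M i j = 0) :
    ∑ σ : Equiv.Perm (Fin (m+2)), (∑ j, M (σ j) j) = 0 := by
  rw [Finset.sum_comm]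
  have : ∀ j : Fin (m+2), ∑ σ : Equiv.Perm (Fin (m+2)), M (σ j) j = 0 := by
    intro j
    rw [sum_perm_apply j (fun i => M i j), hc j, mul_zero]
  simp [this]

lemma erase_sum_eq (hc : ∀ j, ∑ i, N i j = 0) (p : Fin (m+2)) (k : Fin (m+2)) :
    ∑ l ∈ Finset.univ.erase p, N l k = - N p k := by
  have := Finset.add_sum_erase Finset.univ (fun l => N l k) (Finset.mem_univ p)
  rw [hc k] at this
  linear_combination this

lemma comb_I (hr : ∀ i, ∑ j, M i j = 0) (hc : ∀ j, ∑ i, M i j = 0) (a b : Fin (m+2)) :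
    ∑ σ : Equiv.Perm (Fin (m+2)), (if a = σ b then (1:ℂ) else 0) * (∑ j, M (σ j) j)
      = ((m+2 : ℕ) : ℂ) * (m.factorial : ℂ) * M a b := by
  have expand : ∀ σ : Equiv.Perm (Fin (m+2)),
      (if a = σ b then (1:ℂ) else 0) * (∑ j, M (σ j) j)
        = ∑ j, (if a = σ b then (1:ℂ) else 0) * M (σ j) j := fun σ => Finset.mul_sum _ _ _
  rw [Finset.sum_congr rfl (fun σ _ => expand σ), Finset.sum_comm]
  rw [← Finset.add_sum_erase Finset.univ _ (Finset.mem_univ b)]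
  have t1 : ∑ σ : Equiv.Perm (Fin (m+2)), (if a = σ b then (1:ℂ) else 0) * M (σ b) b
      = ((m+1).factorial : ℂ) * M a b := by
    rw [sum_perm_apply b (fun x => (if a = x then (1:ℂ) else 0) * M x b)]
    simp [Finset.sum_ite_eq, ite_mul]
  have t2 : ∀ j ∈ Finset.univ.erase b,
      ∑ σ : Equiv.Perm (Fin (m+2)), (if a = σ b then (1:ℂ) else 0) * M (σ j) j
        = - ((m.factorial : ℂ) * M a j) := by
    intro j hj
    have hbj : b ≠ j := (Finset.ne_of_mem_erase hj).symm
    rw [sum_perm_pair b j hbj (fun x y => (if a = x then (1:ℂ) else 0) * M y j)]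
    have : ∀ p : Fin (m+2), ∑ l ∈ Finset.univ.erase p, (if a = p then (1:ℂ) else 0) * M l j
        = (if a = p then (1:ℂ) else 0) * (- M p j) := by
      intro p
      rw [← Finset.mul_sum, erase_sum_eq M hc]
    rw [Finset.sum_congr rfl (fun p _ => this p)]
    simp [Finset.sum_ite_eq, ite_mul]
  rw [Finset.sum_congr rfl t2, t1]
  have t3 : ∑ j ∈ Finset.univ.erase b, -((m.factorial : ℂ) * M a j)
      = (m.factorial : ℂ) * M a b := by
    have h4 : ∑ j ∈ Finset.univ.erase b, M a j = - M a b := by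
      have := Finset.add_sum_erase Finset.univ (fun j => M a j) (Finset.mem_univ b)
      rw [hr a] at this
      linear_combination this
    rw [Finset.sum_neg_distrib, ← Finset.mul_sum, h4]
    ring
  rw [t3, Nat.factorial_succ]
  push_cast
  ring

lemma comb_III (hrM : ∀ i, ∑ j, M i j = 0) (hcM : ∀ j, ∑ i, M i j = 0)
    (hrN : ∀ i, ∑ j, N i j = 0) (hcN : ∀ j, ∑ i, N i j = 0) :
    ∑ σ : Equiv.Perm (Fin (m+2)), (∑ j, M (σ j) j) * (∑ k, N (σ k) k)
      = ((m+2 : ℕ) : ℂ) * (m.factorial : ℂ) * ∑ i, ∑ j, M i j * N i j := by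
  have expand : ∀ σ : Equiv.Perm (Fin (m+2)),
      (∑ j, M (σ j) j) * (∑ k, N (σ k) k) = ∑ j, ∑ k, M (σ j) j * N (σ k) k := by
    intro σ
    rw [Finset.sum_mul_sum]
  rw [Finset.sum_congr rfl (fun σ _ => expand σ), Finset.sum_comm]
  have inner : ∀ j : Fin (m+2),
      ∑ σ : Equiv.Perm (Fin (m+2)), ∑ k, M (σ j) j * N (σ k) k
        = ((m+2 : ℕ) : ℂ) * (m.factorial : ℂ) * ∑ i, M i j * N i j := by
    intro j
    rw [Finset.sum_comm, ← Finset.add_sum_erase Finset.univ _ (Finset.mem_univ j)]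
    have u1 : ∑ σ : Equiv.Perm (Fin (m+2)), M (σ j) j * N (σ j) j
        = ((m+1).factorial : ℂ) * ∑ i, M i j * N i j :=
      sum_perm_apply j (fun x => M x j * N x j)
    have u2 : ∀ k ∈ Finset.univ.erase j,
        ∑ σ : Equiv.Perm (Fin (m+2)), M (σ j) j * N (σ k) k
          = - ((m.factorial : ℂ) * ∑ p, M p j * N p k) := by
      intro k hk
      have hjk : j ≠ k := (Finset.ne_of_mem_erase hk).symm
      rw [sum_perm_pair j k hjk (fun x y => M x j * N y k)]
      have : ∀ p : Fin (m+2), ∑ l ∈ Finset.univ.erase p, M p j * N l k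
          = M p j * (- N p k) := by
        intro p
        rw [← Finset.mul_sum, erase_sum_eq N hcN]
      rw [Finset.sum_congr rfl (fun p _ => this p)]
      simp only [mul_neg, Finset.sum_neg_distrib]
    rw [Finset.sum_congr rfl u2, u1]
    have u3 : ∑ k ∈ Finset.univ.erase j, -((m.factorial : ℂ) * ∑ p, M p j * N p k)
        = (m.factorial : ℂ) * ∑ p, M p j * N p j := by
      rw [Finset.sum_neg_distrib, ← Finset.mul_sum, Finset.sum_comm]
      have h4 : ∀ p : Fin (m+2), ∑ k ∈ Finset.univ.erase j, M p j * N p k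
          = M p j * (- N p j) := by
        intro p
        rw [← Finset.mul_sum]
        congr 1
        have := Finset.add_sum_erase Finset.univ (fun k => N p k) (Finset.mem_univ j)
        rw [hrN p] at this
        linear_combination this
      rw [Finset.sum_congr rfl (fun p _ => h4 p)]
      simp only [mul_neg, Finset.sum_neg_distrib]
      ring
    rw [u3, Nat.factorial_succ]
    push_cast
    ring
  rw [Finset.sum_congr rfl (fun j _ => inner j), ← Finset.mul_sum, Finset.sum_comm]

lemma dvd_helper {n j k : ℕ} (hn : 1 ≤ n) (hj : j < n) (hk : k < n) :
    n ∣ ((n - 1) * j + k) ↔ j = k := by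
  constructor
  · intro h
    have h1 : (n : ℤ) ∣ (((n - 1) * j + k : ℕ) : ℤ) := Int.natCast_dvd_natCast.2 h
    have h2 : (((n - 1) * j + k : ℕ) : ℤ) = ((n : ℤ) - 1) * j + k := by
      push_cast [Nat.cast_sub hn]; ring
    rw [h2] at h1
    have h3 : (n : ℤ) ∣ ((k : ℤ) - j) := by
      have : ((n : ℤ) - 1) * j + k - ((k:ℤ) - j) = n * j := by ring
      have h4 : (n : ℤ) ∣ (((n : ℤ) - 1) * j + k - ((n:ℤ) * j)) := by
        exact dvd_sub h1 ⟨j, rfl⟩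
      have h5 : ((n : ℤ) - 1) * j + k - ((n:ℤ) * j) = (k : ℤ) - j := by ring
      rwa [h5] at h4
    have h6 : ((k : ℤ) - j) = 0 := by
      refine Int.eq_zero_of_dvd_of_natAbs_lt_natAbs h3 ?_
      have := Int.natAbs_sub_le (k : ℤ) (j : ℤ)
      simp only [Int.natAbs_natCast]
      omega
    omega
  · rintro rfl
    exact ⟨j, by cases n with | zero => omega | succ p => simp [Nat.succ_sub_one]; ring⟩

lemma rootSum (n : ℕ) (hn : n ≠ 0) (m : ℕ) :
    ∑ a : Fin n, Complex.exp (2 * Real.pi * Complex.I / n) ^ ((a : ℕ) * m)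
      = if n ∣ m then (n : ℂ) else 0 := by
  have hprim := Complex.isPrimitiveRoot_exp n hn
  set ω := Complex.exp (2 * Real.pi * Complex.I / n) with hω
  have : ∀ a : Fin n, ω ^ ((a:ℕ) * m) = (ω ^ m) ^ (a:ℕ) := by
    intro a; rw [← pow_mul, Nat.mul_comm]
  rw [Finset.sum_congr rfl (fun a _ => this a)]
  rw [Fin.sum_univ_eq_sum_range (fun a => (ω ^ m) ^ a) n]
  by_cases hdvd : n ∣ m
  · rw [if_pos hdvd, (hprim.pow_eq_one_iff_dvd m).2 hdvd]
    simp
  · rw [if_neg hdvd]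
    have hne : ω ^ m ≠ 1 := fun h => hdvd ((hprim.pow_eq_one_iff_dvd m).1 h)
    rw [geom_sum_eq hne n, ← pow_mul, Nat.mul_comm, pow_mul, hprim.pow_eq_one]
    simp

lemma conj_omega_pow (n : ℕ) (hn : n ≠ 0) (m : ℕ) :
    (starRingEnd ℂ) (Complex.exp (2 * Real.pi * Complex.I / n) ^ m)
      = Complex.exp (2 * Real.pi * Complex.I / n) ^ (m * (n - 1)) := by
  set ω := Complex.exp (2 * Real.pi * Complex.I / n) with hω
  have hprim := Complex.isPrimitiveRoot_exp n hn
  have habs : ‖ω‖ = 1 := by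
    rw [hω, Complex.norm_exp]
    have : (2 * Real.pi * Complex.I / n).re = 0 := by
      simp [Complex.div_re]
    rw [this, Real.exp_zero]
  have h1 : ω ^ m * (starRingEnd ℂ) (ω ^ m) = 1 := by
    rw [Complex.mul_conj, ← Complex.sq_norm, norm_pow, habs]
    simp
  have h2 : ω ^ m * ω ^ (m * (n - 1)) = 1 := by
    rw [← pow_add]
    have : m + m * (n - 1) = n * m := by cases n with | zero => omega | succ p => simp [Nat.succ_sub_one]; ring
    rw [this, pow_mul, hprim.pow_eq_one, one_pow]
  have hne : ω ^ m ≠ 0 := pow_ne_zero _ (Complex.exp_ne_zero _)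
  have := mul_left_cancel₀ hne (h1.trans h2.symm)
  rw [map_pow] at this
  rw [map_pow]
  exact this

lemma fourierMat_apply (n : ℕ) (j k : Fin n) :
    fourierMat n j k = Complex.exp (2 * Real.pi * Complex.I / n) ^ ((j : ℕ) * (k : ℕ))
      / (Real.sqrt n : ℂ) := by
  unfold fourierMat
  simp only [Matrix.of_apply]
  congr 1
  rw [← Complex.exp_nat_mul]
  congr 1
  push_cast
  ring

lemma sqrt_mul_self_c (n : ℕ) : (Real.sqrt n : ℂ) * (Real.sqrt n : ℂ) = (n : ℂ) := by
  rw [← Complex.ofReal_mul, Real.mul_self_sqrt (Nat.cast_nonneg n)]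
  simp

lemma sqrt_ne_zero_c {n : ℕ} (hn : n ≠ 0) : (Real.sqrt n : ℂ) ≠ 0 := by
  simp only [ne_eq, Complex.ofReal_eq_zero]
  intro h
  have := Real.sqrt_eq_zero (Nat.cast_nonneg n) |>.1 h
  simp at this
  omega

lemma fourier_unitary₁ (n : ℕ) (hn : n ≠ 0) : (fourierMat n)ᴴ * fourierMat n = 1 := by
  ext j k
  rw [Matrix.mul_apply, Matrix.one_apply]
  set ω := Complex.exp (2 * Real.pi * Complex.I / n) with hω
  have step : ∀ a : Fin n, (fourierMat n)ᴴ j a * fourierMat n a k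
      = ω ^ ((a:ℕ) * ((n-1) * (j:ℕ) + (k:ℕ))) / ((Real.sqrt n : ℂ) * (Real.sqrt n : ℂ)) := by
    intro a
    rw [Matrix.conjTranspose_apply, fourierMat_apply, fourierMat_apply]
    simp only [star_div₀, star_pow, Complex.star_def, ← map_pow, Complex.conj_ofReal,
      conj_omega_pow n hn]
    rw [div_mul_div_comm, ← pow_add]
    congr 2
    ring
  rw [Finset.sum_congr rfl (fun a _ => step a), ← Finset.sum_div]
  rw [rootSum n hn _, sqrt_mul_self_c]
  have hiff : n ∣ ((n-1) * (j:ℕ) + (k:ℕ)) ↔ (j:ℕ) = (k:ℕ) :=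
    dvd_helper (by omega) j.isLt k.isLt
  by_cases hjk : j = k
  · rw [if_pos hjk, if_pos (hiff.2 (by rw [hjk]))]
    exact div_self (Nat.cast_ne_zero.mpr hn)
  · rw [if_neg hjk, if_neg (fun h => hjk (Fin.ext (hiff.1 h)))]
    exact zero_div _

lemma fourier_unitary₂ (n : ℕ) (hn : n ≠ 0) : fourierMat n * (fourierMat n)ᴴ = 1 := by
  ext j k
  rw [Matrix.mul_apply, Matrix.one_apply]
  set ω := Complex.exp (2 * Real.pi * Complex.I / n) with hω
  have step : ∀ a : Fin n, fourierMat n j a * (fourierMat n)ᴴ a k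
      = ω ^ ((a:ℕ) * ((n-1) * (k:ℕ) + (j:ℕ))) / ((Real.sqrt n : ℂ) * (Real.sqrt n : ℂ)) := by
    intro a
    rw [Matrix.conjTranspose_apply, fourierMat_apply, fourierMat_apply]
    simp only [star_div₀, star_pow, Complex.star_def, ← map_pow, Complex.conj_ofReal,
      conj_omega_pow n hn]
    rw [div_mul_div_comm, ← pow_add]
    congr 2
    ring
  rw [Finset.sum_congr rfl (fun a _ => step a), ← Finset.sum_div]
  rw [rootSum n hn _, sqrt_mul_self_c]
  have hiff : n ∣ ((n-1) * (k:ℕ) + (j:ℕ)) ↔ (k:ℕ) = (j:ℕ) :=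
    dvd_helper (by omega) k.isLt j.isLt
  by_cases hjk : j = k
  · rw [if_pos hjk, if_pos (hiff.2 (by rw [hjk]))]
    exact div_self (Nat.cast_ne_zero.mpr hn)
  · rw [if_neg hjk, if_neg (fun h => hjk (Fin.ext (hiff.1 h)).symm)]
    exact zero_div _

lemma fourier_col_sum (n : ℕ) [NeZero n] (hn : n ≠ 0) (k : Fin n) :
    ∑ j, fourierMat n j k = if k = 0 then (Real.sqrt n : ℂ) else 0 := by
  have step : ∀ j : Fin n, fourierMat n j k
      = Complex.exp (2 * Real.pi * Complex.I / n) ^ ((j:ℕ) * (k:ℕ)) / (Real.sqrt n : ℂ) :=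
    fun j => fourierMat_apply n j k
  rw [Finset.sum_congr rfl (fun j _ => step j), ← Finset.sum_div, rootSum n hn]
  have hiff : n ∣ (k : ℕ) ↔ k = 0 := by
    constructor
    · intro h
      exact Fin.ext (by simpa using Nat.eq_zero_of_dvd_of_lt h k.isLt)
    · intro h; rw [h]; simp
  by_cases hk : k = 0
  · rw [if_pos hk, if_pos (hiff.2 hk)]
    rw [← sqrt_mul_self_c n]
    field_simp
  · rw [if_neg hk, if_neg (fun h => hk (hiff.1 h))]
    simp

lemma fourier_zero_col (n : ℕ) [NeZero n] (a : Fin n) : fourierMat n a 0 = 1 / (Real.sqrt n : ℂ) := by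
  rw [fourierMat_apply]
  simp [Fin.val_zero]

lemma fourier_zero_row (n : ℕ) [NeZero n] (a : Fin n) :
    fourierMat n 0 a = 1 / (Real.sqrt n : ℂ) := by
  rw [fourierMat_apply]
  simp [Fin.val_zero]

lemma key_entry_row (n : ℕ) [NeZero n] (A : Matrix (Fin n) (Fin n) ℂ)
    (hcolA : ∀ b, ∑ a, A a b = 1) (k : Fin n) :
    ((fourierMat n)ᴴ * A * fourierMat n) 0 k = if k = 0 then 1 else 0 := by
  have hn : n ≠ 0 := NeZero.ne n
  rw [Matrix.mul_apply]
  have step : ∀ b : Fin n, ((fourierMat n)ᴴ * A) 0 b * fourierMat n b k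
      = (1 / (Real.sqrt n : ℂ)) * fourierMat n b k := by
    intro b
    congr 1
    rw [Matrix.mul_apply]
    have : ∀ a : Fin n, (fourierMat n)ᴴ 0 a * A a b = (1 / (Real.sqrt n : ℂ)) * A a b := by
      intro a
      rw [Matrix.conjTranspose_apply, fourier_zero_col]
      congr 1
      simp [Complex.star_def, map_div₀, Complex.conj_ofReal]
    rw [Finset.sum_congr rfl (fun a _ => this a), ← Finset.mul_sum, hcolA b, mul_one]
  rw [Finset.sum_congr rfl (fun b _ => step b), ← Finset.mul_sum, fourier_col_sum n hn k]
  by_cases hk : k = 0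
  · rw [if_pos hk, if_pos hk, one_div, inv_mul_cancel₀ (sqrt_ne_zero_c hn)]
  · rw [if_neg hk, if_neg hk, mul_zero]

lemma key_entry_col (n : ℕ) [NeZero n] (A : Matrix (Fin n) (Fin n) ℂ)
    (hrowA : ∀ a, ∑ b, A a b = 1) (j : Fin n) :
    ((fourierMat n)ᴴ * A * fourierMat n) j 0 = if j = 0 then 1 else 0 := by
  have hn : n ≠ 0 := NeZero.ne n
  rw [Matrix.mul_apply]
  have step : ∀ b : Fin n, ((fourierMat n)ᴴ * A) j b * fourierMat n b 0
      = ((fourierMat n)ᴴ * A) j b * (1 / (Real.sqrt n : ℂ)) := by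
    intro b
    rw [fourier_zero_col]
  rw [Finset.sum_congr rfl (fun b _ => step b), ← Finset.sum_mul]
  have expand : ∑ b, ((fourierMat n)ᴴ * A) j b
      = ∑ a, (fourierMat n)ᴴ j a := by
    have : ∀ b, ((fourierMat n)ᴴ * A) j b = ∑ a, (fourierMat n)ᴴ j a * A a b :=
      fun b => Matrix.mul_apply
    rw [Finset.sum_congr rfl (fun b _ => this b), Finset.sum_comm]
    refine Finset.sum_congr rfl fun a _ => ?_
    rw [← Finset.mul_sum, hrowA a, mul_one]
  rw [expand]
  have conjsum : ∑ a, (fourierMat n)ᴴ j a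
      = (starRingEnd ℂ) (∑ a, fourierMat n a j) := by
    rw [map_sum]
    exact Finset.sum_congr rfl fun a _ => by rw [Matrix.conjTranspose_apply, Complex.star_def]
  rw [conjsum, fourier_col_sum n hn j]
  by_cases hj : j = 0
  · rw [if_pos hj, if_pos hj, Complex.conj_ofReal, one_div,
      mul_inv_cancel₀ (sqrt_ne_zero_c hn)]
  · rw [if_neg hj, if_neg hj, map_zero, zero_mul]

lemma permMat_row_sum (n : ℕ) (σ : Equiv.Perm (Fin n)) (j : Fin n) :
    ∑ k, permMat n σ j k = 1 := by
  unfold permMat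
  simp only [Matrix.of_apply]
  rw [← Equiv.sum_comp σ.symm (fun k => if j = σ k then (1:ℂ) else 0)]
  simp

lemma permMat_col_sum (n : ℕ) (σ : Equiv.Perm (Fin n)) (k : Fin n) :
    ∑ j, permMat n σ j k = 1 := by
  unfold permMat
  simp

lemma trace_lrb {m : ℕ} (A B : Matrix (Fin (m+2)) (Fin (m+2)) ℂ)
    (hA0 : ∀ k, A 0 k = if k = 0 then 1 else 0)
    (hA0' : ∀ j, A j 0 = if j = 0 then 1 else 0)
    (hB : B 0 0 = 1) :
    (lowerRightBlock A * lowerRightBlock B).trace = (A * B).trace - 1 := by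
  have lrb_eq : ∀ (C : Matrix (Fin (m+2)) (Fin (m+2)) ℂ) (i j : Fin (m+1)),
      lowerRightBlock C i j = C i.succ j.succ := fun _ _ _ => rfl
  have expand2 : (A * B).trace = ∑ j, ∑ k, A j k * B k j := by
    rw [Matrix.trace]
    exact Finset.sum_congr rfl fun j _ => Matrix.mul_apply
  have expand1 : (lowerRightBlock A * lowerRightBlock B).trace
      = ∑ j : Fin (m+1), ∑ k : Fin (m+1), A j.succ k.succ * B k.succ j.succ := by
    rw [Matrix.trace]
    refine Finset.sum_congr rfl fun j _ => ?_
    rw [Matrix.diag, Matrix.mul_apply]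
    exact Finset.sum_congr rfl fun k _ => by rw [lrb_eq, lrb_eq]
  rw [expand1, expand2]
  rw [Fin.sum_univ_succ (f := fun j : Fin (m+2) => ∑ k, A j k * B k j)]
  have first : ∑ k, A 0 k * B k 0 = 1 := by
    have : ∀ k, A 0 k * B k 0 = if k = 0 then B k 0 else 0 := by
      intro k
      rw [hA0]
      by_cases hk : k = 0 <;> simp [hk]
    rw [Finset.sum_congr rfl (fun k _ => this k)]
    simp [hB]
  rw [first]
  have second : ∀ j : Fin (m+1), ∑ k, A j.succ k * B k j.succ
      = ∑ k : Fin (m+1), A j.succ k.succ * B k.succ j.succ := by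
    intro j
    rw [Fin.sum_univ_succ]
    have : A j.succ 0 = 0 := by
      rw [hA0']
      simp [Fin.succ_ne_zero]
    rw [this, zero_mul, zero_add]
  rw [Finset.sum_congr rfl (fun j _ => second j)]
  ring

lemma trace_PX {n : ℕ} (σ : Equiv.Perm (Fin n)) (X : Matrix (Fin n) (Fin n) ℂ) :
    (permMat n σ⁻¹ * X).trace = ∑ j, X (σ j) j := by
  rw [Matrix.trace]
  refine Finset.sum_congr rfl fun j _ => ?_
  rw [Matrix.diag, Matrix.mul_apply]
  have : ∀ k, permMat n σ⁻¹ j k * X k j = (if σ j = k then 1 else 0) * X k j := by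
    intro k
    unfold permMat
    simp only [Matrix.of_apply]
    congr 1
    by_cases h : σ j = k
    · rw [if_pos h, if_pos (by rw [← h]; exact (Equiv.symm_apply_apply σ j).symm)]
    · rw [if_neg h, if_neg (fun hh => h (by rw [hh]; exact Equiv.apply_symm_apply σ k))]
  rw [Finset.sum_congr rfl (fun k _ => this k)]
  simp [ite_mul]

lemma trace_permMat {n : ℕ} (σ τ : Equiv.Perm (Fin n)) :
    (permMat n (σ⁻¹ * τ)).trace = ∑ j, (if σ j = τ j then (1:ℂ) else 0) := by
  rw [Matrix.trace]
  refine Finset.sum_congr rfl fun j _ => ?_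
  unfold permMat
  simp only [Matrix.diag, Matrix.of_apply, Equiv.Perm.mul_apply]
  by_cases h : σ j = τ j
  · rw [if_pos h]; exact if_pos (by rw [← h]; exact (Equiv.symm_apply_apply σ j).symm)
  · rw [if_neg h]; exact if_neg
      (fun hh => h ((congrArg σ hh).trans (Equiv.apply_symm_apply σ (τ j))))

end Helpers

/-- Explicit Birkhoff decomposition of `X ∈ XU(n)`: for any permutation `τ`, the
coefficients `c_σ = δ_{στ} − ((n−1)/n!)(Tr P_{σ⁻¹τ} − 1) + ((n−1)/n!) Tr(D⁽ˢ⁾(σ⁻¹) U⁽ˢ⁾)`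
satisfy `X = Σ_σ c_σ P_σ`, `Σ_σ c_σ = 1` and `Σ_σ |c_σ|² = 1`, where `U⁽ˢ⁾` is the
lower-right block of `F_n† X F_n`. -/
theorem explicit_birkhoff (n : ℕ) (hn : 2 ≤ n) (X : Matrix (Fin n) (Fin n) ℂ)
    (hX : X ∈ Matrix.unitaryGroup (Fin n) ℂ)
    (hrow : ∀ j, ∑ k, X j k = 1) (hcol : ∀ k, ∑ j, X j k = 1)
    (τ : Equiv.Perm (Fin n))
    (Us : Matrix (Fin (n - 1)) (Fin (n - 1)) ℂ)
    (hUs : Us = lowerRightBlock ((fourierMat n)ᴴ * X * fourierMat n))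
    (c : Equiv.Perm (Fin n) → ℂ)
    (hc : ∀ σ : Equiv.Perm (Fin n),
      c σ = (if σ = τ then 1 else 0)
        - ((n : ℂ) - 1) / (n.factorial : ℂ) * ((permMat n (σ⁻¹ * τ)).trace - 1)
        + ((n : ℂ) - 1) / (n.factorial : ℂ) * (stdRep n σ⁻¹ * Us).trace) :
    X = ∑ σ : Equiv.Perm (Fin n), c σ • permMat n σ ∧
    ∑ σ : Equiv.Perm (Fin n), c σ = 1 ∧
    ∑ σ : Equiv.Perm (Fin n), ‖c σ‖ ^ 2 = 1 := by
  obtain ⟨m, rfl⟩ : ∃ m, n = m + 2 := ⟨n - 2, by omega⟩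
  have hn2 : (m + 2 : ℕ) ≠ 0 := by omega
  have hfact_ne : (((m+2).factorial : ℕ) : ℂ) ≠ 0 :=
    Nat.cast_ne_zero.mpr (Nat.factorial_ne_zero _)
  set r : ℂ := (((m+2:ℕ) : ℂ) - 1) / (((m+2).factorial : ℕ) : ℂ) with hr
  set P : Matrix (Fin (m+2)) (Fin (m+2)) ℂ := permMat (m+2) τ with hP
  set M : Matrix (Fin (m+2)) (Fin (m+2)) ℂ := X - P with hM
  have hMapp : ∀ i j, M i j = X i j - P i j := fun i j => rfl
  have hMrow : ∀ i, ∑ j, M i j = 0 := by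
    intro i
    simp only [hMapp]
    rw [Finset.sum_sub_distrib, hrow, hP, permMat_row_sum]
    ring
  have hMcol : ∀ j, ∑ i, M i j = 0 := by
    intro j
    simp only [hMapp]
    rw [Finset.sum_sub_distrib, hcol, hP, permMat_col_sum]
    ring
  set T : Equiv.Perm (Fin (m+2)) → ℂ := fun σ => ∑ j, M (σ j) j with hT
  have hY00 : ((fourierMat (m+2))ᴴ * X * fourierMat (m+2)) 0 0 = 1 := by
    rw [key_entry_row (m+2) X hcol 0]
    simp
  have hstd : ∀ σ : Equiv.Perm (Fin (m+2)),
      (stdRep (m+2) σ⁻¹ * Us).trace = (∑ j, X (σ j) j) - 1 := by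
    intro σ
    have h1 : stdRep (m+2) σ⁻¹
        = lowerRightBlock ((fourierMat (m+2))ᴴ * permMat (m+2) σ⁻¹ * fourierMat (m+2)) := rfl
    rw [h1, hUs, trace_lrb _ _
      (key_entry_row (m+2) (permMat (m+2) σ⁻¹) (permMat_col_sum (m+2) σ⁻¹))
      (key_entry_col (m+2) (permMat (m+2) σ⁻¹) (permMat_row_sum (m+2) σ⁻¹)) hY00]
    congr 1
    have h2 : fourierMat (m+2) * (fourierMat (m+2))ᴴ = 1 := fourier_unitary₂ _ hn2
    have h3 : ((fourierMat (m+2))ᴴ * permMat (m+2) σ⁻¹ * fourierMat (m+2))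
        * ((fourierMat (m+2))ᴴ * X * fourierMat (m+2))
        = (fourierMat (m+2))ᴴ * (permMat (m+2) σ⁻¹ * X) * fourierMat (m+2) := by
      calc ((fourierMat (m+2))ᴴ * permMat (m+2) σ⁻¹ * fourierMat (m+2))
          * ((fourierMat (m+2))ᴴ * X * fourierMat (m+2))
          = (fourierMat (m+2))ᴴ * (permMat (m+2) σ⁻¹ *
            ((fourierMat (m+2) * (fourierMat (m+2))ᴴ) * (X * fourierMat (m+2)))) := by
            simp only [Matrix.mul_assoc]
        _ = (fourierMat (m+2))ᴴ * (permMat (m+2) σ⁻¹ * X) * fourierMat (m+2) := by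
            rw [h2, Matrix.one_mul]
            simp only [Matrix.mul_assoc]
    rw [h3, Matrix.trace_mul_cycle, ← Matrix.mul_assoc, h2, Matrix.one_mul, trace_PX]
  have hc' : ∀ σ : Equiv.Perm (Fin (m+2)),
      c σ = (if σ = τ then 1 else 0) + r * T σ := by
    intro σ
    rw [hc σ, hstd σ, trace_permMat σ τ]
    have hTs : T σ = (∑ j, X (σ j) j) - (∑ j, (if σ j = τ j then (1:ℂ) else 0)) := by
      rw [hT]
      simp only
      rw [← Finset.sum_sub_distrib]
      exact Finset.sum_congr rfl fun j _ => rfl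
    rw [hTs]
    ring
  have hfact : (((m+2).factorial : ℕ) : ℂ)
      = ((m+2:ℕ) : ℂ) * (((m+1:ℕ) : ℂ) * ((m.factorial : ℕ) : ℂ)) := by
    rw [Nat.factorial_succ, Nat.factorial_succ]
    push_cast
    ring
  have hr1 : r * (((m+2 : ℕ) : ℂ) * ((m.factorial : ℕ) : ℂ)) = 1 := by
    rw [hr, hfact]
    have h1 : ((m+2:ℕ) : ℂ) ≠ 0 := Nat.cast_ne_zero.mpr (by omega)
    have h2 : ((m+1:ℕ) : ℂ) ≠ 0 := Nat.cast_ne_zero.mpr (by omega)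
    have h3 : ((m.factorial : ℕ) : ℂ) ≠ 0 := Nat.cast_ne_zero.mpr (Nat.factorial_ne_zero _)
    have h4 : ((m+2:ℕ) : ℂ) - 1 = ((m+1:ℕ) : ℂ) := by push_cast; ring
    rw [h4, div_mul_eq_mul_div, div_eq_one_iff_eq (mul_ne_zero h1 (mul_ne_zero h2 h3))]
    ring
  refine ⟨?_, ?_, ?_⟩
  · ext a b
    rw [Matrix.sum_apply]
    have expand : ∀ σ : Equiv.Perm (Fin (m+2)),
        (c σ • permMat (m+2) σ) a b
          = (if σ = τ then (permMat (m+2) σ) a b else 0)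
            + r * ((if a = σ b then (1:ℂ) else 0) * T σ) := by
      intro σ
      rw [Matrix.smul_apply, smul_eq_mul, hc' σ]
      have hpm : permMat (m+2) σ a b = (if a = σ b then (1:ℂ) else 0) := rfl
      rw [hpm]
      split_ifs <;> ring
    rw [Finset.sum_congr rfl (fun σ _ => expand σ), Finset.sum_add_distrib]
    rw [Finset.sum_ite_eq' Finset.univ τ (fun σ => permMat (m+2) σ a b)]
    rw [← Finset.mul_sum, comb_I M hMrow hMcol a b]
    simp only [Finset.mem_univ, if_true]
    have hone : r * (((m+2:ℕ) : ℂ) * ((m.factorial : ℕ) : ℂ) * M a b) = M a b := by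
      rw [← mul_assoc]
      calc r * (((m+2:ℕ) : ℂ) * ((m.factorial : ℕ) : ℂ)) * M a b = 1 * M a b := by rw [hr1]
        _ = M a b := one_mul _
    rw [hone, hMapp a b, hP]
    ring
  · rw [Finset.sum_congr rfl (fun σ _ => hc' σ), Finset.sum_add_distrib, ← Finset.mul_sum]
    rw [comb_II M hMcol]
    simp [Finset.sum_ite_eq' Finset.univ τ]
  · set N : Matrix (Fin (m+2)) (Fin (m+2)) ℂ :=
      Matrix.of (fun i j => (starRingEnd ℂ) (M i j)) with hN
    have hNapp : ∀ i j, N i j = (starRingEnd ℂ) (M i j) := fun i j => rfl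
    have hNrow : ∀ i, ∑ j, N i j = 0 := by
      intro i
      simp only [hNapp]
      rw [← map_sum, hMrow, map_zero]
    have hNcol : ∀ j, ∑ i, N i j = 0 := by
      intro j
      simp only [hNapp]
      rw [← map_sum, hMcol, map_zero]
    have hrconj : (starRingEnd ℂ) r = r := by
      rw [hr, map_div₀, map_sub, map_one, map_natCast, map_natCast]
    have hconjc : ∀ σ : Equiv.Perm (Fin (m+2)),
        (starRingEnd ℂ) (c σ) = (if σ = τ then 1 else 0) + r * (∑ j, N (σ j) j) := by
      intro σ
      rw [hc' σ, map_add, map_mul, hrconj, map_sum]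
      have hci : (starRingEnd ℂ) (if σ = τ then (1:ℂ) else 0) = (if σ = τ then (1:ℂ) else 0) := by
        split_ifs <;> simp
      rw [hci]
      rfl
    have key : ∑ σ : Equiv.Perm (Fin (m+2)), c σ * (starRingEnd ℂ) (c σ) = 1 := by
      have expand : ∀ σ : Equiv.Perm (Fin (m+2)),
          c σ * (starRingEnd ℂ) (c σ)
            = (if σ = τ then 1 else 0)
              + ((if σ = τ then r * (∑ j, N (σ j) j) else 0)
              + ((if σ = τ then r * T σ else 0)
              + (r * r) * (T σ * (∑ j, N (σ j) j)))) := by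
        intro σ
        rw [hconjc σ, hc' σ]
        split_ifs <;> ring
      rw [Finset.sum_congr rfl (fun σ _ => expand σ)]
      rw [Finset.sum_add_distrib, Finset.sum_add_distrib, Finset.sum_add_distrib]
      rw [Finset.sum_ite_eq' Finset.univ τ (fun _ => (1:ℂ))]
      rw [Finset.sum_ite_eq' Finset.univ τ (fun σ => r * (∑ j, N (σ j) j))]
      rw [Finset.sum_ite_eq' Finset.univ τ (fun σ => r * T σ)]
      rw [← Finset.mul_sum, comb_III M N hMrow hMcol hNrow hNcol]
      have hs : ∀ j, P (τ j) j = 1 := by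
        intro j
        have h5 : P (τ j) j = (if τ j = τ j then (1:ℂ) else 0) := rfl
        rw [h5, if_pos rfl]
      set s : ℂ := ∑ j, X (τ j) j with hsdef
      have hTτ : T τ = s - ((m+2 : ℕ) : ℂ) := by
        rw [hT]
        simp only [hMapp, hs]
        rw [Finset.sum_sub_distrib]
        simp [hsdef, Finset.card_univ]
      have hNτ : (∑ j, N (τ j) j) = (starRingEnd ℂ) s - ((m+2 : ℕ) : ℂ) := by
        simp only [hNapp]
        rw [← map_sum]
        have h6 : (∑ j, M (τ j) j) = T τ := rfl
        rw [h6, hTτ, map_sub, map_natCast]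
      have hXsum : ∑ i, ∑ j, X i j * (starRingEnd ℂ) (X i j) = ((m+2 : ℕ) : ℂ) := by
        have hXU : X * Xᴴ = 1 := by
          have h7 := (Matrix.mem_unitaryGroup_iff).mp hX
          rwa [Matrix.star_eq_conjTranspose] at h7
        have htr := congrArg Matrix.trace hXU
        rw [Matrix.trace_one] at htr
        have hexp : (X * Xᴴ).trace = ∑ i, ∑ j, X i j * (starRingEnd ℂ) (X i j) := by
          rw [Matrix.trace]
          refine Finset.sum_congr rfl fun i _ => ?_
          rw [Matrix.diag, Matrix.mul_apply]
          exact Finset.sum_congr rfl fun j _ =>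
            by rw [Matrix.conjTranspose_apply, Complex.star_def]
        rw [hexp] at htr
        rw [htr]
        simp
      have hPapp : ∀ i j, P i j = (if i = τ j then (1:ℂ) else 0) := fun i j => rfl
      have hXP : ∑ i, ∑ j, X i j * (starRingEnd ℂ) (P i j) = s := by
        rw [Finset.sum_comm, hsdef]
        refine Finset.sum_congr rfl fun j _ => ?_
        have h8 : ∀ i, X i j * (starRingEnd ℂ) (P i j) = (if i = τ j then X i j else 0) := by
          intro i
          rw [hPapp]
          by_cases h : i = τ j <;> simp [h]
        rw [Finset.sum_congr rfl (fun i _ => h8 i)]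
        simp
      have hPX : ∑ i, ∑ j, P i j * (starRingEnd ℂ) (X i j) = (starRingEnd ℂ) s := by
        rw [Finset.sum_comm, hsdef, map_sum]
        refine Finset.sum_congr rfl fun j _ => ?_
        have h9 : ∀ i, P i j * (starRingEnd ℂ) (X i j)
            = (if i = τ j then (starRingEnd ℂ) (X i j) else 0) := by
          intro i
          rw [hPapp]
          by_cases h : i = τ j <;> simp [h]
        rw [Finset.sum_congr rfl (fun i _ => h9 i)]
        simp
      have hPP : ∑ i, ∑ j, P i j * (starRingEnd ℂ) (P i j) = ((m+2 : ℕ) : ℂ) := by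
        have h10 : ∀ i j, P i j * (starRingEnd ℂ) (P i j) = (if i = τ j then (1:ℂ) else 0) := by
          intro i j
          rw [hPapp]
          by_cases h : i = τ j <;> simp [h]
        rw [Finset.sum_congr rfl (fun i _ => Finset.sum_congr rfl (fun j _ => h10 i j))]
        rw [Finset.sum_comm]
        have h11 : ∀ j : Fin (m+2), ∑ i, (if i = τ j then (1:ℂ) else 0) = 1 := by
          intro j
          simp
        rw [Finset.sum_congr rfl (fun j _ => h11 j)]
        simp
      have hSsum : ∑ i, ∑ j, M i j * N i j
          = ((m+2 : ℕ) : ℂ) - s - (starRingEnd ℂ) s + ((m+2 : ℕ) : ℂ) := by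
        have expand2 : ∀ i j, M i j * N i j
            = X i j * (starRingEnd ℂ) (X i j) - X i j * (starRingEnd ℂ) (P i j)
              - P i j * (starRingEnd ℂ) (X i j) + P i j * (starRingEnd ℂ) (P i j) := by
          intro i j
          rw [hNapp, hMapp, map_sub]
          ring
        rw [Finset.sum_congr rfl
          (fun i _ => Finset.sum_congr rfl (fun j _ => expand2 i j))]
        simp only [Finset.sum_add_distrib, Finset.sum_sub_distrib]
        rw [hXsum, hXP, hPX, hPP]
      rw [hTτ, hNτ, hSsum]
      have hrr : r * r * (((m+2:ℕ) : ℂ) * ((m.factorial : ℕ) : ℂ)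
          * (((m+2 : ℕ) : ℂ) - s - (starRingEnd ℂ) s + ((m+2 : ℕ) : ℂ)))
          = r * (((m+2 : ℕ) : ℂ) - s - (starRingEnd ℂ) s + ((m+2 : ℕ) : ℂ)) := by
        calc r * r * (((m+2:ℕ) : ℂ) * ((m.factorial : ℕ) : ℂ)
            * (((m+2 : ℕ) : ℂ) - s - (starRingEnd ℂ) s + ((m+2 : ℕ) : ℂ)))
            = (r * (((m+2:ℕ) : ℂ) * ((m.factorial : ℕ) : ℂ))) * (r *
              (((m+2 : ℕ) : ℂ) - s - (starRingEnd ℂ) s + ((m+2 : ℕ) : ℂ))) := by ring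
          _ = r * (((m+2 : ℕ) : ℂ) - s - (starRingEnd ℂ) s + ((m+2 : ℕ) : ℂ)) := by
              rw [hr1, one_mul]
      simp only [Finset.mem_univ, if_true]
      calc (1:ℂ) + (r * ((starRingEnd ℂ) s - ((m+2 : ℕ) : ℂ))
            + (r * (s - ((m+2 : ℕ) : ℂ))
            + r * r * (((m+2:ℕ) : ℂ) * ((m.factorial : ℕ) : ℂ)
              * (((m+2 : ℕ) : ℂ) - s - (starRingEnd ℂ) s + ((m+2 : ℕ) : ℂ)))))
          = 1 + (r * ((starRingEnd ℂ) s - ((m+2 : ℕ) : ℂ))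
            + (r * (s - ((m+2 : ℕ) : ℂ))
            + r * (((m+2 : ℕ) : ℂ) - s - (starRingEnd ℂ) s + ((m+2 : ℕ) : ℂ)))) := by
            rw [hrr]
        _ = 1 := by ring
    have habs : ∀ σ : Equiv.Perm (Fin (m+2)),
        (‖c σ‖ ^ 2 : ℝ) = (c σ * (starRingEnd ℂ) (c σ)).re := by
      intro σ
      rw [Complex.sq_norm, Complex.mul_conj]
      simp
    rw [Finset.sum_congr rfl (fun σ _ => habs σ), ← Complex.re_sum, key]
    simp
end

section
/- Let n ≥ 4 and let X be an n×n unitary complex matrix all of whose row sums and column sums equal 1. Let U^(s) be the (n−1)×(n−1) lower-right block of F_n† X F_n. Define, for each permutation σ of {0,…,n−1}, the coefficient c_σ = δ_{σ,id} − 2((n−1)/n!)·(Tr(P_σ) − 1) + 2((n−1)/n!)·Tr(D^(s)(σ⁻¹) U^(s)) if σ is an even permutation, and c_σ = 0 if σ is an odd permutation. Then X = Σ_σ c_σ P_σ, Σ_σ c_σ = 1, and Σ_σ |c_σ|² = 1. -/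
open scoped Matrix

noncomputable def bkZeta (n : ℕ) : ℂ := Complex.exp (2 * Real.pi * Complex.I / n)

section BKAux
open Finset Complex Equiv

variable {n : ℕ}
lemma fmat_apply (hn : n ≠ 0) (j k : Fin n) :
    fourierMat n j k = bkZeta n ^ (j.val * k.val) / Real.sqrt n := by
  unfold fourierMat bkZeta
  rw [Matrix.of_apply, ← Complex.exp_nat_mul]
  congr 1
  have : (n:ℂ) ≠ 0 := Nat.cast_ne_zero.2 hn
  push_cast
  field_simp

lemma zeta_pow_n (hn : n ≠ 0) : bkZeta n ^ n = 1 := by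
  unfold bkZeta
  rw [← Complex.exp_nat_mul]
  have h : (n:ℂ) ≠ 0 := Nat.cast_ne_zero.2 hn
  rw [show (n:ℂ) * (2*Real.pi*Complex.I/n) = 2*Real.pi*Complex.I by field_simp]
  exact Complex.exp_two_pi_mul_I

lemma conj_zeta_pow (hn : n ≠ 0) (m : ℕ) :
    (starRingEnd ℂ) (bkZeta n ^ m) = (bkZeta n ^ m)⁻¹ := by
  rw [map_pow, ← inv_pow]
  congr 1
  unfold bkZeta
  rw [← Complex.exp_conj, ← Complex.exp_neg]
  congr 1
  simp [map_div₀, Complex.conj_I, map_ofNat]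
  ring

lemma geom_fin (hn : n ≠ 0) {x : ℂ} (hx1 : x ≠ 1) (hxn : x ^ n = 1) :
    ∑ l : Fin n, x ^ (l : ℕ) = 0 := by
  rw [Fin.sum_univ_eq_sum_range, geom_sum_eq hx1, hxn]
  simp

lemma sum_zeta_pow (hn : n ≠ 0) (k : Fin n) [NeZero n] :
    ∑ l : Fin n, bkZeta n ^ ((l : ℕ) * (k : ℕ)) = if k = 0 then (n : ℂ) else 0 := by
  by_cases hk : k = 0
  · subst hk; simp
  · rw [if_neg hk]
    have h1 : ∀ l : Fin n, bkZeta n ^ ((l : ℕ) * (k : ℕ)) = (bkZeta n ^ (k:ℕ)) ^ (l:ℕ) := by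
      intro l; rw [← pow_mul, mul_comm]
    rw [Finset.sum_congr rfl fun l _ => h1 l]
    apply geom_fin hn
    · exact (Complex.isPrimitiveRoot_exp n hn).pow_ne_one_of_pos_of_lt
        (fun h => hk (Fin.ext (by simp [h]))) k.isLt
    · rw [← pow_mul, mul_comm, pow_mul, zeta_pow_n hn, one_pow]

lemma sqrt_mul_sqrt (hn : n ≠ 0) : (Real.sqrt n : ℂ) * (Real.sqrt n : ℂ) = (n : ℂ) := by
  rw [← Complex.ofReal_mul, Real.mul_self_sqrt (Nat.cast_nonneg n)]
  simp

lemma sqrt_ne_zero' (hn : n ≠ 0) : (Real.sqrt n : ℂ) ≠ 0 := by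
  simp only [ne_eq, Complex.ofReal_eq_zero]
  positivity

-- FF† = 1
lemma fourier_mul_conjTranspose (hn : n ≠ 0) [NeZero n] :
    fourierMat n * (fourierMat n)ᴴ = 1 := by
  ext j k
  rw [Matrix.mul_apply, Matrix.one_apply]
  have key : ∀ l : Fin n, fourierMat n j l * (fourierMat n)ᴴ l k
      = (bkZeta n ^ (j:ℕ) * (bkZeta n ^ (k:ℕ))⁻¹) ^ (l:ℕ) / n := by
    intro l
    rw [Matrix.conjTranspose_apply, fmat_apply hn, fmat_apply hn]
    simp only [Complex.star_def, map_div₀, conj_zeta_pow hn, Complex.conj_ofReal]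
    rw [div_mul_div_comm, sqrt_mul_sqrt hn]
    congr 1
    simp [mul_pow, inv_pow, ← pow_mul]
  rw [Finset.sum_congr rfl fun l _ => key l]
  rw [← Finset.sum_div]
  by_cases hjk : j = k
  · subst hjk
    rw [if_pos rfl]
    have : ∀ l : Fin n, (bkZeta n ^ (j:ℕ) * (bkZeta n ^ (j:ℕ))⁻¹) ^ (l:ℕ) = 1 := by
      intro l
      rw [mul_inv_cancel₀ (pow_ne_zero _ (by unfold bkZeta; exact Complex.exp_ne_zero _)), one_pow]
    rw [Finset.sum_congr rfl fun l _ => this l]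
    simp
  · rw [if_neg hjk]
    have hne : bkZeta n ^ (j:ℕ) * (bkZeta n ^ (k:ℕ))⁻¹ ≠ 1 := by
      intro h
      apply hjk
      have hz : bkZeta n ^ (k:ℕ) ≠ 0 := pow_ne_zero _ (by unfold bkZeta; exact Complex.exp_ne_zero _)
      have : bkZeta n ^ (j:ℕ) = bkZeta n ^ (k:ℕ) := by
        field_simp at h
        exact h
      exact Fin.ext ((Complex.isPrimitiveRoot_exp n hn).pow_inj j.isLt k.isLt this)
    have hpow : (bkZeta n ^ (j:ℕ) * (bkZeta n ^ (k:ℕ))⁻¹) ^ n = 1 := by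
      rw [mul_pow, ← pow_mul, mul_comm (j:ℕ), pow_mul, zeta_pow_n hn, one_pow, inv_pow,
        ← pow_mul, mul_comm (k:ℕ), pow_mul, zeta_pow_n hn]
      simp
    rw [geom_fin hn hne hpow]
    simp
-- sums of columns of F
lemma sum_fourier_col (hn : n ≠ 0) [NeZero n] (j : Fin n) :
    ∑ l : Fin n, fourierMat n l j = if j = 0 then (Real.sqrt n : ℂ) else 0 := by
  rw [Finset.sum_congr rfl fun l _ => fmat_apply hn l j, ← Finset.sum_div, sum_zeta_pow hn j]
  by_cases h : j = 0
  · rw [if_pos h, if_pos h, ← sqrt_mul_sqrt hn, mul_div_assoc,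
      div_self (sqrt_ne_zero' hn), mul_one]
  · simp [h]

lemma fourier_col_zero (hn : n ≠ 0) [NeZero n] (m : Fin n) :
    fourierMat n m 0 = ((Real.sqrt n : ℝ) : ℂ)⁻¹ := by
  rw [fmat_apply hn]
  simp [one_div]

lemma conjF_col (hn : n ≠ 0) [NeZero n] (M : Matrix (Fin n) (Fin n) ℂ)
    (hrowM : ∀ l, ∑ m, M l m = 1) (j : Fin n) :
    ((fourierMat n)ᴴ * M * fourierMat n) j 0 = if j = 0 then 1 else 0 := by
  rw [Matrix.mul_apply]
  rw [Finset.sum_congr rfl fun m _ => by rw [fourier_col_zero hn m]]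
  rw [← Finset.sum_mul]
  have h1 : ∑ m : Fin n, ((fourierMat n)ᴴ * M) j m
      = ∑ l : Fin n, star (fourierMat n l j) := by
    simp only [Matrix.mul_apply, Matrix.conjTranspose_apply]
    rw [Finset.sum_comm]
    apply Finset.sum_congr rfl
    intro l _
    rw [← Finset.mul_sum, hrowM l, mul_one]
  rw [h1, ← star_sum, sum_fourier_col hn j]
  by_cases h : j = 0
  · rw [if_pos h, if_pos h, Complex.star_def, Complex.conj_ofReal,
      inv_eq_one_div, mul_one_div, div_self (sqrt_ne_zero' hn)]
  · simp [h]

lemma conjF_row (hn : n ≠ 0) [NeZero n] (M : Matrix (Fin n) (Fin n) ℂ)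
    (hcolM : ∀ m, ∑ l, M l m = 1) (k : Fin n) :
    ((fourierMat n)ᴴ * M * fourierMat n) 0 k = if k = 0 then 1 else 0 := by
  rw [Matrix.mul_apply]
  have h1 : ∀ m : Fin n, ((fourierMat n)ᴴ * M) 0 m = ((Real.sqrt n : ℝ) : ℂ)⁻¹ := by
    intro m
    rw [Matrix.mul_apply]
    have : ∀ l : Fin n, (fourierMat n)ᴴ 0 l * M l m
        = ((Real.sqrt n : ℝ) : ℂ)⁻¹ * M l m := by
      intro l
      rw [Matrix.conjTranspose_apply, fourier_col_zero hn l, Complex.star_def,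
        map_inv₀, Complex.conj_ofReal]
    rw [Finset.sum_congr rfl fun l _ => this l, ← Finset.mul_sum, hcolM m, mul_one]
  rw [Finset.sum_congr rfl fun m _ => by rw [h1 m], ← Finset.mul_sum, sum_fourier_col hn k]
  by_cases h : k = 0
  · rw [if_pos h, if_pos h, inv_mul_cancel₀ (sqrt_ne_zero' hn)]
  · simp [h]
lemma bk_lrb_apply {m : ℕ} (A : Matrix (Fin (m+1)) (Fin (m+1)) ℂ) (i j : Fin m) :
    lowerRightBlock A i j = A i.succ j.succ := rfl

lemma bk_trace_lrb_mul {m : ℕ} (A B : Matrix (Fin (m+1)) (Fin (m+1)) ℂ)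
    (hA1 : ∀ j, A j 0 = if j = 0 then 1 else 0) (hA2 : ∀ k, A 0 k = if k = 0 then 1 else 0)
    (hB1 : ∀ j, B j 0 = if j = 0 then 1 else 0) (hB2 : ∀ k, B 0 k = if k = 0 then 1 else 0) :
    (lowerRightBlock A * lowerRightBlock B).trace = (A * B).trace - 1 := by
  have hlhs : (lowerRightBlock A * lowerRightBlock B).trace
      = ∑ i : Fin m, ∑ j : Fin m, A i.succ j.succ * B j.succ i.succ := by
    rw [Matrix.trace]
    apply Finset.sum_congr rfl
    intro i _
    rw [Matrix.diag_apply, Matrix.mul_apply]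
    apply Finset.sum_congr rfl
    intro j _
    rw [bk_lrb_apply, bk_lrb_apply]
  have hrhs : (A * B).trace
      = ∑ i : Fin (m+1), ∑ j : Fin (m+1), A i j * B j i := by
    rw [Matrix.trace]
    apply Finset.sum_congr rfl
    intro i _
    rw [Matrix.diag_apply, Matrix.mul_apply]
  rw [hlhs, hrhs, Fin.sum_univ_succ]
  have h0 : ∑ j : Fin (m+1), A 0 j * B j 0 = 1 := by
    rw [Fin.sum_univ_succ]
    have : ∀ j : Fin m, A 0 j.succ * B j.succ 0 = 0 := by
      intro j
      rw [hA2, if_neg (Fin.succ_ne_zero j), zero_mul]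
    rw [Finset.sum_congr rfl fun j _ => this j]
    simp [hA2, hB1]
  rw [h0]
  have h1 : ∀ i : Fin m, ∑ j : Fin (m+1), A i.succ j * B j i.succ
      = ∑ j : Fin m, A i.succ j.succ * B j.succ i.succ := by
    intro i
    rw [Fin.sum_univ_succ, hA1, if_neg (Fin.succ_ne_zero i), zero_mul, zero_add]
  rw [Finset.sum_congr rfl fun i _ => h1 i]
  ring
lemma bk_card_fiber_one (hn : 1 ≤ n) (a b : Fin n) :
    (Finset.univ.filter fun σ : Equiv.Perm (Fin n) => σ a = b).card = (n-1).factorial := by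
  have key : ∀ b b' : Fin n,
      (Finset.univ.filter fun σ : Equiv.Perm (Fin n) => σ a = b).card =
      (Finset.univ.filter fun σ : Equiv.Perm (Fin n) => σ a = b').card := by
    intro b b'
    apply Finset.card_bij' (fun σ _ => Equiv.swap b b' * σ) (fun σ _ => Equiv.swap b b' * σ)
    · intro σ hσ
      simp only [mem_filter, mem_univ, true_and] at hσ ⊢
      simp [Equiv.Perm.mul_apply, hσ]
    · intro σ hσ
      simp only [mem_filter, mem_univ, true_and] at hσ ⊢
      simp [Equiv.Perm.mul_apply, hσ, Equiv.swap_apply_right]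
    · intro σ _; simp [← mul_assoc]
    · intro σ _; simp [← mul_assoc]
  have hsum : ∑ b : Fin n, (Finset.univ.filter fun σ : Equiv.Perm (Fin n) => σ a = b).card
      = n.factorial := by
    rw [← Finset.card_eq_sum_card_fiberwise (fun σ _ => Finset.mem_univ (σ a))]
    simp [Fintype.card_perm]
  have hconst : ∑ b' : Fin n, (Finset.univ.filter fun σ : Equiv.Perm (Fin n) => σ a = b').card
      = n * (Finset.univ.filter fun σ : Equiv.Perm (Fin n) => σ a = b).card := by
    rw [Finset.sum_congr rfl (fun b' _ => key b' b)]
    simp [mul_comm]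
  have hn' : n.factorial = n * (n-1).factorial := by
    obtain ⟨m, rfl⟩ : ∃ m, n = m + 1 := ⟨n - 1, by omega⟩
    simp [Nat.factorial_succ]
  apply Nat.eq_of_mul_eq_mul_left (show 0 < n by omega)
  rw [← hconst, hsum, hn']


lemma bk_card_fiber_two (hn : 2 ≤ n) {a d : Fin n} (had : a ≠ d) {b c : Fin n} (hbc : b ≠ c) :
    (Finset.univ.filter fun σ : Equiv.Perm (Fin n) => σ a = b ∧ σ d = c).card
      = (n-2).factorial := by
  classical
  set S : Fin n → Finset (Equiv.Perm (Fin n)) :=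
    fun c => Finset.univ.filter fun σ : Equiv.Perm (Fin n) => σ a = b ∧ σ d = c with hS
  have key : ∀ c c' : Fin n, c ≠ b → c' ≠ b → (S c).card = (S c').card := by
    intro c c' hc hc'
    apply Finset.card_bij' (fun σ _ => Equiv.swap c c' * σ) (fun σ _ => Equiv.swap c c' * σ)
    · intro σ hσ
      simp only [hS, mem_filter, mem_univ, true_and] at hσ ⊢
      refine ⟨?_, ?_⟩
      · simp [Equiv.Perm.mul_apply, hσ.1, Equiv.swap_apply_of_ne_of_ne hc.symm hc'.symm]
      · simp [Equiv.Perm.mul_apply, hσ.2]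
    · intro σ hσ
      simp only [hS, mem_filter, mem_univ, true_and] at hσ ⊢
      refine ⟨?_, ?_⟩
      · simp [Equiv.Perm.mul_apply, hσ.1, Equiv.swap_apply_of_ne_of_ne hc.symm hc'.symm]
      · simp [Equiv.Perm.mul_apply, hσ.2, Equiv.swap_apply_right]
    · intro σ _; simp [← mul_assoc]
    · intro σ _; simp [← mul_assoc]
  have hsum : ∑ c' : Fin n, (S c').card = (n-1).factorial := by
    have h1 : (Finset.univ.filter fun σ : Equiv.Perm (Fin n) => σ a = b).card
        = (n-1).factorial := bk_card_fiber_one (by omega) a b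
    rw [← h1, Finset.card_eq_sum_card_fiberwise
        (f := fun σ : Equiv.Perm (Fin n) => σ d) (t := Finset.univ) (fun σ _ => Finset.mem_univ _)]
    apply Finset.sum_congr rfl
    intro c' _
    congr 1
    ext σ
    simp [hS, and_comm]
  have hSb : (S b).card = 0 := by
    rw [Finset.card_eq_zero, hS]
    rw [Finset.filter_eq_empty_iff]
    rintro σ -
    rintro ⟨h1, h2⟩
    exact had (σ.injective (h1.trans h2.symm))
  have hsplit : ∑ c' : Fin n, (S c').card = ∑ c' ∈ Finset.univ.erase b, (S c').card := by
    rw [← Finset.add_sum_erase _ _ (Finset.mem_univ b), hSb, zero_add]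
  have hconst : ∑ c' ∈ Finset.univ.erase b, (S c').card = (n-1) * (S c).card := by
    rw [Finset.sum_congr rfl (fun c' hc' => key c' c (Finset.mem_erase.mp hc').1 hbc.symm)]
    simp [Finset.card_erase_of_mem, mul_comm]
  have hfac : (n-1).factorial = (n-1) * (n-2).factorial := by
    obtain ⟨m, rfl⟩ : ∃ m, n = m + 2 := ⟨n - 2, by omega⟩
    have : m + 2 - 1 = m + 1 := by omega
    rw [this, Nat.factorial_succ]
    congr 1
  apply Nat.eq_of_mul_eq_mul_left (show 0 < n - 1 by omega)
  rw [← hconst, hsplit.symm, hsum, hfac]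


lemma bk_signed_sum_zero {n : ℕ} (hn : 4 ≤ n) (a b d c : Fin n) :
    ∑ σ : Equiv.Perm (Fin n),
      (((Equiv.Perm.sign σ : ℤˣ) : ℤ) : ℂ) *
        ((if σ a = b then (1:ℂ) else 0) * (if σ d = c then (1:ℂ) else 0)) = 0 := by
  classical
  have hcard : 1 < ((Finset.univ.erase a).erase d).card := by
    have h1 : (Finset.univ.erase a).card = n - 1 := by
      rw [Finset.card_erase_of_mem (Finset.mem_univ a)]
      simp
    have h2 := Finset.pred_card_le_card_erase (s := Finset.univ.erase a) (a := d)
    omega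
  obtain ⟨x, hx, y, hy, hxy⟩ := Finset.one_lt_card.mp hcard
  have hxa : x ≠ a := (Finset.mem_erase.mp (Finset.mem_of_mem_erase hx)).1
  have hxd : x ≠ d := (Finset.mem_erase.mp hx).1
  have hya : y ≠ a := (Finset.mem_erase.mp (Finset.mem_of_mem_erase hy)).1
  have hyd : y ≠ d := (Finset.mem_erase.mp hy).1
  apply Finset.sum_ninvolution (g := fun σ => σ * Equiv.swap x y)
  · intro σ
    have ha' : (σ * Equiv.swap x y) a = σ a := by
      simp [Equiv.Perm.mul_apply, Equiv.swap_apply_of_ne_of_ne hxa.symm hya.symm]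
    have hd' : (σ * Equiv.swap x y) d = σ d := by
      simp [Equiv.Perm.mul_apply, Equiv.swap_apply_of_ne_of_ne hxd.symm hyd.symm]
    have hsign : Equiv.Perm.sign (σ * Equiv.swap x y) = - Equiv.Perm.sign σ := by
      rw [map_mul, Equiv.Perm.sign_swap hxy]
      simp
    rw [ha', hd', hsign]
    push_cast
    ring
  · intro σ _
    intro h
    have : Equiv.swap x y = 1 := by
      have := mul_eq_left.mp h
      exact this
    exact hxy (Equiv.swap_eq_one_iff.mp this)
  · intro σ; exact Finset.mem_univ _
  · intro σ
    rw [mul_assoc, Equiv.swap_mul_self, mul_one]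
lemma bk_S2_sum (hn : 2 ≤ n) (a b d c : Fin n) :
    ∑ σ : Equiv.Perm (Fin n), (if σ a = b then (1:ℂ) else 0) * (if σ d = c then 1 else 0)
    = if a = d then (if b = c then ((n-1).factorial : ℂ) else 0)
      else (if b = c then 0 else ((n-2).factorial : ℂ)) := by
  classical
  have hconv : ∀ σ : Equiv.Perm (Fin n),
      (if σ a = b then (1:ℂ) else 0) * (if σ d = c then 1 else 0)
      = if (σ a = b ∧ σ d = c) then 1 else 0 := by
    intro σ
    by_cases h1 : σ a = b <;> by_cases h2 : σ d = c <;> simp [h1, h2]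
  rw [Finset.sum_congr rfl fun σ _ => hconv σ, Finset.sum_boole]
  by_cases had : a = d
  · subst had
    by_cases hbc : b = c
    · subst hbc
      rw [if_pos rfl, if_pos rfl]
      have : ∀ σ : Equiv.Perm (Fin n), (σ a = b ∧ σ a = b) ↔ (σ a = b) := fun σ => and_self_iff
      rw [show (Finset.univ.filter fun σ : Equiv.Perm (Fin n) => σ a = b ∧ σ a = b)
          = Finset.univ.filter fun σ : Equiv.Perm (Fin n) => σ a = b from by
        apply Finset.filter_congr; intro σ _; simp]
      rw [bk_card_fiber_one (by omega) a b]
    · rw [if_pos rfl, if_neg hbc]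
      rw [show (Finset.univ.filter fun σ : Equiv.Perm (Fin n) => σ a = b ∧ σ a = c) = ∅ from by
        rw [Finset.filter_eq_empty_iff]; rintro σ - ⟨h1, h2⟩; exact hbc (h1.symm.trans h2)]
      simp
  · rw [if_neg had]
    by_cases hbc : b = c
    · subst hbc
      rw [if_pos rfl]
      rw [show (Finset.univ.filter fun σ : Equiv.Perm (Fin n) => σ a = b ∧ σ d = b) = ∅ from by
        rw [Finset.filter_eq_empty_iff]; rintro σ - ⟨h1, h2⟩
        exact had (σ.injective (h1.trans h2.symm))]
      simp
    · rw [if_neg hbc, bk_card_fiber_two hn had hbc]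

lemma bk_sum_Y_S2 (Y : Fin n → Fin n → ℂ) (hYrow : ∀ v, ∑ u, Y v u = 0)
    (hYcol : ∀ u, ∑ v, Y v u = 0) (j k : Fin n) (C D : ℂ) :
    ∑ u : Fin n, ∑ v : Fin n, Y v u *
      (if u = k then (if v = j then C else 0) else (if v = j then 0 else D))
    = (C + D) * Y j k := by
  classical
  rw [← Finset.add_sum_erase _ _ (Finset.mem_univ k)]
  have h1 : ∑ v : Fin n, Y v k * (if k = k then (if v = j then C else 0)
      else (if v = j then 0 else D)) = C * Y j k := by
    rw [Finset.sum_congr rfl fun v _ => by rw [if_pos rfl]]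
    rw [Finset.sum_eq_single j]
    · simp [mul_comm]
    · intro v _ hv; simp [hv]
    · intro h; exact absurd (Finset.mem_univ j) h
  have h2 : ∀ u ∈ Finset.univ.erase k, ∑ v : Fin n, Y v u *
      (if u = k then (if v = j then C else 0) else (if v = j then 0 else D))
      = - (D * Y j u) := by
    intro u hu
    have huk : u ≠ k := (Finset.mem_erase.mp hu).1
    rw [Finset.sum_congr rfl fun v _ => by rw [if_neg huk]]
    have : ∀ v : Fin n, Y v u * (if v = j then 0 else D)
        = Y v u * D - (if v = j then Y v u * D else 0) := by
      intro v; by_cases h : v = j <;> simp [h]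
    rw [Finset.sum_congr rfl fun v _ => this v, Finset.sum_sub_distrib,
      ← Finset.sum_mul, hYcol u, Finset.sum_ite_eq' Finset.univ j fun v => Y v u * D]
    simp [mul_comm]
  rw [h1, Finset.sum_congr rfl h2]
  have h3 : ∑ x ∈ Finset.univ.erase k, Y j x = - Y j k := by
    have h4 := Finset.add_sum_erase Finset.univ (fun x => Y j x) (Finset.mem_univ k)
    rw [hYrow j] at h4
    linear_combination h4
  rw [Finset.sum_neg_distrib, ← Finset.mul_sum, h3]
  ring


lemma bk_sum_gh_S2 (g h : Fin n → Fin n → ℂ)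
    (hhrow : ∀ v, ∑ d, h v d = 0) (hhcol : ∀ d, ∑ c, h c d = 0) (C D : ℂ) :
    ∑ u : Fin n, ∑ d : Fin n, ∑ v : Fin n, ∑ c : Fin n, g v u * h c d *
      (if u = d then (if v = c then C else 0) else (if v = c then 0 else D))
    = (C + D) * ∑ u : Fin n, ∑ v : Fin n, g v u * h v u := by
  classical
  have hmain : ∀ u : Fin n, ∑ d : Fin n, ∑ v : Fin n, ∑ c : Fin n, g v u * h c d *
      (if u = d then (if v = c then C else 0) else (if v = c then 0 else D))
      = (C + D) * ∑ v, g v u * h v u := by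
    intro u
    rw [← Finset.add_sum_erase _ _ (Finset.mem_univ u)]
    have hFu : ∑ v : Fin n, ∑ c : Fin n, g v u * h c u *
        (if u = u then (if v = c then C else 0) else (if v = c then 0 else D))
        = C * ∑ v, g v u * h v u := by
      rw [Finset.mul_sum]
      apply Finset.sum_congr rfl
      intro v _
      rw [Finset.sum_congr rfl fun c _ => by rw [if_pos rfl]]
      rw [Finset.sum_eq_single v]
      · rw [if_pos rfl]; ring
      · intro c _ hc; rw [if_neg (Ne.symm hc), mul_zero]
      · intro hv; exact absurd (Finset.mem_univ v) hv
    have hFd : ∀ d ∈ Finset.univ.erase u, ∑ v : Fin n, ∑ c : Fin n, g v u * h c d *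
        (if u = d then (if v = c then C else 0) else (if v = c then 0 else D))
        = - (D * ∑ v, g v u * h v d) := by
      intro d hd
      have hdu : u ≠ d := fun hh => (Finset.mem_erase.mp hd).1 hh.symm
      rw [Finset.sum_congr rfl fun v _ => Finset.sum_congr rfl fun c _ => by rw [if_neg hdu]]
      have hv : ∀ v : Fin n, ∑ c : Fin n, g v u * h c d * (if v = c then 0 else D)
          = - (g v u * h v d * D) := by
        intro v
        have : ∀ c : Fin n, g v u * h c d * (if v = c then 0 else D)
            = g v u * h c d * D - (if c = v then g v u * h c d * D else 0) := by
          intro c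
          by_cases hc : v = c
          · subst hc; simp
          · rw [if_neg hc, if_neg (Ne.symm hc)]; ring
        rw [Finset.sum_congr rfl fun c _ => this c, Finset.sum_sub_distrib,
          Finset.sum_ite_eq' Finset.univ v fun c => g v u * h c d * D]
        have : ∑ c : Fin n, g v u * h c d * D = g v u * D * ∑ c, h c d := by
          rw [Finset.mul_sum]
          apply Finset.sum_congr rfl; intro c _; ring
        rw [this, hhcol d]
        simp
      rw [Finset.sum_congr rfl fun v _ => hv v, Finset.sum_neg_distrib]
      congr 1
      rw [Finset.mul_sum]
      apply Finset.sum_congr rfl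
      intro v _
      ring
    rw [hFu, Finset.sum_congr rfl hFd, Finset.sum_neg_distrib]
    have h3 : ∑ d ∈ Finset.univ.erase u, (D * ∑ v, g v u * h v d)
        = D * ∑ v, g v u * (- h v u) := by
      rw [← Finset.mul_sum]
      congr 1
      rw [Finset.sum_comm]
      apply Finset.sum_congr rfl
      intro v _
      rw [← Finset.mul_sum]
      congr 1
      have h4 := Finset.add_sum_erase Finset.univ (fun d => h v d) (Finset.mem_univ u)
      rw [hhrow v] at h4
      linear_combination h4
    rw [h3]
    have : ∑ v, g v u * (- h v u) = - ∑ v, g v u * h v u := by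
      rw [← Finset.sum_neg_distrib]; apply Finset.sum_congr rfl; intro v _; ring
    rw [this]
    ring
  rw [Finset.sum_congr rfl fun u _ => hmain u, ← Finset.mul_sum]
lemma bk_permMat_row (σ : Equiv.Perm (Fin n)) (j : Fin n) :
    ∑ k, permMat n σ j k = 1 := by
  unfold permMat
  simp only [Matrix.of_apply]
  rw [Finset.sum_congr rfl fun k (_ : k ∈ Finset.univ) => by
    rw [show (if j = σ k then (1:ℂ) else 0) = (if k = σ⁻¹ j then (1:ℂ) else 0) from by
      by_cases h : j = σ k
      · rw [if_pos h, if_pos (by rw [h]; simp)]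
      · rw [if_neg h, if_neg (fun hc => h (by rw [hc]; simp))]]]
  simp

lemma bk_permMat_col (σ : Equiv.Perm (Fin n)) (k : Fin n) :
    ∑ j, permMat n σ j k = 1 := by
  unfold permMat
  simp only [Matrix.of_apply]
  simp

lemma bk_permMat_trace (σ : Equiv.Perm (Fin n)) :
    (permMat n σ).trace = ∑ u, (if σ u = u then (1:ℂ) else 0) := by
  rw [Matrix.trace]
  apply Finset.sum_congr rfl
  intro u _
  rw [Matrix.diag_apply]
  unfold permMat
  rw [Matrix.of_apply]
  by_cases h : σ u = u
  · rw [if_pos h.symm, if_pos h]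
  · rw [if_neg (fun hc => h hc.symm), if_neg h]

lemma bk_permMat_mul_trace (σ : Equiv.Perm (Fin n)) (X : Matrix (Fin n) (Fin n) ℂ) :
    (permMat n σ⁻¹ * X).trace = ∑ u, ∑ v, (if σ u = v then (1:ℂ) else 0) * X v u := by
  rw [Matrix.trace]
  apply Finset.sum_congr rfl
  intro u _
  rw [Matrix.diag_apply, Matrix.mul_apply]
  apply Finset.sum_congr rfl
  intro v _
  unfold permMat
  rw [Matrix.of_apply]
  by_cases h : σ u = v
  · rw [if_pos (by rw [← h]; simp), if_pos h]
  · rw [if_neg (fun hc => h (by rw [hc]; simp)), if_neg h]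

lemma bk_trace_conj (F M N : Matrix (Fin n) (Fin n) ℂ) (hFF : F * Fᴴ = 1) :
    ((Fᴴ * M * F) * (Fᴴ * N * F)).trace = (M * N).trace := by
  have h1 : (Fᴴ * M * F) * (Fᴴ * N * F) = Fᴴ * (M * N) * F := by
    calc (Fᴴ * M * F) * (Fᴴ * N * F) = Fᴴ * (M * ((F * Fᴴ) * (N * F))) := by
          simp only [Matrix.mul_assoc]
      _ = Fᴴ * (M * N) * F := by
          rw [hFF, Matrix.one_mul]
          simp only [Matrix.mul_assoc]
  rw [h1, Matrix.trace_mul_comm, ← Matrix.mul_assoc, hFF, Matrix.one_mul]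

end BKAux

section BKAux2
open Finset Equiv

lemma bk_sum_comm3 {γ β : Type*} [Fintype γ] [Fintype β] (F : γ → β → β → ℂ) :
    ∑ σ : γ, ∑ u : β, ∑ v : β, F σ u v = ∑ u, ∑ v, ∑ σ, F σ u v := by
  rw [Finset.sum_comm]
  exact Finset.sum_congr rfl fun u _ => Finset.sum_comm

lemma bk_sum_comm5 {γ β : Type*} [Fintype γ] [Fintype β] (F : γ → β → β → β → β → ℂ) :
    ∑ σ : γ, ∑ u : β, ∑ d : β, ∑ v : β, ∑ c : β, F σ u d v c
      = ∑ u, ∑ d, ∑ v, ∑ c, ∑ σ, F σ u d v c := by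
  rw [Finset.sum_comm]
  refine Finset.sum_congr rfl fun u _ => ?_
  rw [Finset.sum_comm]
  refine Finset.sum_congr rfl fun d _ => ?_
  rw [Finset.sum_comm]
  exact Finset.sum_congr rfl fun v _ => Finset.sum_comm

lemma bk_diag_sum {n : ℕ} (W : Fin n → Fin n → ℂ) :
    ∑ u : Fin n, ∑ v : Fin n,
      (if (1 : Equiv.Perm (Fin n)) u = v then (1:ℂ) else 0) * W v u = ∑ u, W u u := by
  apply Finset.sum_congr rfl
  intro u _
  have : ∀ v : Fin n, (if (1 : Equiv.Perm (Fin n)) u = v then (1:ℂ) else 0) * W v u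
      = (if u = v then W v u else 0) := by
    intro v
    by_cases h : u = v <;> simp [h, Equiv.Perm.one_apply]
  rw [Finset.sum_congr rfl fun v _ => this v, Finset.sum_ite_eq Finset.univ u fun v => W v u]
  simp

end BKAux2

open Finset Equiv in
/-- Explicit Birkhoff decomposition of `X ∈ XU(n)` (`n ≥ 4`) using only even
permutation matrices: the coefficients
`c_σ = δ_{σ,id} − 2((n−1)/n!)(Tr P_σ − 1) + 2((n−1)/n!) Tr(D⁽ˢ⁾(σ⁻¹) U⁽ˢ⁾)` for even `σ`
and `c_σ = 0` for odd `σ` satisfy `X = Σ_σ c_σ P_σ`, `Σ_σ c_σ = 1` and `Σ_σ |c_σ|² = 1`,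
where `U⁽ˢ⁾` is the lower-right block of `F_n† X F_n`. -/
theorem explicit_birkhoff_even (n : ℕ) (hn : 4 ≤ n) (X : Matrix (Fin n) (Fin n) ℂ)
    (hX : X ∈ Matrix.unitaryGroup (Fin n) ℂ)
    (hrow : ∀ j, ∑ k, X j k = 1) (hcol : ∀ k, ∑ j, X j k = 1)
    (Us : Matrix (Fin (n - 1)) (Fin (n - 1)) ℂ)
    (hUs : Us = lowerRightBlock ((fourierMat n)ᴴ * X * fourierMat n))
    (c : Equiv.Perm (Fin n) → ℂ)
    (hceven : ∀ σ : Equiv.Perm (Fin n), Equiv.Perm.sign σ = 1 →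
      c σ = (if σ = 1 then 1 else 0)
        - 2 * (((n : ℂ) - 1) / (n.factorial : ℂ)) * ((permMat n σ).trace - 1)
        + 2 * (((n : ℂ) - 1) / (n.factorial : ℂ)) * (stdRep n σ⁻¹ * Us).trace)
    (hcodd : ∀ σ : Equiv.Perm (Fin n), Equiv.Perm.sign σ = -1 → c σ = 0) :
    X = ∑ σ : Equiv.Perm (Fin n), c σ • permMat n σ ∧
    ∑ σ : Equiv.Perm (Fin n), c σ = 1 ∧
    ∑ σ : Equiv.Perm (Fin n), ‖c σ‖ ^ 2 = 1 := by
  classical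
  have hn0 : n ≠ 0 := by omega
  haveI : NeZero n := ⟨hn0⟩
  set A : ℂ := 2 * (((n : ℂ) - 1) / (n.factorial : ℂ)) with hAdef
  set E : Equiv.Perm (Fin n) → ℂ :=
    fun σ => (((Equiv.Perm.sign σ : ℤˣ) : ℤ) : ℂ) with hEdef
  set Y : Fin n → Fin n → ℂ := fun v u => X v u - (if v = u then 1 else 0) with hYdef
  set Z : Fin n → Fin n → ℂ := fun v u => (starRingEnd ℂ) (Y v u) with hZdef
  -- basic facts about Y and Z
  have hYrow : ∀ v, ∑ u, Y v u = 0 := by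
    intro v
    rw [hYdef]
    simp only
    rw [Finset.sum_sub_distrib, hrow v]
    simp
  have hYcol : ∀ u, ∑ v, Y v u = 0 := by
    intro u
    rw [hYdef]
    simp only
    rw [Finset.sum_sub_distrib, hcol u]
    simp
  have hZrow : ∀ v, ∑ u, Z v u = 0 := by
    intro v
    rw [hZdef]
    simp only
    rw [← map_sum, hYrow v, map_zero]
  have hZcol : ∀ u, ∑ v, Z v u = 0 := by
    intro u
    rw [hZdef]
    simp only
    rw [← map_sum, hYcol u, map_zero]
  -- the key trace identity
  have hkey : ∀ σ : Equiv.Perm (Fin n),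
      (stdRep n σ⁻¹ * Us).trace = (permMat n σ⁻¹ * X).trace - 1 := by
    intro σ
    obtain ⟨m, rfl⟩ : ∃ m, n = m + 1 := ⟨n - 1, by omega⟩
    unfold stdRep
    rw [hUs]
    rw [bk_trace_lrb_mul _ _
      (fun j => conjF_col hn0 _ (bk_permMat_row σ⁻¹) j)
      (fun k => conjF_row hn0 _ (bk_permMat_col σ⁻¹) k)
      (fun j => conjF_col hn0 _ hrow j)
      (fun k => conjF_row hn0 _ hcol k)]
    rw [bk_trace_conj _ _ _ (fourier_mul_conjTranspose hn0)]
  -- trace difference as a double sum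
  have hqp : ∀ σ : Equiv.Perm (Fin n),
      (permMat n σ⁻¹ * X).trace - (permMat n σ).trace
        = ∑ u, ∑ v, (if σ u = v then (1:ℂ) else 0) * Y v u := by
    intro σ
    rw [bk_permMat_mul_trace, bk_permMat_trace, ← Finset.sum_sub_distrib]
    apply Finset.sum_congr rfl
    intro u _
    have h1 : ∀ v : Fin n, (if σ u = v then (1:ℂ) else 0) * Y v u
        = (if σ u = v then (1:ℂ) else 0) * X v u
          - (if σ u = v then (if v = u then (1:ℂ) else 0) else 0) := by
      intro v
      rw [hYdef]
      by_cases h : σ u = v <;> simp [h]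
    rw [Finset.sum_congr rfl fun v _ => h1 v, Finset.sum_sub_distrib]
    congr 1
    rw [Finset.sum_ite_eq Finset.univ (σ u) fun v => if v = u then (1:ℂ) else 0]
    simp
  -- sign dichotomy for E
  have hE1 : ∀ σ : Equiv.Perm (Fin n), Equiv.Perm.sign σ = 1 → E σ = 1 := by
    intro σ h
    rw [hEdef]
    simp only [h]
    norm_num
  have hEm1 : ∀ σ : Equiv.Perm (Fin n), Equiv.Perm.sign σ = -1 → E σ = -1 := by
    intro σ h
    rw [hEdef]
    simp only [h]
    norm_num
  have hEone : E 1 = 1 := hE1 1 Equiv.Perm.sign_one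
  have hsq : ∀ σ : Equiv.Perm (Fin n), (1 + E σ)/2 * ((1 + E σ)/2) = (1 + E σ)/2 := by
    intro σ
    rcases Int.units_eq_one_or (Equiv.Perm.sign σ) with h | h
    · rw [hE1 σ h]; norm_num
    · rw [hEm1 σ h]; norm_num
  -- uniform formula for c
  have hc2 : ∀ σ : Equiv.Perm (Fin n), c σ = (if σ = 1 then (1:ℂ) else 0)
      + ((1 + E σ)/2 * A) * ∑ u, ∑ v, (if σ u = v then (1:ℂ) else 0) * Y v u := by
    intro σ
    rcases Int.units_eq_one_or (Equiv.Perm.sign σ) with h | h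
    · rw [hceven σ h, hkey σ, hE1 σ h, ← hqp σ]
      ring
    · have hσ1 : σ ≠ 1 := by
        rintro rfl
        rw [Equiv.Perm.sign_one] at h
        exact absurd h (by decide)
      rw [hcodd σ h, hEm1 σ h, if_neg hσ1]
      ring
  -- conjugate formula for c
  have hc3 : ∀ σ : Equiv.Perm (Fin n), (starRingEnd ℂ) (c σ) = (if σ = 1 then (1:ℂ) else 0)
      + ((1 + E σ)/2 * A) * ∑ u, ∑ v, (if σ u = v then (1:ℂ) else 0) * Z v u := by
    intro σ
    have hconjE : (starRingEnd ℂ) (E σ) = E σ := by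
      rw [hEdef]
      simp only
      exact map_intCast _ _
    have hconjA : (starRingEnd ℂ) A = A := by
      rw [hAdef]
      simp [map_div₀, map_ofNat]
    rw [hc2 σ, map_add, map_mul, map_mul, map_div₀, map_add, map_one, hconjE, hconjA,
      map_ofNat, map_sum]
    congr 1
    · by_cases h : σ = 1 <;> simp [h]
    · congr 1
      apply Finset.sum_congr rfl
      intro u _
      rw [map_sum]
      apply Finset.sum_congr rfl
      intro v _
      rw [map_mul, hZdef]
      simp only
      congr 1
      by_cases h : σ u = v <;> simp [h]
  -- combined even-sum evaluation
  have hS2E : ∀ a b d c' : Fin n, ∑ σ : Equiv.Perm (Fin n),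
      (1 + E σ)/2 * ((if σ a = b then (1:ℂ) else 0) * (if σ d = c' then 1 else 0))
      = (1/2) * (if a = d then (if b = c' then (((n-1).factorial : ℕ) : ℂ) else 0)
          else (if b = c' then 0 else (((n-2).factorial : ℕ) : ℂ))) := by
    intro a b d c'
    have expand : ∀ σ : Equiv.Perm (Fin n),
        (1 + E σ)/2 * ((if σ a = b then (1:ℂ) else 0) * (if σ d = c' then 1 else 0))
        = (1/2) * ((if σ a = b then (1:ℂ) else 0) * (if σ d = c' then 1 else 0))
          + (1/2) * (E σ * ((if σ a = b then (1:ℂ) else 0) * (if σ d = c' then 1 else 0))) := by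
      intro σ
      ring
    rw [Finset.sum_congr rfl fun σ _ => expand σ, Finset.sum_add_distrib,
      ← Finset.mul_sum, ← Finset.mul_sum, bk_S2_sum (by omega) a b d c']
    have hsgn : ∑ σ : Equiv.Perm (Fin n),
        E σ * ((if σ a = b then (1:ℂ) else 0) * (if σ d = c' then 1 else 0)) = 0 := by
      rw [hEdef]
      simp only
      exact bk_signed_sum_zero hn a b d c'
    rw [hsgn]
    ring
  -- the numeric identity
  have hNum : A / 2 * ((((n-1).factorial : ℕ) : ℂ) + (((n-2).factorial : ℕ) : ℂ)) = 1 := by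
    rw [hAdef]
    obtain ⟨l, rfl⟩ : ∃ l, n = l + 4 := ⟨n - 4, by omega⟩
    have e1 : l + 4 - 1 = l + 3 := by omega
    have e2 : l + 4 - 2 = l + 2 := by omega
    rw [e1, e2]
    have hf1 : (l+4).factorial = (l+4) * ((l+3) * (l+2).factorial) := by
      rw [show l+4 = (l+3)+1 from rfl, Nat.factorial_succ, show l+3 = (l+2)+1 from rfl,
        Nat.factorial_succ]
    have hf3 : (l+3).factorial = (l+3) * (l+2).factorial := by
      rw [show l+3 = (l+2)+1 from rfl, Nat.factorial_succ]
    rw [hf1, hf3]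
    have hfz : ((l+2).factorial : ℂ) ≠ 0 := Nat.cast_ne_zero.mpr (Nat.factorial_ne_zero _)
    have h4 : ((l:ℂ) + 4) ≠ 0 := by
      have h := Nat.cast_ne_zero (R := ℂ).mpr (show l + 4 ≠ 0 by omega)
      push_cast at h
      exact h
    have h3 : ((l:ℂ) + 3) ≠ 0 := by
      have h := Nat.cast_ne_zero (R := ℂ).mpr (show l + 3 ≠ 0 by omega)
      push_cast at h
      exact h
    push_cast
    field_simp
    ring
  -- GOAL 2
  have goal2 : ∑ σ : Equiv.Perm (Fin n), c σ = 1 := by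
    rw [Finset.sum_congr rfl fun σ _ => hc2 σ, Finset.sum_add_distrib]
    have t1 : ∑ σ : Equiv.Perm (Fin n), (if σ = 1 then (1:ℂ) else 0) = 1 := by simp
    have t2 : ∀ σ : Equiv.Perm (Fin n),
        ((1 + E σ)/2 * A) * ∑ u, ∑ v, (if σ u = v then (1:ℂ) else 0) * Y v u
        = ∑ u, ∑ v, (A * Y v u) *
            ((1 + E σ)/2 * ((if σ u = v then (1:ℂ) else 0) * (if σ u = v then 1 else 0))) := by
      intro σ
      rw [Finset.mul_sum]
      apply Finset.sum_congr rfl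
      intro u _
      rw [Finset.mul_sum]
      apply Finset.sum_congr rfl
      intro v _
      by_cases h : σ u = v
      · rw [if_pos h]; ring
      · rw [if_neg h]; ring
    rw [Finset.sum_congr rfl fun σ _ => t2 σ, bk_sum_comm3, t1]
    have t3 : ∀ u v : Fin n, ∑ σ : Equiv.Perm (Fin n), (A * Y v u) *
        ((1 + E σ)/2 * ((if σ u = v then (1:ℂ) else 0) * (if σ u = v then 1 else 0)))
        = (A * ((1/2) * (((n-1).factorial : ℕ) : ℂ))) * Y v u := by
      intro u v
      rw [← Finset.mul_sum, hS2E u v u v]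
      simp only [eq_self_iff_true, if_true]
      ring
    have t4 : ∀ u : Fin n, ∑ v : Fin n,
        (A * ((1/2) * (((n-1).factorial : ℕ) : ℂ))) * Y v u = 0 := by
      intro u
      rw [← Finset.mul_sum, hYcol u, mul_zero]
    rw [Finset.sum_congr rfl fun u _ =>
      (Finset.sum_congr rfl fun v _ => t3 u v).trans (t4 u)]
    simp
  -- GOAL 1
  have goal1 : X = ∑ σ : Equiv.Perm (Fin n), c σ • permMat n σ := by
    ext j k
    rw [Matrix.sum_apply]
    have hterm : ∀ σ : Equiv.Perm (Fin n), (c σ • permMat n σ) j k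
        = (if σ = 1 then (1:ℂ) else 0) * (if σ k = j then 1 else 0)
          + ∑ u, ∑ v, (A * Y v u) *
              ((1 + E σ)/2 * ((if σ u = v then (1:ℂ) else 0) * (if σ k = j then 1 else 0))) := by
      intro σ
      rw [Matrix.smul_apply, smul_eq_mul, hc2 σ]
      have hpm : permMat n σ j k = (if σ k = j then (1:ℂ) else 0) := by
        unfold permMat
        rw [Matrix.of_apply]
        by_cases h : j = σ k
        · rw [if_pos h, if_pos h.symm]
        · rw [if_neg h, if_neg fun hc => h hc.symm]
      rw [hpm, add_mul]
      congr 1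
      calc (((1 + E σ)/2 * A) * ∑ u, ∑ v, (if σ u = v then (1:ℂ) else 0) * Y v u)
            * (if σ k = j then (1:ℂ) else 0)
          = ∑ u, ∑ v, ((((1 + E σ)/2 * A) * ((if σ u = v then (1:ℂ) else 0) * Y v u))
              * (if σ k = j then (1:ℂ) else 0)) := by
            rw [Finset.mul_sum, Finset.sum_mul]
            apply Finset.sum_congr rfl
            intro u _
            rw [Finset.mul_sum, Finset.sum_mul]
        _ = ∑ u, ∑ v, (A * Y v u) *
              ((1 + E σ)/2 * ((if σ u = v then (1:ℂ) else 0) * (if σ k = j then 1 else 0))) := by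
            apply Finset.sum_congr rfl
            intro u _
            apply Finset.sum_congr rfl
            intro v _
            ring
    rw [Finset.sum_congr rfl fun σ _ => hterm σ, Finset.sum_add_distrib]
    have p1 : ∑ σ : Equiv.Perm (Fin n), (if σ = 1 then (1:ℂ) else 0) * (if σ k = j then 1 else 0)
        = (if k = j then (1:ℂ) else 0) := by
      rw [Finset.sum_eq_single 1]
      · rw [if_pos rfl, one_mul, Equiv.Perm.one_apply]
      · intro σ _ hσ
        rw [if_neg hσ, zero_mul]
      · intro h
        exact absurd (Finset.mem_univ _) h
    have p2 : ∑ σ : Equiv.Perm (Fin n), ∑ u, ∑ v, (A * Y v u) *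
        ((1 + E σ)/2 * ((if σ u = v then (1:ℂ) else 0) * (if σ k = j then 1 else 0)))
        = Y j k := by
      rw [bk_sum_comm3]
      have inner : ∀ u v : Fin n, ∑ σ : Equiv.Perm (Fin n), (A * Y v u) *
          ((1 + E σ)/2 * ((if σ u = v then (1:ℂ) else 0) * (if σ k = j then 1 else 0)))
          = (A/2) * (Y v u * (if u = k then (if v = j then (((n-1).factorial:ℕ):ℂ) else 0)
              else (if v = j then 0 else (((n-2).factorial:ℕ):ℂ)))) := by
        intro u v
        rw [← Finset.mul_sum, hS2E u v k j]
        ring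
      rw [Finset.sum_congr rfl fun u _ => Finset.sum_congr rfl fun v _ => inner u v]
      have pull : ∑ u : Fin n, ∑ v : Fin n,
          (A/2) * (Y v u * (if u = k then (if v = j then (((n-1).factorial:ℕ):ℂ) else 0)
              else (if v = j then 0 else (((n-2).factorial:ℕ):ℂ))))
          = (A/2) * ∑ u : Fin n, ∑ v : Fin n,
              Y v u * (if u = k then (if v = j then (((n-1).factorial:ℕ):ℂ) else 0)
              else (if v = j then 0 else (((n-2).factorial:ℕ):ℂ))) := by
        rw [Finset.mul_sum]
        apply Finset.sum_congr rfl
        intro u _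
        rw [Finset.mul_sum]
      rw [pull, bk_sum_Y_S2 Y hYrow hYcol j k _ _]
      calc A/2 * (((((n-1).factorial:ℕ):ℂ) + (((n-2).factorial:ℕ):ℂ)) * Y j k)
          = (A/2 * ((((n-1).factorial:ℕ):ℂ) + (((n-2).factorial:ℕ):ℂ))) * Y j k := by ring
        _ = Y j k := by rw [hNum, one_mul]
    rw [p1, p2, hYdef]
    simp only
    have hflip : (if k = j then (1:ℂ) else 0) = (if j = k then (1:ℂ) else 0) := by
      by_cases h : k = j
      · simp [h]
      · rw [if_neg h, if_neg (fun hc : j = k => h hc.symm)]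
    rw [hflip]
    ring
  -- unitarity trace fact
  have hXX : ∑ u : Fin n, ∑ v : Fin n, X v u * (starRingEnd ℂ) (X v u) = (n : ℂ) := by
    have h1 : star X * X = 1 := hX.1
    have h2 := congrArg Matrix.trace h1
    rw [Matrix.trace_one] at h2
    rw [Matrix.star_eq_conjTranspose] at h2
    have h3 : (Xᴴ * X).trace = ∑ u : Fin n, ∑ v : Fin n, X v u * (starRingEnd ℂ) (X v u) := by
      rw [Matrix.trace]
      apply Finset.sum_congr rfl
      intro u _
      rw [Matrix.diag_apply, Matrix.mul_apply]
      apply Finset.sum_congr rfl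
      intro v _
      rw [Matrix.conjTranspose_apply]
      rw [Complex.star_def]
      ring
    rw [h3] at h2
    rw [h2]
    simp
  -- the zero-sum identity
  have hzero : (∑ u, Y u u) + (∑ u, Z u u) + (∑ u, ∑ v, Y v u * Z v u) = 0 := by
    have hTY : ∑ u : Fin n, Y u u = X.trace - n := by
      rw [hYdef]
      simp only
      rw [Finset.sum_sub_distrib]
      rw [Matrix.trace]
      simp [Matrix.diag_apply]
    have hTZ : ∑ u : Fin n, Z u u = (starRingEnd ℂ) X.trace - n := by
      rw [hZdef]
      simp only
      rw [← map_sum, hTY, map_sub, map_natCast]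
    have hYZ : ∑ u : Fin n, ∑ v : Fin n, Y v u * Z v u
        = 2*(n:ℂ) - X.trace - (starRingEnd ℂ) X.trace := by
      have hpt : ∀ u v : Fin n, Y v u * Z v u
          = X v u * (starRingEnd ℂ) (X v u) - (if v = u then X v u else 0)
            - (if v = u then (starRingEnd ℂ) (X v u) else 0) + (if v = u then 1 else 0) := by
        intro u v
        rw [hZdef, hYdef]
        simp only
        by_cases h : v = u
        · simp only [if_pos h, map_sub, map_one]
          ring
        · simp only [if_neg h, map_sub, map_zero]
          ring
      rw [Finset.sum_congr rfl fun u _ => Finset.sum_congr rfl fun v _ => hpt u v]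
      simp only [Finset.sum_add_distrib, Finset.sum_sub_distrib]
      rw [hXX]
      have e1 : ∑ u : Fin n, ∑ v : Fin n, (if v = u then X v u else 0) = X.trace := by
        rw [Matrix.trace]
        apply Finset.sum_congr rfl
        intro u _
        rw [Finset.sum_ite_eq' Finset.univ u fun v => X v u]
        simp
      have e2 : ∑ u : Fin n, ∑ v : Fin n, (if v = u then (starRingEnd ℂ) (X v u) else 0)
          = (starRingEnd ℂ) X.trace := by
        rw [Matrix.trace, map_sum]
        apply Finset.sum_congr rfl
        intro u _
        rw [Finset.sum_ite_eq' Finset.univ u fun v => (starRingEnd ℂ) (X v u)]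
        simp
      have e3 : ∑ u : Fin n, ∑ v : Fin n, (if v = u then (1:ℂ) else 0) = (n : ℂ) := by
        have : ∀ u : Fin n, ∑ v : Fin n, (if v = u then (1:ℂ) else 0) = 1 := by
          intro u
          rw [Finset.sum_ite_eq' Finset.univ u fun _ => (1:ℂ)]
          simp
        rw [Finset.sum_congr rfl fun u _ => this u]
        simp
      rw [e1, e2, e3]
      ring
    rw [hTY, hTZ, hYZ]
    ring
  -- GOAL 3 (complex form)
  have goal3C : ∑ σ : Equiv.Perm (Fin n), c σ * (starRingEnd ℂ) (c σ) = 1 := by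
    have hterm : ∀ σ : Equiv.Perm (Fin n), c σ * (starRingEnd ℂ) (c σ)
        = (if σ = 1 then (1:ℂ) else 0)
          + (if σ = 1 then (1:ℂ) else 0) * (((1 + E σ)/2 * A)
              * ∑ u, ∑ v, (if σ u = v then (1:ℂ) else 0) * Z v u)
          + (if σ = 1 then (1:ℂ) else 0) * (((1 + E σ)/2 * A)
              * ∑ u, ∑ v, (if σ u = v then (1:ℂ) else 0) * Y v u)
          + (A * A) * ∑ u, ∑ d, ∑ v, ∑ c', (Y v u * Z c' d) *
              ((1 + E σ)/2 * ((if σ u = v then (1:ℂ) else 0) * (if σ d = c' then 1 else 0))) := by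
      intro σ
      rw [hc3 σ, hc2 σ]
      have hδ : (if σ = 1 then (1:ℂ) else 0) * (if σ = 1 then (1:ℂ) else 0)
          = (if σ = 1 then (1:ℂ) else 0) := by
        by_cases h : σ = 1 <;> simp [h]
      have hprod : (∑ u, ∑ v, (if σ u = v then (1:ℂ) else 0) * Y v u)
          * (∑ d, ∑ c', (if σ d = c' then (1:ℂ) else 0) * Z c' d)
          = ∑ u, ∑ d, ∑ v, ∑ c', ((if σ u = v then (1:ℂ) else 0) * Y v u)
              * ((if σ d = c' then (1:ℂ) else 0) * Z c' d) := by
        rw [Finset.sum_mul_sum]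
        apply Finset.sum_congr rfl
        intro u _
        apply Finset.sum_congr rfl
        intro d _
        rw [Finset.sum_mul_sum]
      have hbig : (((1 + E σ)/2 * A) * ∑ u, ∑ v, (if σ u = v then (1:ℂ) else 0) * Y v u)
          * (((1 + E σ)/2 * A) * ∑ u, ∑ v, (if σ u = v then (1:ℂ) else 0) * Z v u)
          = (A * A) * ∑ u, ∑ d, ∑ v, ∑ c', (Y v u * Z c' d) *
              ((1 + E σ)/2 * ((if σ u = v then (1:ℂ) else 0) * (if σ d = c' then 1 else 0))) := by
        calc (((1 + E σ)/2 * A) * ∑ u, ∑ v, (if σ u = v then (1:ℂ) else 0) * Y v u)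
            * (((1 + E σ)/2 * A) * ∑ u, ∑ v, (if σ u = v then (1:ℂ) else 0) * Z v u)
            = ((1 + E σ)/2 * ((1 + E σ)/2)) * ((A * A)
                * ((∑ u, ∑ v, (if σ u = v then (1:ℂ) else 0) * Y v u)
                  * (∑ d, ∑ c', (if σ d = c' then (1:ℂ) else 0) * Z c' d))) := by ring
          _ = ((1 + E σ)/2) * ((A * A) * ∑ u, ∑ d, ∑ v, ∑ c',
                ((if σ u = v then (1:ℂ) else 0) * Y v u)
                  * ((if σ d = c' then (1:ℂ) else 0) * Z c' d)) := by rw [hsq σ, hprod]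
          _ = (A * A) * ∑ u, ∑ d, ∑ v, ∑ c', (Y v u * Z c' d) *
                ((1 + E σ)/2 * ((if σ u = v then (1:ℂ) else 0) * (if σ d = c' then 1 else 0))) := by
              simp only [Finset.mul_sum]
              apply Finset.sum_congr rfl
              intro u _
              apply Finset.sum_congr rfl
              intro d _
              apply Finset.sum_congr rfl
              intro v _
              apply Finset.sum_congr rfl
              intro c'' _
              ring
      calc ((if σ = 1 then (1:ℂ) else 0) + ((1 + E σ)/2 * A)
              * ∑ u, ∑ v, (if σ u = v then (1:ℂ) else 0) * Y v u)
          * ((if σ = 1 then (1:ℂ) else 0) + ((1 + E σ)/2 * A)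
              * ∑ u, ∑ v, (if σ u = v then (1:ℂ) else 0) * Z v u)
          = (if σ = 1 then (1:ℂ) else 0) * (if σ = 1 then (1:ℂ) else 0)
            + (if σ = 1 then (1:ℂ) else 0) * (((1 + E σ)/2 * A)
                * ∑ u, ∑ v, (if σ u = v then (1:ℂ) else 0) * Z v u)
            + (if σ = 1 then (1:ℂ) else 0) * (((1 + E σ)/2 * A)
                * ∑ u, ∑ v, (if σ u = v then (1:ℂ) else 0) * Y v u)
            + (((1 + E σ)/2 * A) * ∑ u, ∑ v, (if σ u = v then (1:ℂ) else 0) * Y v u)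
              * (((1 + E σ)/2 * A) * ∑ u, ∑ v, (if σ u = v then (1:ℂ) else 0) * Z v u) := by
            ring
        _ = _ := by rw [hδ, hbig]
    rw [Finset.sum_congr rfl fun σ _ => hterm σ, Finset.sum_add_distrib,
      Finset.sum_add_distrib, Finset.sum_add_distrib]
    have q1 : ∑ σ : Equiv.Perm (Fin n), (if σ = 1 then (1:ℂ) else 0) = 1 := by simp
    have q2 : ∀ (W : Fin n → Fin n → ℂ), ∑ σ : Equiv.Perm (Fin n),
        (if σ = 1 then (1:ℂ) else 0) * (((1 + E σ)/2 * A)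
            * ∑ u, ∑ v, (if σ u = v then (1:ℂ) else 0) * W v u)
        = A * ∑ u, W u u := by
      intro W
      rw [Finset.sum_eq_single 1]
      · rw [if_pos rfl, one_mul, hEone, bk_diag_sum W]
        norm_num
      · intro σ _ hσ
        rw [if_neg hσ, zero_mul]
      · intro h
        exact absurd (Finset.mem_univ _) h
    have q4 : ∑ σ : Equiv.Perm (Fin n), (A * A) * (∑ u, ∑ d, ∑ v, ∑ c', (Y v u * Z c' d) *
        ((1 + E σ)/2 * ((if σ u = v then (1:ℂ) else 0) * (if σ d = c' then 1 else 0))))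
        = A * ∑ u, ∑ v, Y v u * Z v u := by
      rw [← Finset.mul_sum, bk_sum_comm5]
      have inner : ∀ u d v c' : Fin n, ∑ σ : Equiv.Perm (Fin n), (Y v u * Z c' d) *
          ((1 + E σ)/2 * ((if σ u = v then (1:ℂ) else 0) * (if σ d = c' then 1 else 0)))
          = Y v u * Z c' d * ((1/2) * (if u = d then (if v = c' then (((n-1).factorial:ℕ):ℂ) else 0)
              else (if v = c' then 0 else (((n-2).factorial:ℕ):ℂ)))) := by
        intro u d v c'
        rw [← Finset.mul_sum, hS2E u v d c']
      rw [Finset.sum_congr rfl fun u _ => Finset.sum_congr rfl fun d _ =>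
        Finset.sum_congr rfl fun v _ => Finset.sum_congr rfl fun c' _ => inner u d v c']
      have reshape : ∑ u : Fin n, ∑ d : Fin n, ∑ v : Fin n, ∑ c' : Fin n,
          Y v u * Z c' d * ((1/2) * (if u = d then (if v = c' then (((n-1).factorial:ℕ):ℂ) else 0)
              else (if v = c' then 0 else (((n-2).factorial:ℕ):ℂ))))
          = (1/2) * ∑ u : Fin n, ∑ d : Fin n, ∑ v : Fin n, ∑ c' : Fin n,
              Y v u * Z c' d * (if u = d then (if v = c' then (((n-1).factorial:ℕ):ℂ) else 0)
              else (if v = c' then 0 else (((n-2).factorial:ℕ):ℂ))) := by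
        simp only [Finset.mul_sum]
        apply Finset.sum_congr rfl
        intro u _
        apply Finset.sum_congr rfl
        intro d _
        apply Finset.sum_congr rfl
        intro v _
        apply Finset.sum_congr rfl
        intro c'' _
        ring
      rw [reshape, bk_sum_gh_S2 Y Z hZrow hZcol _ _]
      calc (A * A) * ((1/2) * (((((n-1).factorial:ℕ):ℂ) + (((n-2).factorial:ℕ):ℂ))
              * ∑ u : Fin n, ∑ v : Fin n, Y v u * Z v u))
          = (A/2 * ((((n-1).factorial:ℕ):ℂ) + (((n-2).factorial:ℕ):ℂ)))
              * (A * ∑ u : Fin n, ∑ v : Fin n, Y v u * Z v u) := by ring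
        _ = A * ∑ u : Fin n, ∑ v : Fin n, Y v u * Z v u := by rw [hNum, one_mul]
    rw [q1, q2 Z, q2 Y, q4]
    linear_combination A * hzero
  refine ⟨goal1, goal2, ?_⟩
  have h5 : ∀ σ : Equiv.Perm (Fin n), c σ * (starRingEnd ℂ) (c σ)
      = ((‖c σ‖ ^ 2 : ℝ) : ℂ) := by
    intro σ
    rw [Complex.mul_conj, ← Complex.sq_norm]
  rw [Finset.sum_congr rfl fun σ _ => h5 σ, ← Complex.ofReal_sum] at goal3C
  exact_mod_cast goal3C
end
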